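/- arXiv:1407.5745 — 8 statements merged into one kernel-verified Lean document; each statement's English description precedes it below -/
import Mathlib

section
/- Let X be a topological space, (Z,λ) a metric equiconnected space, (G_n)_{n≥0} a sequence of open subsets of X² and (F_n)_{n≥0} a sequence of closed subsets of X², (φ_n : X² → [0,1])_{n≥1} a sequence of separately continuous functions, (g_n : X → Z)_{n≥1} a sequence of continuous mappings converging pointwise to a mapping g : X → Z, and (δ_n : X → (0,+∞))_{n≥1} a sequence of positive functions converging pointwise to zero, such that: (1) G_0 = F_0 = X² and the diagonal Δ = {(x,x) : x ∈ X} ⊆ G_{n+1} ⊆ F_n ⊆ G_n for every n ≥ 1; (2) X² \ G_n ⊆ φ_n^{-1}(0) and F_n ⊆ φ_n^{-1}(1) for every n ≥ 1; (3) d_Z(g_n(x), g_n(y)) ≤ δ_n(y) and d_Z(g_{n+1}(x), g_{n+1}(y)) ≤ δ_n(y) for every n ≥ 1 and every (x,y) ∈ G_n. Then the mapping f : X² → Z defined by f(x,y) = λ(g_n(x), g_{n+1}(x), φ_n(x,y)) for (x,y) ∈ F_{n-1} \ F_n (n ≥ 1) and f(x,y) = g(x) for (x,y) ∈ E = ⋂_{n≥1}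 G_n is well defined and separately continuous. -/
open Set Filter Topology

/-- Theorem 3.1: construction of separately continuous mappings with values in a
metric equiconnected space `(Z, e)`.  The sequences `G`, `F`, `φ`, `g'`, `δ` are
indexed so that `G n`, `F n`, `φ n`, `g' n`, `δ n` correspond to the objects with
index `n` in the paper (conditions are imposed for `n ≥ 1`, and `G 0 = F 0 = X²`).
The conclusion asserts that the mapping `f` given by the piecewise formula is well
defined (it exists and is unique) and separately continuous. -/
theorem stmt_0 {X Z : Type*} [TopologicalSpace X] [MetricSpace Z]
    -- `(Z, e)` is a metric equiconnected space
    (e : Z → Z → unitInterval → Z)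
    (he : Continuous fun p : Z × Z × unitInterval => e p.1 p.2.1 p.2.2)
    (he0 : ∀ x y, e x y 0 = x) (he1 : ∀ x y, e x y 1 = y)
    (heid : ∀ x t, e x x t = x)
    -- sequences of open sets `G n` and closed sets `F n` in `X²`
    (G F : ℕ → Set (X × X)) (hGopen : ∀ n, IsOpen (G n)) (hFclosed : ∀ n, IsClosed (F n))
    -- separately continuous functions `φ n : X² → [0,1]`, `n ≥ 1`
    (φ : ℕ → X × X → unitInterval)
    (hφx : ∀ n, 1 ≤ n → ∀ y, Continuous fun x => φ n (x, y))
    (hφy : ∀ n, 1 ≤ n → ∀ x, Continuous fun y => φ n (x, y))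
    -- continuous mappings `g' n : X → Z`, `n ≥ 1`, converging pointwise to `g`
    (g' : ℕ → X → Z) (hg'cont : ∀ n, 1 ≤ n → Continuous (g' n))
    (g : X → Z)
    (hconv : ∀ x, Tendsto (fun n => g' n x) atTop (nhds (g x)))
    -- positive functions `δ n : X → (0, +∞)` converging pointwise to zero
    (δ : ℕ → X → ℝ) (hδpos : ∀ n, 1 ≤ n → ∀ x, 0 < δ n x)
    (hδ0 : ∀ x, Tendsto (fun n => δ n x) atTop (nhds 0))
    -- condition (1)
    (hG0 : G 0 = univ) (hF0 : F 0 = univ)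
    (h1 : ∀ n, 1 ≤ n → (∀ x : X, (x, x) ∈ G (n + 1)) ∧ G (n + 1) ⊆ F n ∧ F n ⊆ G n)
    -- condition (2)
    (h2 : ∀ n, 1 ≤ n → (G n)ᶜ ⊆ {p | φ n p = 0} ∧ F n ⊆ {p | φ n p = 1})
    -- condition (3)
    (h3 : ∀ n, 1 ≤ n → ∀ p ∈ G n, dist (g' n p.1) (g' n p.2) ≤ δ n p.2 ∧
      dist (g' (n + 1) p.1) (g' (n + 1) p.2) ≤ δ n p.2) :
    -- conclusion: `f` is well defined (exists and is unique) and separately continuous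
    ∃ f : X × X → Z,
      (∀ n : ℕ, ∀ p ∈ F n \ F (n + 1),
          f p = e (g' (n + 1) p.1) (g' (n + 2) p.1) (φ (n + 1) p)) ∧
      (∀ p ∈ ⋂ n : ℕ, G (n + 1), f p = g p.1) ∧
      (∀ y, Continuous fun x => f (x, y)) ∧
      (∀ x, Continuous fun y => f (x, y)) ∧
      (∀ f' : X × X → Z,
        ((∀ n : ℕ, ∀ p ∈ F n \ F (n + 1),
            f' p = e (g' (n + 1) p.1) (g' (n + 2) p.1) (φ (n + 1) p)) ∧
          (∀ p ∈ ⋂ n : ℕ, G (n + 1), f' p = g p.1)) → f' = f) := by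
  classical
  -- basic set-theoretic facts
  have hGsubF : ∀ n, G (n + 1) ⊆ F n := by
    intro n
    rcases Nat.eq_zero_or_pos n with h | h
    · subst h; simp [hF0]
    · exact (h1 n h).2.1
  have hFsubG : ∀ n, 1 ≤ n → F n ⊆ G n := fun n hn => (h1 n hn).2.2
  have hFstep : ∀ n, F (n + 1) ⊆ F n :=
    fun n => (hFsubG (n + 1) (by omega)).trans (hGsubF n)
  have hFmono : ∀ {m n : ℕ}, m ≤ n → F n ⊆ F m := by
    intro m n h
    exact antitone_nat_of_succ_le hFstep h
  set f : X × X → Z := fun p =>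
    if h : ∃ n, p ∉ F n then
      e (g' (Nat.find h) p.1) (g' (Nat.find h + 1) p.1) (φ (Nat.find h) p)
    else g p.1 with hfdef
  have hfE : ∀ p, (∀ n, p ∈ F n) → f p = g p.1 := by
    intro p hp
    simp only [hfdef]
    rw [dif_neg]
    push_neg
    exact hp
  have hfF : ∀ n p, p ∈ F n → p ∉ F (n + 1) →
      f p = e (g' (n + 1) p.1) (g' (n + 2) p.1) (φ (n + 1) p) := by
    intro n p hpn hpn1
    have h : ∃ m, p ∉ F m := ⟨n + 1, hpn1⟩
    have hfind : Nat.find h = n + 1 := by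
      rw [Nat.find_eq_iff]
      exact ⟨hpn1, fun m hm hm' => hm' (hFmono (by omega) hpn)⟩
    simp only [hfdef]
    rw [dif_pos h, hfind]
  -- the "limit" lemma: g x = g y whenever (x, y) ∈ ⋂ₙ₌₁ G n
  have gxy : ∀ x y : X, (∀ n, 1 ≤ n → (x, y) ∈ G n) → g x = g y := by
    intro x y hxy
    have hd : Tendsto (fun n => dist (g' n x) (g' n y)) atTop (nhds (dist (g x) (g y))) :=
      (hconv x).dist (hconv y)
    have hle : ∀ᶠ n in atTop, dist (g' n x) (g' n y) ≤ δ n y := by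
      filter_upwards [eventually_ge_atTop 1] with n hn
      exact (h3 n hn (x, y) (hxy n hn)).1
    have := le_of_tendsto_of_tendsto hd (hδ0 y) hle
    exact dist_le_zero.mp this
  -- consequence of the tube lemma for the equiconnecting map
  have tube : ∀ (c : Z) (ε : ℝ), 0 < ε → ∃ r : ℝ, 0 < r ∧ r ≤ ε ∧
      ∀ a b : Z, dist a c < r → dist b c < r → ∀ t : unitInterval, dist (e a b t) c < ε := by
    intro c ε hε
    have hcont : Continuous fun q : (Z × Z) × unitInterval => dist (e q.1.1 q.1.2 q.2) c := by
      apply Continuous.dist _ continuous_const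
      exact he.comp ((continuous_fst.fst).prodMk ((continuous_fst.snd).prodMk continuous_snd))
    have hopen : IsOpen {q : (Z × Z) × unitInterval | dist (e q.1.1 q.1.2 q.2) c < ε} :=
      isOpen_lt hcont continuous_const
    have hsub : ({(c, c)} : Set (Z × Z)) ×ˢ (univ : Set unitInterval) ⊆
        {q : (Z × Z) × unitInterval | dist (e q.1.1 q.1.2 q.2) c < ε} := by
      rintro ⟨⟨a, b⟩, t⟩ ⟨hab, -⟩
      rcases mem_singleton_iff.mp hab with h
      have ha : a = c := congrArg Prod.fst h
      have hb : b = c := congrArg Prod.snd h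
      simp only [mem_setOf_eq, ha, hb, heid, dist_self]
      exact hε
    obtain ⟨u, v, hu, hv, hcu, hvv, huv⟩ :=
      generalized_tube_lemma isCompact_singleton isCompact_univ hopen hsub
    obtain ⟨r, hr0, hball⟩ := Metric.isOpen_iff.mp hu (c, c) (hcu rfl)
    refine ⟨min r ε, lt_min hr0 hε, min_le_right _ _, ?_⟩
    intro a b ha hb t
    have hmem : ((a, b), t) ∈ u ×ˢ v := by
      refine ⟨hball ?_, hvv (mem_univ t)⟩
      rw [Metric.mem_ball, Prod.dist_eq]
      exact max_lt (lt_of_lt_of_le ha (min_le_left _ _)) (lt_of_lt_of_le hb (min_le_left _ _))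
    exact huv hmem
  -- the local "candidate" formulas
  set cand : ℕ → X × X → Z := fun n p =>
    if n = 0 then e (g' 1 p.1) (g' 2 p.1) (φ 1 p)
    else e (e (g' n p.1) (g' (n + 1) p.1) (φ n p)) (g' (n + 2) p.1) (φ (n + 1) p)
    with hcand
  have key : ∀ n p, p ∈ G n → p ∉ F (n + 1) → f p = cand n p := by
    intro n p hpG hpF
    rcases Nat.eq_zero_or_pos n with rfl | hn
    · have h0 : p ∈ F 0 := by rw [hF0]; trivial
      have := hfF 0 p h0 hpF
      simp only [hcand, if_pos rfl]
      simpa using this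
    · have hn0 : ¬ n = 0 := by omega
      by_cases hpFn : p ∈ F n
      · have hφ1 : φ n p = 1 := (h2 n hn).2 hpFn
        rw [hfF n p hpFn hpF]
        simp only [hcand, if_neg hn0, hφ1, he1]
      · have hpFn1 : p ∈ F (n - 1) := by
          have h' := hGsubF (n - 1)
          rw [show n - 1 + 1 = n by omega] at h'
          exact h' hpG
        have hf1 := hfF (n - 1) p hpFn1 (by rw [show n - 1 + 1 = n by omega]; exact hpFn)
        rw [show n - 1 + 1 = n by omega, show n - 1 + 2 = n + 1 by omega] at hf1
        have hφ0 : φ (n + 1) p = 0 :=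
          (h2 (n + 1) (by omega)).1 (fun hmem => hpFn (hGsubF n hmem))
        simp only [hcand, if_neg hn0, hφ0, he0]
        exact hf1
  -- continuity of the candidates in each variable
  have candContX : ∀ n (y : X), Continuous fun x => cand n (x, y) := by
    intro n y
    by_cases hn : n = 0
    · simp only [hcand, if_pos hn]
      exact he.comp ((hg'cont 1 le_rfl).prodMk
        ((hg'cont 2 (by omega)).prodMk (hφx 1 le_rfl y)))
    · have hn1 : 1 ≤ n := by omega
      simp only [hcand, if_neg hn]
      have hinner : Continuous fun x => e (g' n x) (g' (n + 1) x) (φ n (x, y)) :=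
        he.comp ((hg'cont n hn1).prodMk
          ((hg'cont (n + 1) (by omega)).prodMk (hφx n hn1 y)))
      exact he.comp (hinner.prodMk
        ((hg'cont (n + 2) (by omega)).prodMk (hφx (n + 1) (by omega) y)))
  have candContY : ∀ n (x : X), Continuous fun y => cand n (x, y) := by
    intro n x
    by_cases hn : n = 0
    · simp only [hcand, if_pos hn]
      exact he.comp (continuous_const.prodMk (continuous_const.prodMk (hφy 1 le_rfl x)))
    · have hn1 : 1 ≤ n := by omega
      simp only [hcand, if_neg hn]
      have hinner : Continuous fun y => e (g' n x) (g' (n + 1) x) (φ n (x, y)) :=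
        he.comp (continuous_const.prodMk (continuous_const.prodMk (hφy n hn1 x)))
      exact he.comp (hinner.prodMk
        (continuous_const.prodMk (hφy (n + 1) (by omega) x)))
  -- extraction of the minimal level at a point outside the intersection
  have minlevel : ∀ p : X × X, (∃ n, p ∉ F n) →
      ∃ k, p ∈ F k ∧ p ∉ F (k + 1) := by
    intro p h
    have hpos : 1 ≤ Nat.find h := by
      rcases Nat.eq_zero_or_pos (Nat.find h) with h0 | h0
      · exfalso
        have := Nat.find_spec h
        rw [h0, hF0] at this
        exact this trivial
      · exact h0
    refine ⟨Nat.find h - 1, not_not.mp (Nat.find_min h (by omega)), ?_⟩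
    rw [show Nat.find h - 1 + 1 = Nat.find h by omega]
    exact Nat.find_spec h
  -- continuity in x at points outside the intersection
  have contNonE_x : ∀ (y x0 : X), (∃ n, (x0, y) ∉ F n) →
      ContinuousAt (fun x => f (x, y)) x0 := by
    intro y x0 h
    obtain ⟨k, hk1, hk2⟩ := minlevel (x0, y) h
    have hkG : (x0, y) ∈ G k := by
      rcases Nat.eq_zero_or_pos k with rfl | hk
      · rw [hG0]; trivial
      · exact hFsubG k hk hk1
    have hVopen : IsOpen {x : X | (x, y) ∈ G k ∧ (x, y) ∉ F (k + 1)} := by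
      have : {x : X | (x, y) ∈ G k ∧ (x, y) ∉ F (k + 1)} =
          (fun x => (x, y)) ⁻¹' (G k ∩ (F (k + 1))ᶜ) := rfl
      rw [this]
      exact (((hGopen k).inter (hFclosed (k + 1)).isOpen_compl)).preimage
        (continuous_id.prodMk continuous_const)
    have hVmem : {x : X | (x, y) ∈ G k ∧ (x, y) ∉ F (k + 1)} ∈ nhds x0 :=
      hVopen.mem_nhds ⟨hkG, hk2⟩
    refine (candContX k y).continuousAt.congr ?_
    filter_upwards [hVmem] with x hx
    exact (key k (x, y) hx.1 hx.2).symm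
  have contNonE_y : ∀ (x y0 : X), (∃ n, (x, y0) ∉ F n) →
      ContinuousAt (fun y => f (x, y)) y0 := by
    intro x y0 h
    obtain ⟨k, hk1, hk2⟩ := minlevel (x, y0) h
    have hkG : (x, y0) ∈ G k := by
      rcases Nat.eq_zero_or_pos k with rfl | hk
      · rw [hG0]; trivial
      · exact hFsubG k hk hk1
    have hVopen : IsOpen {y : X | (x, y) ∈ G k ∧ (x, y) ∉ F (k + 1)} := by
      have : {y : X | (x, y) ∈ G k ∧ (x, y) ∉ F (k + 1)} =
          (fun y => (x, y)) ⁻¹' (G k ∩ (F (k + 1))ᶜ) := rfl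
      rw [this]
      exact (((hGopen k).inter (hFclosed (k + 1)).isOpen_compl)).preimage
        (continuous_const.prodMk continuous_id)
    have hVmem : {y : X | (x, y) ∈ G k ∧ (x, y) ∉ F (k + 1)} ∈ nhds y0 :=
      hVopen.mem_nhds ⟨hkG, hk2⟩
    refine (candContY k x).continuousAt.congr ?_
    filter_upwards [hVmem] with y hy
    exact (key k (x, y) hy.1 hy.2).symm
  -- continuity in x at points of the intersection
  have contE_x : ∀ (y x0 : X), (∀ n, (x0, y) ∈ F n) →
      ContinuousAt (fun x => f (x, y)) x0 := by
    intro y x0 hx0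
    have hfx0 : f (x0, y) = g y := by
      rw [hfE _ hx0]
      exact gxy x0 y fun n hn => hFsubG n hn (hx0 n)
    rw [ContinuousAt, hfx0, Metric.tendsto_nhds]
    intro ε hε
    obtain ⟨r, hr0, hrε, hr⟩ := tube (g y) ε hε
    have hev1 : ∀ᶠ m in atTop, δ m y < r / 2 :=
      (hδ0 y).eventually (eventually_lt_nhds (by positivity))
    have hev2 : ∀ᶠ m in atTop, dist (g' m y) (g y) < r / 2 :=
      (hconv y).eventually (Metric.ball_mem_nhds _ (by positivity))
    obtain ⟨N0, hN0⟩ := eventually_atTop.mp (hev1.and hev2)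
    set N := N0 + 2 with hN
    have hVmem : {x : X | (x, y) ∈ G N} ∈ nhds x0 :=
      ((hGopen N).preimage (continuous_id.prodMk continuous_const)).mem_nhds
        (hFsubG N (by omega) (hx0 N))
    filter_upwards [hVmem] with x hx
    by_cases hxF : ∀ n, (x, y) ∈ F n
    · rw [hfE _ hxF]
      have hgx : g x = g y := gxy x y fun n hn => hFsubG n hn (hxF n)
      simpa [hgx] using hε
    · push_neg at hxF
      obtain ⟨k, hk1, hk2⟩ := minlevel (x, y) hxF
      have hGF : (x, y) ∈ F (N - 1) := by
        have h' := hGsubF (N - 1)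
        rw [show N - 1 + 1 = N by omega] at h'
        exact h' hx
      have hkN : N ≤ k + 1 := by
        by_contra hcon
        push_neg at hcon
        exact hk2 (hFmono (by omega) hGF)
      have hfx : f (x, y) = e (g' (k + 1) x) (g' (k + 2) x) (φ (k + 1) (x, y)) :=
        hfF k (x, y) hk1 hk2
      by_cases hxG : (x, y) ∈ G (k + 1)
      · obtain ⟨hd1, hd2⟩ := h3 (k + 1) (by omega) (x, y) hxG
        have hda := hN0 (k + 1) (by omega)
        have hdb := hN0 (k + 2) (by omega)
        have ha : dist (g' (k + 1) x) (g y) < r :=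
          lt_of_le_of_lt (dist_triangle _ (g' (k + 1) y) _) (by
            simp only at hd1 hd2
            linarith [hda.1, hda.2])
        have hb : dist (g' (k + 2) x) (g y) < r :=
          lt_of_le_of_lt (dist_triangle _ (g' (k + 2) y) _) (by
            simp only at hd1 hd2
            linarith [hda.1, hdb.2])
        rw [hfx]
        exact hr _ _ ha hb _
      · have hφ0 : φ (k + 1) (x, y) = 0 := (h2 (k + 1) (by omega)).1 hxG
        rw [hfx, hφ0, he0]
        have hxGk : (x, y) ∈ G k := hFsubG k (by omega) hk1
        have hd := (h3 k (by omega) (x, y) hxGk).2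
        simp only at hd
        have hda := hN0 k (by omega)
        have hdb := hN0 (k + 1) (by omega)
        have : dist (g' (k + 1) x) (g y) < r :=
          lt_of_le_of_lt (dist_triangle _ (g' (k + 1) y) _) (by
            linarith [hda.1, hdb.2])
        exact lt_of_lt_of_le this hrε
  -- continuity in y at points of the intersection
  have contE_y : ∀ (x y0 : X), (∀ n, (x, y0) ∈ F n) →
      ContinuousAt (fun y => f (x, y)) y0 := by
    intro x y0 hy0
    have hfy0 : f (x, y0) = g x := hfE _ hy0
    rw [ContinuousAt, hfy0, Metric.tendsto_nhds]
    intro ε hε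
    obtain ⟨r, hr0, hrε, hr⟩ := tube (g x) ε hε
    have hev2 : ∀ᶠ m in atTop, dist (g' m x) (g x) < r :=
      (hconv x).eventually (Metric.ball_mem_nhds _ hr0)
    obtain ⟨N0, hN0⟩ := eventually_atTop.mp hev2
    set N := N0 + 2 with hN
    have hVmem : {y : X | (x, y) ∈ G N} ∈ nhds y0 :=
      ((hGopen N).preimage (continuous_const.prodMk continuous_id)).mem_nhds
        (hFsubG N (by omega) (hy0 N))
    filter_upwards [hVmem] with y hy
    by_cases hyF : ∀ n, (x, y) ∈ F n
    · rw [hfE _ hyF]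
      simpa using hε
    · push_neg at hyF
      obtain ⟨k, hk1, hk2⟩ := minlevel (x, y) hyF
      have hGF : (x, y) ∈ F (N - 1) := by
        have h' := hGsubF (N - 1)
        rw [show N - 1 + 1 = N by omega] at h'
        exact h' hy
      have hkN : N ≤ k + 1 := by
        by_contra hcon
        push_neg at hcon
        exact hk2 (hFmono (by omega) hGF)
      rw [hfF k (x, y) hk1 hk2]
      exact hr _ _ (hN0 (k + 1) (by omega)) (hN0 (k + 2) (by omega)) _
  refine ⟨f, ?_, ?_, ?_, ?_, ?_⟩
  · intro n p hp
    exact hfF n p hp.1 hp.2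
  · intro p hp
    exact hfE p fun n => hGsubF n (mem_iInter.mp hp n)
  · intro y
    rw [continuous_iff_continuousAt]
    intro x0
    by_cases h : ∀ n, (x0, y) ∈ F n
    · exact contE_x y x0 h
    · push_neg at h
      exact contNonE_x y x0 h
  · intro x
    rw [continuous_iff_continuousAt]
    intro y0
    by_cases h : ∀ n, (x, y0) ∈ F n
    · exact contE_y x y0 h
    · push_neg at h
      exact contNonE_y x y0 h
  · rintro f' ⟨hf'1, hf'2⟩
    funext p
    by_cases hp : ∀ n, p ∈ F n
    · have hpG : p ∈ ⋂ n : ℕ, G (n + 1) :=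
        mem_iInter.mpr fun n => hFsubG (n + 1) (by omega) (hp (n + 1))
      rw [hf'2 p hpG, hfE p hp]
    · push_neg at hp
      obtain ⟨k, hk1, hk2⟩ := minlevel p hp
      rw [hf'1 k p ⟨hk1, hk2⟩, hfF k p hk1 hk2]
end

section
/- Let X be a topological space, (Z,λ) a metrizable equiconnected space and g : X → Z a mapping of the first Baire class. Then there exists a separately continuous mapping f : X² → Z whose diagonal is g, i.e. f(x,x) = g(x) for every x ∈ X. -/
open Set Filter Topology

noncomputable section DiagAux

/-- Threshold sequence `aaa n = 2 * 4⁻ⁿ`. -/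
def aaa (n : ℕ) : ℝ := 2 * (4⁻¹ : ℝ) ^ n

lemma aaa_pos (n : ℕ) : 0 < aaa n := by
  unfold aaa; positivity

lemma aaa_succ_lt (n : ℕ) : aaa (n + 1) < aaa n := by
  have h : (0:ℝ) < (4⁻¹ : ℝ) ^ n := by positivity
  unfold aaa
  rw [pow_succ]
  nlinarith

lemma aaa_anti : StrictAnti aaa := strictAnti_nat_of_succ_lt aaa_succ_lt

lemma aaa_zero : aaa 0 = 2 := by simp [aaa]

lemma aaa_tendsto : Tendsto aaa atTop (𝓝 0) := by
  have h : Tendsto (fun n : ℕ => (4⁻¹ : ℝ) ^ n) atTop (𝓝 0) :=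
    tendsto_pow_atTop_nhds_zero_of_lt_one (by norm_num) (by norm_num)
  have h2 := h.const_mul (2:ℝ)
  rw [mul_zero] at h2
  exact h2

lemma exists_aaa_lt {s : ℝ} (hs : 0 < s) : ∃ n, aaa (n + 1) < s := by
  obtain ⟨k, hk⟩ := (aaa_tendsto.eventually (gt_mem_nhds hs)).exists
  exact ⟨k, (aaa_succ_lt k).trans hk⟩

lemma pow_aaa_bound {n k : ℕ} (hn : 1 ≤ n) (hk : k ≤ n + 1) :
    (2:ℝ) ^ k * aaa n ≤ 4 * (2⁻¹ : ℝ) ^ n := by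
  have h2n : aaa n = 2 * (2⁻¹ : ℝ) ^ (2 * n) := by
    unfold aaa
    rw [show ((4:ℝ)⁻¹) = (2⁻¹ : ℝ) ^ 2 by norm_num, ← pow_mul]
  have hsplit : (2⁻¹ : ℝ) ^ (2 * n) = (2⁻¹ : ℝ) ^ k * (2⁻¹ : ℝ) ^ (2 * n - k) := by
    rw [← pow_add, show k + (2 * n - k) = 2 * n by omega]
  have hcancel : (2:ℝ) ^ k * (2⁻¹ : ℝ) ^ k = 1 := by
    rw [← mul_pow]; norm_num
  have hmono : (2⁻¹ : ℝ) ^ (2 * n - k) ≤ (2⁻¹ : ℝ) ^ (n - 1) :=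
    pow_le_pow_of_le_one (by norm_num) (by norm_num) (by omega)
  have h4 : 4 * (2⁻¹ : ℝ) ^ n = 2 * (2⁻¹ : ℝ) ^ (n - 1) := by
    have hsucc : (2⁻¹ : ℝ) ^ (n - 1 + 1) = (2⁻¹ : ℝ) ^ (n - 1) * 2⁻¹ := pow_succ _ _
    rw [show n - 1 + 1 = n from by omega] at hsucc
    rw [hsucc]; ring
  calc (2:ℝ) ^ k * aaa n = 2 * ((2:ℝ) ^ k * (2⁻¹ : ℝ) ^ k) * (2⁻¹ : ℝ) ^ (2 * n - k) := by
        rw [h2n, hsplit]; ring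
    _ = 2 * (2⁻¹ : ℝ) ^ (2 * n - k) := by rw [hcancel]; ring
    _ ≤ 2 * (2⁻¹ : ℝ) ^ (n - 1) := by nlinarith [hmono]
    _ = 4 * (2⁻¹ : ℝ) ^ n := h4.symm

/-- Piecewise-affine blending parameter. -/
def tau (n : ℕ) (s : ℝ) : unitInterval :=
  Set.projIcc 0 1 zero_le_one ((aaa n - s) / (aaa n - aaa (n + 1)))

lemma tau_continuous (n : ℕ) : Continuous (tau n) :=
  continuous_projIcc.comp ((continuous_const.sub continuous_id).div_const _)

lemma tau_of_ge {n : ℕ} {s : ℝ} (h : aaa n ≤ s) : tau n s = 0 := by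
  have hd : 0 < aaa n - aaa (n + 1) := sub_pos.2 (aaa_succ_lt n)
  have hx : (aaa n - s) / (aaa n - aaa (n + 1)) ≤ 0 :=
    div_nonpos_iff.2 (Or.inr ⟨sub_nonpos.2 h, hd.le⟩)
  unfold tau
  rw [Set.projIcc_of_le_left _ hx]
  rfl

lemma tau_of_le {n : ℕ} {s : ℝ} (h : s ≤ aaa (n + 1)) : tau n s = 1 := by
  have hd : 0 < aaa n - aaa (n + 1) := sub_pos.2 (aaa_succ_lt n)
  have hx : 1 ≤ (aaa n - s) / (aaa n - aaa (n + 1)) := by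
    rw [le_div_iff₀ hd]
    linarith
  unfold tau
  rw [Set.projIcc_of_right_le _ hx]
  rfl

variable {X Z : Type*} [TopologicalSpace X] [MetricSpace Z]

/-- Separately (in fact jointly) continuous "distance" between orbits of the sequence. -/
def rr (gs : ℕ → X → Z) (x y : X) : ℝ :=
  ∑' k, (2⁻¹ : ℝ) ^ k * min (dist (gs k x) (gs k y)) 1

lemma rr_term_nonneg (gs : ℕ → X → Z) (x y : X) (k : ℕ) :
    0 ≤ (2⁻¹ : ℝ) ^ k * min (dist (gs k x) (gs k y)) 1 := by
  have h1 := dist_nonneg (x := gs k x) (y := gs k y)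
  have h2 : (0:ℝ) ≤ min (dist (gs k x) (gs k y)) 1 := le_min h1 zero_le_one
  positivity

lemma rr_term_le (gs : ℕ → X → Z) (x y : X) (k : ℕ) :
    (2⁻¹ : ℝ) ^ k * min (dist (gs k x) (gs k y)) 1 ≤ (2⁻¹ : ℝ) ^ k := by
  have h1 : min (dist (gs k x) (gs k y)) 1 ≤ 1 := min_le_right _ _
  have h2 : (0:ℝ) ≤ (2⁻¹:ℝ) ^ k := by positivity
  calc (2⁻¹ : ℝ) ^ k * min (dist (gs k x) (gs k y)) 1 ≤ (2⁻¹ : ℝ) ^ k * 1 :=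
        mul_le_mul_of_nonneg_left h1 h2
    _ = (2⁻¹ : ℝ) ^ k := mul_one _

lemma rr_summable (gs : ℕ → X → Z) (x y : X) :
    Summable (fun k => (2⁻¹ : ℝ) ^ k * min (dist (gs k x) (gs k y)) 1) :=
  Summable.of_nonneg_of_le (rr_term_nonneg gs x y) (rr_term_le gs x y)
    (summable_geometric_of_lt_one (by norm_num) (by norm_num))

lemma rr_nonneg (gs : ℕ → X → Z) (x y : X) : 0 ≤ rr gs x y :=
  tsum_nonneg (rr_term_nonneg gs x y)

lemma rr_le_two (gs : ℕ → X → Z) (x y : X) : rr gs x y ≤ 2 := by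
  have h := Summable.tsum_le_tsum (rr_term_le gs x y) (rr_summable gs x y)
    (summable_geometric_of_lt_one (by norm_num) (by norm_num))
  have h2 : ∑' k : ℕ, (2⁻¹ : ℝ) ^ k = 2 := by
    rw [tsum_geometric_of_lt_one (by norm_num) (by norm_num)]
    norm_num
  calc rr gs x y ≤ ∑' k : ℕ, (2⁻¹ : ℝ) ^ k := h
    _ = 2 := h2

lemma rr_self (gs : ℕ → X → Z) (x : X) : rr gs x x = 0 := by
  unfold rr
  have h : ∀ k : ℕ, (2⁻¹ : ℝ) ^ k * min (dist (gs k x) (gs k x)) 1 = 0 := by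
    intro k; simp
  simp only [h, tsum_zero]

lemma rr_bound (gs : ℕ → X → Z) (x y : X) (k : ℕ) :
    min (dist (gs k x) (gs k y)) 1 ≤ 2 ^ k * rr gs x y := by
  have h := Summable.le_tsum (rr_summable gs x y) k (fun j _ => rr_term_nonneg gs x y j)
  have h2 : (0:ℝ) < (2⁻¹:ℝ) ^ k := by positivity
  have hc : (2:ℝ) ^ k * ((2⁻¹ : ℝ) ^ k * min (dist (gs k x) (gs k y)) 1)
      = min (dist (gs k x) (gs k y)) 1 := by
    rw [← mul_assoc, ← mul_pow]
    norm_num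
  calc min (dist (gs k x) (gs k y)) 1
      = (2:ℝ) ^ k * ((2⁻¹ : ℝ) ^ k * min (dist (gs k x) (gs k y)) 1) := hc.symm
    _ ≤ 2 ^ k * rr gs x y := by
        apply mul_le_mul_of_nonneg_left h (by positivity)

lemma rr_eq_zero {gs : ℕ → X → Z} {x y : X} (h : rr gs x y = 0) (k : ℕ) :
    gs k x = gs k y := by
  have hb := rr_bound gs x y k
  rw [h, mul_zero] at hb
  have hd : 0 ≤ dist (gs k x) (gs k y) := dist_nonneg
  have hmin : min (dist (gs k x) (gs k y)) 1 = 0 := le_antisymm hb (le_min hd zero_le_one)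
  rcases min_eq_iff.1 hmin with ⟨h1, -⟩ | ⟨h1, -⟩
  · exact dist_le_zero.1 h1.le
  · norm_num at h1

lemma rr_continuous (gs : ℕ → X → Z) (hgs : ∀ n, Continuous (gs n)) :
    Continuous fun p : X × X => rr gs p.1 p.2 := by
  apply continuous_tsum (u := fun k => (2⁻¹:ℝ) ^ k)
  · intro k
    exact continuous_const.mul ((((hgs k).comp continuous_fst).dist
      ((hgs k).comp continuous_snd)).min continuous_const)
  · exact summable_geometric_of_lt_one (by norm_num) (by norm_num)
  · intro k p
    rw [Real.norm_eq_abs, abs_of_nonneg (rr_term_nonneg gs p.1 p.2 k)]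
    exact rr_term_le gs p.1 p.2 k

/-- Distance control inside a piece. -/
lemma dist_piece_bound (gs : ℕ → X → Z) {x y : X} {m n k : ℕ}
    (hm : 3 ≤ m) (hmn : m ≤ n) (hk : k = n ∨ k = n + 1)
    (hupp : rr gs x y ≤ aaa n) :
    dist (gs k x) (gs k y) ≤ 4 * (2⁻¹ : ℝ) ^ m := by
  have hn1 : 1 ≤ n := by omega
  have hkle : k ≤ n + 1 := by rcases hk with rfl | rfl <;> omega
  have hb := rr_bound gs x y k
  have h1 : (2:ℝ) ^ k * rr gs x y ≤ (2:ℝ) ^ k * aaa n :=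
    mul_le_mul_of_nonneg_left hupp (by positivity)
  have h2 : (2:ℝ) ^ k * aaa n ≤ 4 * (2⁻¹ : ℝ) ^ n := pow_aaa_bound hn1 hkle
  have h3 : (4:ℝ) * (2⁻¹ : ℝ) ^ n ≤ 4 * (2⁻¹ : ℝ) ^ m := by
    have := pow_le_pow_of_le_one (show (0:ℝ) ≤ 2⁻¹ by norm_num)
      (show (2⁻¹:ℝ) ≤ 1 by norm_num) hmn
    nlinarith
  have hmin : min (dist (gs k x) (gs k y)) 1 ≤ 4 * (2⁻¹ : ℝ) ^ m := by
    calc min (dist (gs k x) (gs k y)) 1 ≤ (2:ℝ) ^ k * rr gs x y := hb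
      _ ≤ 4 * (2⁻¹ : ℝ) ^ m := le_trans h1 (le_trans h2 h3)
  have hsmall : (4:ℝ) * (2⁻¹ : ℝ) ^ m < 1 := by
    have := pow_le_pow_of_le_one (show (0:ℝ) ≤ 2⁻¹ by norm_num)
      (show (2⁻¹:ℝ) ≤ 1 by norm_num) hm
    have h8 : (2⁻¹:ℝ) ^ 3 = 8⁻¹ := by norm_num
    nlinarith
  rcases le_or_gt (dist (gs k x) (gs k y)) 1 with hd | hd
  · rwa [min_eq_left hd] at hmin
  · rw [min_eq_right hd.le] at hmin
    linarith

open Classical in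
/-- The interpolation map. -/
def Phi (e : Z → Z → unitInterval → Z) (gs : ℕ → X → Z) (g : X → Z) (x : X) (s : ℝ) : Z :=
  if h : ∃ n, aaa (n + 1) < s then
    e (gs (Nat.find h) x) (gs (Nat.find h + 1) x) (tau (Nat.find h) s)
  else g x

lemma find_le {s : ℝ} (hs2 : s ≤ 2) (h : ∃ n, aaa (n + 1) < s) :
    s ≤ aaa (Nat.find h) := by
  classical
  rcases hnn : Nat.find h with _ | k
  · rw [aaa_zero]; exact hs2
  · have hm := Nat.find_min h (show k < Nat.find h by omega)
    push_neg at hm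
    exact hm

section PhiLemmas

variable (e : Z → Z → unitInterval → Z) (gs : ℕ → X → Z) (g : X → Z)
variable (he0 : ∀ a b, e a b 0 = a) (he1 : ∀ a b, e a b 1 = b)

include he0 he1 in
lemma Phi_eq {n : ℕ} {s : ℝ} (h1 : aaa (n + 1) ≤ s) (h2 : s ≤ aaa n) (x : X) :
    Phi e gs g x s = e (gs n x) (gs (n + 1) x) (tau n s) := by
  classical
  have hex : ∃ m, aaa (m + 1) < s := ⟨n + 1, (aaa_succ_lt (n + 1)).trans_le h1⟩
  unfold Phi
  rw [dif_pos hex]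
  rcases eq_or_lt_of_le h1 with heq | hlt
  · -- boundary case `s = aaa (n+1)`
    have hfind : Nat.find hex = n + 1 := by
      rw [Nat.find_eq_iff]
      refine ⟨heq ▸ aaa_succ_lt (n + 1), fun k hk => ?_⟩
      have hle : aaa (n + 1) ≤ aaa (k + 1) := aaa_anti.antitone (by omega)
      rw [← heq]
      exact not_lt.2 hle
    rw [hfind, tau_of_ge h1, he0, tau_of_le heq.ge, he1]
  · have hfind : Nat.find hex = n := by
      rw [Nat.find_eq_iff]
      refine ⟨hlt, fun k hk => ?_⟩
      have hle : aaa n ≤ aaa (k + 1) := aaa_anti.antitone (by omega)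
      exact not_lt.2 (h2.trans hle)
    rw [hfind]

include he0 he1 in
lemma Phi_eq_zero {s : ℝ} (h1 : aaa 1 ≤ s) (x : X) :
    Phi e gs g x s = e (gs 0 x) (gs 1 x) (tau 0 s) := by
  classical
  have hex : ∃ m, aaa (m + 1) < s := ⟨1, (aaa_succ_lt 1).trans_le h1⟩
  unfold Phi
  rw [dif_pos hex]
  rcases eq_or_lt_of_le h1 with heq | hlt
  · have hfind : Nat.find hex = 1 := by
      rw [Nat.find_eq_iff]
      refine ⟨heq ▸ aaa_succ_lt 1, fun k hk => ?_⟩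
      have hk0 : k = 0 := by omega
      subst hk0
      rw [← heq]
      exact lt_irrefl _
    rw [hfind, tau_of_ge h1, he0, tau_of_le heq.ge, he1]
  · have hfind : Nat.find hex = 0 := by
      rw [Nat.find_eq_zero]
      exact hlt
    rw [hfind]

variable (he : Continuous fun p : Z × Z × unitInterval => e p.1 p.2.1 p.2.2)
variable (hgs : ∀ n, Continuous (gs n))

include he hgs in
lemma phi_piece_continuous (n : ℕ) :
    Continuous fun p : X × ℝ => e (gs n p.1) (gs (n + 1) p.1) (tau n p.2) :=
  he.comp ((((hgs n).comp continuous_fst)).prodMk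
    ((((hgs (n + 1)).comp continuous_fst)).prodMk ((tau_continuous n).comp continuous_snd)))

include he0 he1 he hgs in
lemma Phi_continuousAt {s₀ : ℝ} (hs₀ : 0 < s₀) (x₀ : X) :
    ContinuousAt (fun p : X × ℝ => Phi e gs g p.1 p.2) (x₀, s₀) := by
  classical
  by_cases hcase : aaa 1 < s₀
  · -- top piece
    have hO : {p : X × ℝ | aaa 1 < p.2} ∈ 𝓝 (x₀, s₀) :=
      (isOpen_Ioi.preimage continuous_snd).mem_nhds hcase
    have heqv : (fun p : X × ℝ => Phi e gs g p.1 p.2) =ᶠ[𝓝 (x₀, s₀)]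
        fun p : X × ℝ => e (gs 0 p.1) (gs 1 p.1) (tau 0 p.2) := by
      filter_upwards [hO] with p hp
      exact Phi_eq_zero e gs g he0 he1 hp.le p.1
    exact ((phi_piece_continuous e gs he hgs 0).continuousAt).congr heqv.symm
  · push_neg at hcase
    have hex : ∃ m, aaa (m + 1) < s₀ := exists_aaa_lt hs₀
    set n₀ := Nat.find hex with hn₀def
    have hlow : aaa (n₀ + 1) < s₀ := Nat.find_spec hex
    have hupp : s₀ ≤ aaa n₀ := by
      apply find_le _ hex
      calc s₀ ≤ aaa 1 := hcase
        _ ≤ aaa 0 := (aaa_succ_lt 0).le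
        _ = 2 := aaa_zero
    have hn₀pos : 1 ≤ n₀ := by
      by_contra h
      have hzero : n₀ = 0 := by omega
      rw [hzero] at hlow
      exact absurd hlow (not_lt.2 hcase)
    rcases eq_or_lt_of_le hupp with hbdry | hint
    · -- boundary case s₀ = aaa n₀, glue two pieces
      obtain ⟨k, hk⟩ : ∃ k, n₀ = k + 1 := ⟨n₀ - 1, by omega⟩
      rw [hk] at hlow hupp hbdry
      rw [← continuousWithinAt_univ]
      have hcover : (univ : Set (X × ℝ)) =
          {p : X × ℝ | p.2 ≤ aaa (k + 1)} ∪ {p : X × ℝ | aaa (k + 1) ≤ p.2} := by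
        ext p; simp [le_total]
      rw [hcover]
      apply ContinuousWithinAt.union
      · -- left piece: s ≤ aaa (k+1), formula index k+1
        have hbase := ((phi_piece_continuous e gs he hgs (k + 1)).continuousAt
          (x := ((x₀, s₀) : X × ℝ))).continuousWithinAt
          (s := {p : X × ℝ | p.2 ≤ aaa (k + 1)})
        apply hbase.congr_of_eventuallyEq
        · have hO : {p : X × ℝ | aaa (k + 1 + 1) < p.2} ∈
              𝓝[{p : X × ℝ | p.2 ≤ aaa (k + 1)}] (x₀, s₀) :=
            mem_nhdsWithin_of_mem_nhds
              ((isOpen_Ioi.preimage continuous_snd).mem_nhds hlow)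
          filter_upwards [hO, self_mem_nhdsWithin] with p hp1 hp2
          exact Phi_eq e gs g he0 he1 (le_of_lt hp1) hp2 p.1
        · exact Phi_eq e gs g he0 he1 hlow.le hupp x₀
      · -- right piece: s ≥ aaa (k+1), formula index k
        have hbase := ((phi_piece_continuous e gs he hgs k).continuousAt
          (x := ((x₀, s₀) : X × ℝ))).continuousWithinAt
          (s := {p : X × ℝ | aaa (k + 1) ≤ p.2})
        apply hbase.congr_of_eventuallyEq
        · have hO : {p : X × ℝ | p.2 < aaa k} ∈
              𝓝[{p : X × ℝ | aaa (k + 1) ≤ p.2}] (x₀, s₀) := by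
            apply mem_nhdsWithin_of_mem_nhds
            apply (isOpen_Iio.preimage continuous_snd).mem_nhds
            show s₀ < aaa k
            rw [hbdry]
            exact aaa_succ_lt k
          filter_upwards [hO, self_mem_nhdsWithin] with p hp1 hp2
          exact Phi_eq e gs g he0 he1 hp2 hp1.le p.1
        · refine Phi_eq e gs g he0 he1 hbdry.ge ?_ x₀
          rw [hbdry]
          exact (aaa_succ_lt k).le
    · -- interior case aaa (n₀+1) < s₀ < aaa n₀
      have hO : {p : X × ℝ | aaa (n₀ + 1) < p.2 ∧ p.2 < aaa n₀} ∈ 𝓝 (x₀, s₀) := by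
        have hop : IsOpen {p : X × ℝ | aaa (n₀ + 1) < p.2 ∧ p.2 < aaa n₀} :=
          (isOpen_Ioi.preimage continuous_snd).inter (isOpen_Iio.preimage continuous_snd)
        exact hop.mem_nhds ⟨hlow, hint⟩
      have heqv : (fun p : X × ℝ => Phi e gs g p.1 p.2) =ᶠ[𝓝 (x₀, s₀)]
          fun p : X × ℝ => e (gs n₀ p.1) (gs (n₀ + 1) p.1) (tau n₀ p.2) := by
        filter_upwards [hO] with p hp
        exact Phi_eq e gs g he0 he1 hp.1.le hp.2.le p.1
      exact ((phi_piece_continuous e gs he hgs n₀).continuousAt).congr heqv.symm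

end PhiLemmas

/-- Tube lemma for the equiconnecting map. -/
lemma e_tube {e : Z → Z → unitInterval → Z}
    (he : Continuous fun p : Z × Z × unitInterval => e p.1 p.2.1 p.2.2)
    (heid : ∀ x t, e x x t = x) (z : Z) {V : Set Z} (hV : V ∈ 𝓝 z) :
    ∃ ε > 0, ∀ a b : Z, dist a z < ε → dist b z < ε → ∀ t, e a b t ∈ V := by
  obtain ⟨U, hUV, hUo, hzU⟩ := mem_nhds_iff.1 hV
  have hcont : Continuous fun p : (Z × Z) × unitInterval => e p.1.1 p.1.2 p.2 := by
    have hre : Continuous fun p : (Z × Z) × unitInterval => ((p.1.1, p.1.2, p.2) : Z × Z × unitInterval) :=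
      (continuous_fst.fst).prodMk ((continuous_fst.snd).prodMk continuous_snd)
    exact he.comp hre
  have hWo : IsOpen ((fun p : (Z × Z) × unitInterval => e p.1.1 p.1.2 p.2) ⁻¹' U) :=
    hUo.preimage hcont
  have hsub : ({(z, z)} : Set (Z × Z)) ×ˢ (univ : Set unitInterval) ⊆
      (fun p : (Z × Z) × unitInterval => e p.1.1 p.1.2 p.2) ⁻¹' U := by
    rintro ⟨⟨a, b⟩, t⟩ ⟨hab, -⟩
    simp only [mem_singleton_iff, Prod.mk.injEq] at hab
    obtain ⟨rfl, rfl⟩ := hab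
    simpa [heid] using hzU
  obtain ⟨u, v, huo, hvo, hzu, hvv, huv⟩ :=
    generalized_tube_lemma isCompact_singleton isCompact_univ hWo hsub
  have hu_nhds : u ∈ 𝓝 ((z, z) : Z × Z) := huo.mem_nhds (hzu rfl)
  obtain ⟨ε, hε, hball⟩ := Metric.mem_nhds_iff.1 hu_nhds
  refine ⟨ε, hε, fun a b ha hb t => ?_⟩
  have hmem : ((a, b), t) ∈ u ×ˢ v := by
    constructor
    · apply hball
      rw [Metric.mem_ball]
      exact max_lt ha hb
    · exact hvv (mem_univ t)
  exact hUV (huv hmem)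

end DiagAux

/-- Corollary 3.2: for a topological space `X`, a metrizable equiconnected space
`(Z, e)` and a Baire-one mapping `g : X → Z` there exists a separately continuous
mapping `f : X² → Z` with diagonal `g`. -/
theorem stmt_1 {X Z : Type*} [TopologicalSpace X] [TopologicalSpace Z]
    [TopologicalSpace.MetrizableSpace Z]
    (e : Z → Z → unitInterval → Z)
    (he : Continuous fun p : Z × Z × unitInterval => e p.1 p.2.1 p.2.2)
    (he0 : ∀ x y, e x y 0 = x) (he1 : ∀ x y, e x y 1 = y)
    (heid : ∀ x t, e x x t = x)
    (g : X → Z)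
    (hg : ∃ gs : ℕ → X → Z, (∀ n, Continuous (gs n)) ∧
      ∀ x, Tendsto (fun n => gs n x) atTop (nhds (g x))) :
    ∃ f : X × X → Z, (∀ x, f (x, x) = g x) ∧
      (∀ y, Continuous fun x => f (x, y)) ∧
      (∀ x, Continuous fun y => f (x, y)) := by
  classical
  letI : MetricSpace Z := TopologicalSpace.metrizableSpaceMetric Z
  obtain ⟨gs, hgs, hlim⟩ := hg
  have hrr_cont := rr_continuous gs hgs
  have hPhi_zero : ∀ x : X, Phi e gs g x 0 = g x := by
    intro x
    unfold Phi
    rw [dif_neg]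
    push_neg
    intro n
    exact (aaa_pos (n + 1)).le
  have hrr_zero_g : ∀ x y : X, rr gs x y = 0 → g x = g y := by
    intro x y h
    have h1 : Tendsto (fun n => gs n x) atTop (𝓝 (g y)) := by
      have heqf : (fun n => gs n x) = fun n => gs n y := funext fun k => rr_eq_zero h k
      rw [heqf]
      exact hlim y
    exact tendsto_nhds_unique (hlim x) h1
  refine ⟨fun p => Phi e gs g p.1 (rr gs p.1 p.2), ?_, ?_, ?_⟩
  · intro x
    simp only [rr_self gs x]
    exact hPhi_zero x
  · -- continuity in x for fixed y
    intro y
    rw [continuous_iff_continuousAt]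
    intro x₀
    by_cases h0 : rr gs x₀ y = 0
    · -- on the zero set of rr
      have hgxy : g x₀ = g y := hrr_zero_g x₀ y h0
      have hval : Phi e gs g x₀ (rr gs x₀ y) = g x₀ := by rw [h0]; exact hPhi_zero x₀
      unfold ContinuousAt
      rw [show (fun x => Phi e gs g x (rr gs x y)) x₀ = g x₀ from hval]
      intro V hV
      obtain ⟨ε, hε, hEB⟩ := e_tube he heid (g x₀) hV
      have hlimy : Tendsto (fun n => gs n y) atTop (𝓝 (g x₀)) := by
        rw [hgxy]; exact hlim y
      obtain ⟨n₁, hn₁⟩ := (Metric.tendsto_atTop.1 hlimy) (ε / 2) (by linarith)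
      obtain ⟨m₂, hm₂⟩ := (Metric.tendsto_atTop.1
        (tendsto_pow_atTop_nhds_zero_of_lt_one (show (0:ℝ) ≤ 2⁻¹ by norm_num)
          (by norm_num))) (ε / 8) (by linarith)
      set m : ℕ := max (max n₁ m₂) 3 with hm
      have hm3 : 3 ≤ m := le_max_right _ _
      have hmn₁ : n₁ ≤ m := le_trans (le_max_left _ _) (le_max_left _ _)
      have hmm₂ : m₂ ≤ m := le_trans (le_max_right _ _) (le_max_left _ _)
      have hsmall : 4 * (2⁻¹:ℝ) ^ m < ε / 2 := by
        have hd := hm₂ m hmm₂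
        rw [Real.dist_eq, sub_zero, abs_of_nonneg (by positivity)] at hd
        linarith
      have hU : {x : X | rr gs x y < aaa m} ∈ 𝓝 x₀ := by
        have hop : IsOpen {x : X | rr gs x y < aaa m} :=
          isOpen_lt (hrr_cont.comp (continuous_id.prodMk continuous_const)) continuous_const
        apply hop.mem_nhds
        show rr gs x₀ y < aaa m
        rw [h0]
        exact aaa_pos m
      rw [mem_map]
      filter_upwards [hU] with x hx
      by_cases hxz : rr gs x y = 0
      · have hvx : Phi e gs g x (rr gs x y) = g x := by rw [hxz]; exact hPhi_zero x
        rw [mem_preimage, hvx, hrr_zero_g x y hxz, ← hgxy]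
        exact mem_of_mem_nhds hV
      · have hpos : 0 < rr gs x y := lt_of_le_of_ne (rr_nonneg gs x y) (Ne.symm hxz)
        have hex : ∃ n, aaa (n + 1) < rr gs x y := exists_aaa_lt hpos
        have hlow : aaa (Nat.find hex + 1) < rr gs x y := Nat.find_spec hex
        have hupp : rr gs x y ≤ aaa (Nat.find hex) := find_le (rr_le_two gs x y) hex
        set n : ℕ := Nat.find hex with hndef
        have hmn : m ≤ n := by
          by_contra hcon
          push_neg at hcon
          have h1 : aaa m ≤ aaa (n + 1) := aaa_anti.antitone (by omega)
          linarith
        have hdn : dist (gs n x) (gs n y) ≤ 4 * (2⁻¹:ℝ) ^ m :=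
          dist_piece_bound gs hm3 hmn (Or.inl rfl) hupp
        have hdn1 : dist (gs (n+1) x) (gs (n+1) y) ≤ 4 * (2⁻¹:ℝ) ^ m :=
          dist_piece_bound gs hm3 hmn (Or.inr rfl) hupp
        have hyn : dist (gs n y) (g x₀) < ε / 2 := hn₁ n (le_trans hmn₁ hmn)
        have hyn1 : dist (gs (n+1) y) (g x₀) < ε / 2 := hn₁ (n+1) (by omega)
        have hxn : dist (gs n x) (g x₀) < ε :=
          calc dist (gs n x) (g x₀) ≤ dist (gs n x) (gs n y) + dist (gs n y) (g x₀) :=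
              dist_triangle _ _ _
            _ < ε := by linarith
        have hxn1 : dist (gs (n+1) x) (g x₀) < ε :=
          calc dist (gs (n+1) x) (g x₀) ≤ dist (gs (n+1) x) (gs (n+1) y) + dist (gs (n+1) y) (g x₀) :=
              dist_triangle _ _ _
            _ < ε := by linarith
        rw [mem_preimage]
        show Phi e gs g x (rr gs x y) ∈ V
        unfold Phi
        rw [dif_pos hex]
        exact hEB _ _ hxn hxn1 _
    · -- rr gs x₀ y > 0 : composition with the continuity of Phi off zero
      have hpos : 0 < rr gs x₀ y := lt_of_le_of_ne (rr_nonneg gs x₀ y) (Ne.symm h0)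
      have hc1 : Continuous fun x : X => ((x, rr gs x y) : X × ℝ) :=
        continuous_id.prodMk (hrr_cont.comp (continuous_id.prodMk continuous_const))
      have hcomp : ContinuousAt ((fun p : X × ℝ => Phi e gs g p.1 p.2) ∘
          fun x : X => ((x, rr gs x y) : X × ℝ)) x₀ :=
        ContinuousAt.comp (Phi_continuousAt e gs g he0 he1 he hgs hpos x₀) hc1.continuousAt
      exact hcomp
  · -- continuity in y for fixed x
    intro x
    rw [continuous_iff_continuousAt]
    intro y₀
    by_cases h0 : rr gs x y₀ = 0
    · have hval : Phi e gs g x (rr gs x y₀) = g x := by rw [h0]; exact hPhi_zero x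
      unfold ContinuousAt
      rw [show (fun y => Phi e gs g x (rr gs x y)) y₀ = g x from hval]
      intro V hV
      obtain ⟨ε, hε, hEB⟩ := e_tube he heid (g x) hV
      obtain ⟨n₁, hn₁⟩ := (Metric.tendsto_atTop.1 (hlim x)) ε hε
      set m : ℕ := n₁ with hm
      have hU : {y : X | rr gs x y < aaa m} ∈ 𝓝 y₀ := by
        have hop : IsOpen {y : X | rr gs x y < aaa m} :=
          isOpen_lt (hrr_cont.comp (continuous_const.prodMk continuous_id)) continuous_const
        apply hop.mem_nhds
        show rr gs x y₀ < aaa m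
        rw [h0]
        exact aaa_pos m
      rw [mem_map]
      filter_upwards [hU] with y hy
      by_cases hyz : rr gs x y = 0
      · have hvx : Phi e gs g x (rr gs x y) = g x := by rw [hyz]; exact hPhi_zero x
        rw [mem_preimage, hvx]
        exact mem_of_mem_nhds hV
      · have hpos : 0 < rr gs x y := lt_of_le_of_ne (rr_nonneg gs x y) (Ne.symm hyz)
        have hex : ∃ n, aaa (n + 1) < rr gs x y := exists_aaa_lt hpos
        have hlow : aaa (Nat.find hex + 1) < rr gs x y := Nat.find_spec hex
        set n : ℕ := Nat.find hex with hndef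
        have hmn : m ≤ n := by
          by_contra hcon
          push_neg at hcon
          have h1 : aaa m ≤ aaa (n + 1) := aaa_anti.antitone (by omega)
          linarith
        have hxn : dist (gs n x) (g x) < ε := hn₁ n hmn
        have hxn1 : dist (gs (n+1) x) (g x) < ε := hn₁ (n+1) (by omega)
        rw [mem_preimage]
        show Phi e gs g x (rr gs x y) ∈ V
        unfold Phi
        rw [dif_pos hex]
        exact hEB _ _ hxn hxn1 _
    · have hpos : 0 < rr gs x y₀ := lt_of_le_of_ne (rr_nonneg gs x y₀) (Ne.symm h0)
      have hc1 : Continuous fun y : X => ((x, rr gs x y) : X × ℝ) :=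
        continuous_const.prodMk (hrr_cont.comp (continuous_const.prodMk continuous_id))
      have hcomp : ContinuousAt ((fun p : X × ℝ => Phi e gs g p.1 p.2) ∘
          fun y : X => ((x, rr gs x y) : X × ℝ)) y₀ :=
        ContinuousAt.comp (Phi_continuousAt e gs g he0 he1 he hgs hpos x) hc1.continuousAt
      exact hcomp
end

section
/- Let X be a topological space, (Z,λ) a metrizable equiconnected space, and assume that every separately continuous mapping h : X² → Z is of the first Baire class. Then for a mapping g : X → Z the following are equivalent: (i) g is of the first Baire class; (ii) there exists a separately continuous mapping f : X² → Z with diagonal g, i.e. f(x,x) = g(x) for every x ∈ X. -/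
open Set Filter Topology

section Aux

variable {X Z : Type*} [TopologicalSpace X] [TopologicalSpace Z]

lemma proj_zero' : Set.projIcc (0:ℝ) 1 zero_le_one 0 = 0 := by
  rw [Set.projIcc_left]; rfl

lemma proj_one' : Set.projIcc (0:ℝ) 1 zero_le_one 1 = 1 := by
  rw [Set.projIcc_right]; rfl

noncomputable def itp (e : Z → Z → unitInterval → Z) (gt : ℤ → X → Z) : X × ℝ → Z :=
  fun p => e (gt (⌊p.2⌋ + 1) p.1) (gt ⌊p.2⌋ p.1)
    (Set.projIcc 0 1 zero_le_one (1 - Int.fract p.2))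

lemma itp_continuous {e : Z → Z → unitInterval → Z}
    (he : Continuous fun p : Z × Z × unitInterval => e p.1 p.2.1 p.2.2)
    (he0 : ∀ x y, e x y 0 = x) (he1 : ∀ x y, e x y 1 = y)
    {gt : ℤ → X → Z} (hgt : ∀ k, Continuous (gt k)) : Continuous (itp e gt) := by
  -- branch functions
  set br : ℤ → X × ℝ → Z := fun n p =>
    e (gt (n+1) p.1) (gt n p.1) (Set.projIcc 0 1 zero_le_one (1 - (p.2 - (n:ℝ)))) with hbr
  have hbrc : ∀ n, Continuous (br n) := by
    intro n
    have hin : Continuous fun p : X × ℝ =>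
        ((gt (n+1) p.1, gt n p.1,
          Set.projIcc (0:ℝ) 1 zero_le_one (1 - (p.2 - (n:ℝ)))) : Z × Z × unitInterval) := by
      refine Continuous.prodMk ((hgt (n+1)).comp continuous_fst) ?_
      refine Continuous.prodMk ((hgt n).comp continuous_fst) ?_
      exact continuous_projIcc.comp (continuous_const.sub (continuous_snd.sub continuous_const))
    exact he.comp hin
  have hbnd : ∀ n : ℤ, ∀ x : X, br (n-1) (x, (n:ℝ)) = gt n x ∧ br n (x, (n:ℝ)) = gt n x := by
    intro n x
    constructor
    · show e (gt (n-1+1) x) (gt (n-1) x) (Set.projIcc 0 1 zero_le_one (1 - ((n:ℝ) - ((n:ℤ)-1 : ℤ)))) = gt n x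
      have h1 : (n:ℝ) - (((n:ℤ)-1 : ℤ) : ℝ) = 1 := by push_cast; ring
      rw [h1]
      have h2 : (1:ℝ) - 1 = 0 := by ring
      rw [h2, proj_zero', he0]
      norm_num
    · show e (gt (n+1) x) (gt n x) (Set.projIcc 0 1 zero_le_one (1 - ((n:ℝ) - (n:ℝ)))) = gt n x
      rw [sub_self, sub_zero, proj_one', he1]
  -- glued function
  classical
  set H : ℤ → X × ℝ → Z := fun n p => if p.2 ≤ (n:ℝ) then br (n-1) p else br n p with hH
  have hHc : ∀ n, Continuous (H n) := by
    intro n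
    apply Continuous.if_le (hbrc (n-1)) (hbrc n) continuous_snd continuous_const
    intro p hp
    obtain ⟨x, w⟩ := p
    simp only at hp
    subst hp
    rw [(hbnd n x).1, (hbnd n x).2]
  have key : ∀ n : ℤ, ∀ p : X × ℝ, p.2 ∈ Ioo ((n:ℝ)-1) ((n:ℝ)+1) → itp e gt p = H n p := by
    intro n p hp
    obtain ⟨x, w⟩ := p
    simp only [mem_Ioo] at hp
    rcases lt_trichotomy w (n:ℝ) with hlt | heq | hgtw
    · have hfl : ⌊w⌋ = n - 1 := by
        rw [Int.floor_eq_iff]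
        constructor
        · push_cast; linarith [hp.1]
        · push_cast; linarith
      have hfr : Int.fract w = w - (((n-1):ℤ):ℝ) := by rw [Int.fract, hfl]
      show e (gt (⌊w⌋+1) x) (gt ⌊w⌋ x) _ = H n (x, w)
      rw [hH]
      simp only [if_pos hlt.le]
      rw [hfl, hfr]
    · subst heq
      show e (gt (⌊(n:ℝ)⌋+1) x) (gt ⌊(n:ℝ)⌋ x) (Set.projIcc 0 1 zero_le_one (1 - Int.fract (n:ℝ))) = H n (x, (n:ℝ))
      rw [Int.floor_intCast, Int.fract_intCast, sub_zero, proj_one', he1, hH]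
      simp only [le_refl, if_pos]
      rw [(hbnd n x).1]
    · have hfl : ⌊w⌋ = n := by
        rw [Int.floor_eq_iff]
        constructor
        · exact hgtw.le
        · linarith [hp.2]
      have hfr : Int.fract w = w - ((n:ℤ):ℝ) := by rw [Int.fract, hfl]
      show e (gt (⌊w⌋+1) x) (gt ⌊w⌋ x) _ = H n (x, w)
      rw [hH]
      simp only [if_neg (not_le.mpr hgtw)]
      rw [hfl, hfr]
  rw [continuous_iff_continuousAt]
  intro p
  set n := ⌊p.2⌋ with hn
  have hmem : {q : X × ℝ | q.2 ∈ Ioo ((n:ℝ)-1) ((n:ℝ)+1)} ∈ nhds p := by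
    apply (isOpen_Ioo.preimage continuous_snd).mem_nhds
    constructor
    · have := Int.floor_le p.2; linarith
    · have := Int.lt_floor_add_one p.2; linarith
  exact ((hHc n).continuousAt).congr
    (Filter.eventuallyEq_of_mem hmem fun q hq => (key n q hq).symm)

lemma tube_lem {Z : Type*} [MetricSpace Z] {e : Z → Z → unitInterval → Z}
    (he : Continuous fun p : Z × Z × unitInterval => e p.1 p.2.1 p.2.2)
    (heid : ∀ x t, e x x t = x) (c : Z) {ε : ℝ} (hε : 0 < ε) :
    ∃ δ > 0, ∀ (a b : Z) (t : unitInterval),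
      dist a c < δ → dist b c < δ → dist (e a b t) c < ε := by
  have hc : Continuous fun p : (Z × Z) × unitInterval => e p.1.1 p.1.2 p.2 :=
    he.comp ((continuous_fst.comp continuous_fst).prodMk
      ((continuous_snd.comp continuous_fst).prodMk continuous_snd))
  set S : Set ((Z × Z) × unitInterval) := {p | dist (e p.1.1 p.1.2 p.2) c < ε} with hS
  have hSo : IsOpen S := isOpen_Iio.preimage (hc.dist continuous_const)
  have hsub : ({(c,c)} : Set (Z × Z)) ×ˢ (univ : Set unitInterval) ⊆ S := by
    rintro ⟨⟨a, b⟩, t⟩ ⟨h1, -⟩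
    simp only [mem_singleton_iff, Prod.mk.injEq] at h1
    show dist (e a b t) c < ε
    rw [h1.1, h1.2, heid, dist_self]; exact hε
  obtain ⟨u, v, hu, hv, hcu, htv, huv⟩ :=
    generalized_tube_lemma isCompact_singleton isCompact_univ hSo hsub
  obtain ⟨δ, hδ, hball⟩ := Metric.isOpen_iff.1 hu (c,c) (hcu rfl)
  refine ⟨δ, hδ, fun a b t ha hb => ?_⟩
  have : ((a, b), t) ∈ S := by
    apply huv
    refine ⟨hball ?_, htv trivial⟩
    rw [Metric.mem_ball, Prod.dist_eq]
    exact max_lt ha hb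
  exact this

end Aux
/-- Theorem 3.3 (case (1)): if every separately continuous mapping `X² → Z` is of the
first Baire class, then the diagonals of separately continuous mappings `X² → Z` are
exactly the Baire-one mappings `X → Z`. -/
theorem stmt_2 {X Z : Type*} [TopologicalSpace X] [TopologicalSpace Z]
    [TopologicalSpace.MetrizableSpace Z]
    (e : Z → Z → unitInterval → Z)
    (he : Continuous fun p : Z × Z × unitInterval => e p.1 p.2.1 p.2.2)
    (he0 : ∀ x y, e x y 0 = x) (he1 : ∀ x y, e x y 1 = y)
    (heid : ∀ x t, e x x t = x)
    (hCC : ∀ h : X × X → Z,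
      ((∀ y, Continuous fun x => h (x, y)) ∧ (∀ x, Continuous fun y => h (x, y))) →
      ∃ hs : ℕ → X × X → Z, (∀ n, Continuous (hs n)) ∧
        ∀ p, Tendsto (fun n => hs n p) atTop (nhds (h p)))
    (g : X → Z) :
    (∃ gs : ℕ → X → Z, (∀ n, Continuous (gs n)) ∧
        ∀ x, Tendsto (fun n => gs n x) atTop (nhds (g x))) ↔
    (∃ f : X × X → Z, (∀ x, f (x, x) = g x) ∧
        (∀ y, Continuous fun x => f (x, y)) ∧
        (∀ x, Continuous fun y => f (x, y))) := by
  constructor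
  · rintro ⟨gs, hgsc, hgsl⟩
    classical
    letI : MetricSpace Z := TopologicalSpace.metrizableSpaceMetric Z
    set ψ : X × X → ℝ :=
      fun p => ∑' n : ℕ, (1/2:ℝ)^n * min 1 (dist (gs n p.1) (gs n p.2)) with hψdef
    have htermnn : ∀ (p : X × X) (n : ℕ), 0 ≤ (1/2:ℝ)^n * min 1 (dist (gs n p.1) (gs n p.2)) := by
      intro p n
      exact mul_nonneg (by positivity) (le_min zero_le_one dist_nonneg)
    have htermle : ∀ (p : X × X) (n : ℕ),
        (1/2:ℝ)^n * min 1 (dist (gs n p.1) (gs n p.2)) ≤ (1/2:ℝ)^n := by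
      intro p n
      exact mul_le_of_le_one_right (by positivity) (min_le_left _ _)
    have hψsum : ∀ p : X × X, Summable
        (fun n : ℕ => (1/2:ℝ)^n * min 1 (dist (gs n p.1) (gs n p.2))) := by
      intro p
      exact Summable.of_nonneg_of_le (htermnn p) (htermle p) summable_geometric_two
    have hψc : Continuous ψ := by
      apply continuous_tsum (u := fun n : ℕ => (1/2:ℝ)^n)
      · intro n
        exact continuous_const.mul (continuous_const.min
          (((hgsc n).comp continuous_fst).dist ((hgsc n).comp continuous_snd)))
      · exact summable_geometric_two
      · intro n p
        rw [Real.norm_eq_abs, abs_of_nonneg (htermnn p n)]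
        exact htermle p n
    have hterm_le_ψ : ∀ (p : X × X) (n : ℕ),
        (1/2:ℝ)^n * min 1 (dist (gs n p.1) (gs n p.2)) ≤ ψ p := by
      intro p n
      exact Summable.le_tsum (hψsum p) n fun m _ => htermnn p m
    have hψnn : ∀ p : X × X, 0 ≤ ψ p := fun p => tsum_nonneg (htermnn p)
    have hψdiag : ∀ x : X, ψ (x, x) = 0 := by
      intro x
      rw [hψdef]
      simp
    have hψ0 : ∀ p : X × X, ψ p = 0 → ∀ n, gs n p.1 = gs n p.2 := by
      intro p hp n
      have h1 := hterm_le_ψ p n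
      rw [hp] at h1
      have h3 : (1/2:ℝ)^n * min 1 (dist (gs n p.1) (gs n p.2)) = 0 :=
        le_antisymm h1 (htermnn p n)
      have h4 : min 1 (dist (gs n p.1) (gs n p.2)) = 0 := by
        rcases mul_eq_zero.1 h3 with h | h
        · exact absurd h (by positivity)
        · exact h
      have h5 : dist (gs n p.1) (gs n p.2) = 0 := by
        rcases min_eq_iff.1 h4 with ⟨h, -⟩ | ⟨h, -⟩
        · norm_num at h
        · exact h
      exact dist_eq_zero.1 h5
    have hψg : ∀ p : X × X, ψ p = 0 → g p.1 = g p.2 := by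
      intro p hp
      refine tendsto_nhds_unique (hgsl p.1) ?_
      exact Tendsto.congr (fun n => (hψ0 p hp n).symm) (hgsl p.2)
    set gt : ℤ → X → Z := fun k => gs k.toNat with hgtdef
    have hgtc : ∀ k, Continuous (gt k) := fun k => hgsc _
    have hFc : Continuous (itp e gt) := itp_continuous he he0 he1 hgtc
    set f : X × X → Z := fun p =>
      if ψ p = 0 then g p.1 else itp e gt (p.1, Real.logb 4 (ψ p)⁻¹) with hfdef
    -- the key estimate
    have hest : ∀ (p : X × X) (m : ℕ), ψ p ≠ 0 → ψ p < (1/4:ℝ)^m →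
        (m:ℤ) ≤ ⌊Real.logb 4 (ψ p)⁻¹⌋ ∧
        ∀ k : ℕ, (k:ℤ) ≤ ⌊Real.logb 4 (ψ p)⁻¹⌋ + 1 →
          min 1 (dist (gs k p.1) (gs k p.2)) ≤ 2 * (1/2:ℝ)^m := by
      intro p m hne hlt
      have hu : 0 < ψ p := (hψnn p).lt_of_ne (Ne.symm hne)
      set u := ψ p with hudef
      set w := Real.logb 4 u⁻¹ with hwdef
      have hui : 0 < u⁻¹ := inv_pos.2 hu
      have h14 : (1:ℝ) < 4 := by norm_num
      have hmw : (m:ℝ) ≤ w := by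
        rw [hwdef, Real.le_logb_iff_rpow_le h14 hui, Real.rpow_natCast]
        rw [le_inv_comm₀ (by positivity) hu]
        have h14m : (1/4:ℝ)^m = ((4:ℝ)^m)⁻¹ := by rw [one_div, inv_pow]
        rw [← h14m]
        exact hlt.le
      have hmfl : (m:ℤ) ≤ ⌊w⌋ := Int.le_floor.mpr (by exact_mod_cast hmw)
      refine ⟨hmfl, fun k hk => ?_⟩
      have hkw : (k:ℝ) ≤ w + 1 := by
        have h1 : ((⌊w⌋:ℝ)) ≤ w := Int.floor_le w
        have h2 : ((k:ℤ):ℝ) ≤ ((⌊w⌋ + 1 : ℤ):ℝ) := Int.cast_le.mpr hk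
        push_cast at h2
        -- cast
        linarith
      have h2k : (0:ℝ) < 2^k := by positivity
      have hbase : min 1 (dist (gs k p.1) (gs k p.2)) ≤ 2^k * u := by
        have h := hterm_le_ψ p k
        calc min 1 (dist (gs k p.1) (gs k p.2))
            = 2^k * ((1/2:ℝ)^k * min 1 (dist (gs k p.1) (gs k p.2))) := by
              rw [← mul_assoc]; rw [div_pow, one_pow]; field_simp
          _ ≤ 2^k * u := mul_le_mul_of_nonneg_left h h2k.le
      have hru : u = (2:ℝ)^(-(2*w)) := by
        have h4w : (4:ℝ)^w = u⁻¹ := Real.rpow_logb (by norm_num) (by norm_num) hui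
        have hb : (2:ℝ)^((2:ℕ):ℝ) = 4 := by rw [Real.rpow_natCast]; norm_num
        have h42 : (2:ℝ)^(2*w) = (4:ℝ)^w := by
          rw [show (2:ℝ)*w = ((2:ℕ):ℝ)*w by norm_num,
            Real.rpow_mul (by norm_num : (0:ℝ) ≤ 2), hb]
        rw [← h42] at h4w
        rw [Real.rpow_neg (by norm_num : (0:ℝ) ≤ 2), h4w, inv_inv]
      have hfin : (2:ℝ)^k * u ≤ 2 * (1/2:ℝ)^m := by
        have e1 : (2:ℝ)^k = (2:ℝ)^((k:ℝ)) := (Real.rpow_natCast 2 k).symm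
        have e2 : 2*(1/2:ℝ)^m = (2:ℝ)^((1:ℝ) - m) := by
          rw [Real.rpow_sub (by norm_num), Real.rpow_one, Real.rpow_natCast]
          rw [div_pow, one_pow]
          ring
        rw [e1, hru, ← Real.rpow_add (by norm_num), e2]
        apply Real.rpow_le_rpow_of_exponent_le one_le_two
        linarith
      exact hbase.trans hfin
    -- value of f at non-degenerate points, with ℕ indices
    have hval : ∀ p : X × X, ψ p ≠ 0 → 0 ≤ ⌊Real.logb 4 (ψ p)⁻¹⌋ →
        ∃ t : unitInterval, f p =
          e (gs ((⌊Real.logb 4 (ψ p)⁻¹⌋).toNat + 1) p.1)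
            (gs (⌊Real.logb 4 (ψ p)⁻¹⌋).toNat p.1) t := by
      intro p hne hn0
      refine ⟨Set.projIcc 0 1 zero_le_one (1 - Int.fract (Real.logb 4 (ψ p)⁻¹)), ?_⟩
      rw [hfdef]
      simp only [if_neg hne]
      show e (gt (⌊Real.logb 4 (ψ p)⁻¹⌋ + 1) p.1) (gt ⌊Real.logb 4 (ψ p)⁻¹⌋ p.1) _ = _
      rw [hgtdef]
      simp only
      congr 2
      omega
    have hdiag : ∀ x : X, f (x, x) = g x := by
      intro x
      rw [hfdef]
      simp only [if_pos (hψdiag x)]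
    refine ⟨f, hdiag, ?_, ?_⟩
    · -- continuity in the first variable
      intro y
      rw [continuous_iff_continuousAt]
      intro x0
      have hxc : Continuous fun x => ψ (x, y) :=
        hψc.comp (continuous_id.prodMk continuous_const)
      by_cases h0 : ψ (x0, y) = 0
      · -- degenerate case
        have hc0 : g x0 = g y := hψg _ h0
        have hfx0 : f (x0, y) = g y := by rw [hfdef]; simp only [if_pos h0]; exact hc0
        rw [ContinuousAt]
        rw [Metric.tendsto_nhds]
        intro ε hε
        obtain ⟨δ, hδ, hδp⟩ := tube_lem he heid (g y) hε
        obtain ⟨N, hN⟩ := Metric.tendsto_atTop.1 (hgsl y) (δ/2) (half_pos hδ)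
        obtain ⟨m0, hm0⟩ := exists_pow_lt_of_lt_one
          (show (0:ℝ) < min 1 (δ/2) / 2 by positivity) (show (1/2:ℝ) < 1 by norm_num)
        set m := max m0 N with hmdef
        have hm : 2 * (1/2:ℝ)^m < min 1 (δ/2) := by
          have h1 : (1/2:ℝ)^m ≤ (1/2:ℝ)^m0 :=
            pow_le_pow_of_le_one (by norm_num) (by norm_num) (le_max_left _ _)
          calc 2 * (1/2:ℝ)^m ≤ 2 * (1/2:ℝ)^m0 := by linarith
            _ < min 1 (δ/2) := by linarith [hm0]
        have hNm : N ≤ m := le_max_right _ _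
        have hev : {x : X | ψ (x, y) < (1/4:ℝ)^m} ∈ nhds x0 := by
          have h := hxc.continuousAt (x := x0)
          rw [ContinuousAt, h0] at h
          exact h (Iio_mem_nhds (by positivity))
        filter_upwards [hev] with x hx
        rw [hfx0]
        by_cases hx0 : ψ (x, y) = 0
        · have : f (x, y) = g y := by
            rw [hfdef]; simp only [if_pos hx0]; exact hψg _ hx0
          rw [this, dist_self]; exact hε
        · obtain ⟨hm1, hm2⟩ := hest (x, y) m hx0 hx
          set n := ⌊Real.logb 4 (ψ (x, y))⁻¹⌋ with hndef
          have hn0 : 0 ≤ n := le_trans (by positivity) hm1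
          have hkey : ∀ k : ℕ, (k:ℤ) ≤ n + 1 → N ≤ k → dist (gs k x) (g y) < δ := by
            intro k hk1 hk2
            have h1 := hm2 k hk1
            have h2 : dist (gs k x) (gs k y) < δ/2 := by
              have hlt1 : 2*(1/2:ℝ)^m < 1 := lt_of_lt_of_le hm (min_le_left _ _)
              have hlt2 : 2*(1/2:ℝ)^m < δ/2 := lt_of_lt_of_le hm (min_le_right _ _)
              rcases le_or_gt (dist (gs k x) (gs k y)) 1 with hd | hd
              · rw [min_eq_right hd] at h1; linarith
              · rw [min_eq_left hd.le] at h1; linarith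
            have h3 : dist (gs k y) (g y) < δ/2 := hN k hk2
            calc dist (gs k x) (g y) ≤ dist (gs k x) (gs k y) + dist (gs k y) (g y) :=
                dist_triangle _ _ _
              _ < δ/2 + δ/2 := by linarith
              _ = δ := by ring
          obtain ⟨t, ht⟩ := hval (x, y) hx0 hn0
          rw [ht]
          apply hδp
          · apply hkey
            · omega
            · omega
          · apply hkey
            · omega
            · omega
      · -- nondegenerate case
        have hca : ContinuousAt (fun x => itp e gt (x, Real.logb 4 (ψ (x, y))⁻¹)) x0 := by
          apply hFc.continuousAt.comp
          apply ContinuousAt.prodMk continuousAt_id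
          have hinv : ContinuousAt (fun x : X => (ψ (x, y))⁻¹) x0 :=
            ContinuousAt.inv₀ hxc.continuousAt h0
          exact ContinuousAt.comp (x := x0) (Real.continuousAt_logb (inv_ne_zero h0)) hinv
        apply hca.congr
        have hmem : {x : X | ψ (x, y) ≠ 0} ∈ nhds x0 :=
          (isOpen_compl_singleton.preimage hxc).mem_nhds h0
        filter_upwards [hmem] with x hx
        rw [hfdef]
        simp only [if_neg hx]
    · -- continuity in the second variable
      intro x
      rw [continuous_iff_continuousAt]
      intro y0
      have hyc : Continuous fun y => ψ (x, y) :=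
        hψc.comp (continuous_const.prodMk continuous_id)
      by_cases h0 : ψ (x, y0) = 0
      · have hfy0 : f (x, y0) = g x := by rw [hfdef]; simp only [if_pos h0]
        rw [ContinuousAt]
        rw [Metric.tendsto_nhds]
        intro ε hε
        obtain ⟨δ, hδ, hδp⟩ := tube_lem he heid (g x) hε
        obtain ⟨N, hN⟩ := Metric.tendsto_atTop.1 (hgsl x) δ hδ
        have hev : {y : X | ψ (x, y) < (1/4:ℝ)^N} ∈ nhds y0 := by
          have h := hyc.continuousAt (x := y0)
          rw [ContinuousAt, h0] at h
          exact h (Iio_mem_nhds (by positivity))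
        filter_upwards [hev] with y hy
        rw [hfy0]
        by_cases hy0 : ψ (x, y) = 0
        · have : f (x, y) = g x := by rw [hfdef]; simp only [if_pos hy0]
          rw [this, dist_self]; exact hε
        · obtain ⟨hm1, -⟩ := hest (x, y) N hy0 hy
          set n := ⌊Real.logb 4 (ψ (x, y))⁻¹⌋ with hndef
          have hn0 : 0 ≤ n := le_trans (by positivity) hm1
          obtain ⟨t, ht⟩ := hval (x, y) hy0 hn0
          rw [ht]
          apply hδp
          · apply hN
            omega
          · apply hN
            omega
      · have hca : ContinuousAt (fun y => itp e gt (x, Real.logb 4 (ψ (x, y))⁻¹)) y0 := by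
          apply hFc.continuousAt.comp
          apply ContinuousAt.prodMk continuousAt_const
          have hinv : ContinuousAt (fun y : X => (ψ (x, y))⁻¹) y0 :=
            ContinuousAt.inv₀ hyc.continuousAt h0
          exact ContinuousAt.comp (x := y0) (Real.continuousAt_logb (inv_ne_zero h0)) hinv
        apply hca.congr
        have hmem : {y : X | ψ (x, y) ≠ 0} ∈ nhds y0 :=
          (isOpen_compl_singleton.preimage hyc).mem_nhds h0
        filter_upwards [hmem] with y hy
        rw [hfdef]
        simp only [if_neg hy]
  · rintro ⟨f, hdiag, h1, h2⟩
    obtain ⟨hs, hhc, hhl⟩ := hCC f ⟨h1, h2⟩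
    refine ⟨fun n x => hs n (x, x), fun n => (hhc n).comp (continuous_id.prodMk continuous_id),
      fun x => ?_⟩
    have := hhl (x, x)
    rwa [hdiag x] at this
end

section
/- Let X be a metrizable topological space, (Z,λ) a metrizable equiconnected space and g : X → Z a mapping. Then the following are equivalent: (i) g is of the first Baire class; (ii) there exists a separately continuous mapping f : X² → Z with diagonal g, i.e. f(x,x) = g(x) for every x ∈ X. -/
open Set Filter Topology Metric

namespace DiagAux

variable {X Z : Type*} [MetricSpace X] [MetricSpace Z]

/-- The set of radii `δ ∈ [0,1]` such that `gs n` has oscillation `≤ (1/2)^n` on `ball x δ`. -/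
def S (gs : ℕ → X → Z) (n : ℕ) (x : X) : Set ℝ :=
  {δ | δ ∈ Icc (0:ℝ) 1 ∧
    ∀ u ∈ ball x δ, ∀ v ∈ ball x δ, dist (gs n u) (gs n v) ≤ (1/2:ℝ)^n}

theorem zero_mem_S (gs : ℕ → X → Z) (n : ℕ) (x : X) : (0:ℝ) ∈ S gs n x := by
  refine ⟨⟨le_refl _, zero_le_one⟩, fun u hu v hv => ?_⟩
  exact absurd (mem_ball.mp hu) (not_lt.2 dist_nonneg)

theorem S_nonempty (gs : ℕ → X → Z) (n : ℕ) (x : X) : (S gs n x).Nonempty :=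
  ⟨0, zero_mem_S gs n x⟩

theorem S_bdd (gs : ℕ → X → Z) (n : ℕ) (x : X) : BddAbove (S gs n x) :=
  ⟨1, fun δ hδ => hδ.1.2⟩

/-- A continuous modulus-of-continuity radius for `gs n`. -/
noncomputable def s (gs : ℕ → X → Z) (n : ℕ) (x : X) : ℝ := sSup (S gs n x)

theorem s_nonneg (gs : ℕ → X → Z) (n : ℕ) (x : X) : 0 ≤ s gs n x :=
  le_csSup (S_bdd gs n x) (zero_mem_S gs n x)

theorem s_pos (gs : ℕ → X → Z) (n : ℕ) (hc : Continuous (gs n)) (x : X) :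
    0 < s gs n x := by
  have hε : (0:ℝ) < (1/2:ℝ)^n / 2 := by positivity
  obtain ⟨δ, hδ, h⟩ := Metric.continuous_iff.mp hc x _ hε
  have hmem : min δ 1 ∈ S gs n x := by
    refine ⟨⟨le_min hδ.le zero_le_one, min_le_right _ _⟩, fun u hu v hv => ?_⟩
    have hu' : dist u x < δ := lt_of_lt_of_le (mem_ball.mp hu) (min_le_left _ _)
    have hv' : dist v x < δ := lt_of_lt_of_le (mem_ball.mp hv) (min_le_left _ _)
    calc dist (gs n u) (gs n v) ≤ dist (gs n u) (gs n x) + dist (gs n v) (gs n x) :=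
          dist_triangle_right _ _ _
      _ ≤ (1/2:ℝ)^n / 2 + (1/2:ℝ)^n / 2 := add_le_add (h u hu').le (h v hv').le
      _ = (1/2:ℝ)^n := by ring
  calc (0:ℝ) < min δ 1 := lt_min hδ one_pos
    _ ≤ s gs n x := le_csSup (S_bdd gs n x) hmem

theorem s_spec (gs : ℕ → X → Z) (n : ℕ) {x y : X} (h : dist x y < s gs n x) :
    dist (gs n x) (gs n y) ≤ (1/2:ℝ)^n := by
  obtain ⟨δ, hδS, hlt⟩ := exists_lt_of_lt_csSup (S_nonempty gs n x) h
  refine hδS.2 x (mem_ball.mpr ?_) y (mem_ball.mpr ?_)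
  · simpa using lt_of_le_of_lt dist_nonneg hlt
  · rw [dist_comm]; exact hlt

theorem s_le_add (gs : ℕ → X → Z) (n : ℕ) (x y : X) :
    s gs n x ≤ s gs n y + dist x y := by
  refine csSup_le (S_nonempty gs n x) (fun δ hδ => ?_)
  by_cases hd : δ ≤ dist x y
  · calc δ ≤ dist x y := hd
      _ ≤ s gs n y + dist x y := le_add_of_nonneg_left (s_nonneg gs n y)
  · push_neg at hd
    have hmem : δ - dist x y ∈ S gs n y := by
      refine ⟨⟨sub_nonneg.2 hd.le, le_trans (by linarith [dist_nonneg (x := x) (y := y)]) hδ.1.2⟩,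
        fun u hu v hv => ?_⟩
      have hsub : ball y (δ - dist x y) ⊆ ball x δ := by
        intro w hw
        rw [mem_ball] at hw ⊢
        calc dist w x ≤ dist w y + dist y x := dist_triangle _ _ _
          _ < (δ - dist x y) + dist y x := by linarith
          _ = δ := by rw [dist_comm]; ring
      exact hδ.2 u (hsub hu) v (hsub hv)
    have h2 : δ - dist x y ≤ s gs n y := le_csSup (S_bdd gs n y) hmem
    linarith

theorem s_lipschitz (gs : ℕ → X → Z) (n : ℕ) : LipschitzWith 1 (s gs n) := by
  refine LipschitzWith.of_dist_le_mul (fun x y => ?_)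
  rw [NNReal.coe_one, one_mul, Real.dist_eq, abs_sub_le_iff]
  constructor
  · linarith [s_le_add gs n x y]
  · linarith [s_le_add gs n y x, dist_comm x y]

theorem s_cont (gs : ℕ → X → Z) (n : ℕ) : Continuous (s gs n) :=
  (s_lipschitz gs n).continuous

/-- Decreasing minimum of the moduli `s gs k` for `k ≤ n+1`, capped at 1. -/
noncomputable def mfun (gs : ℕ → X → Z) : ℕ → X → ℝ
  | 0 => fun x => min 1 (min (s gs 0 x) (s gs 1 x))
  | (n+1) => fun x => min (mfun gs n x) (s gs (n+2) x)

theorem mfun_cont (gs : ℕ → X → Z) (n : ℕ) : Continuous (mfun gs n) := by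
  induction n with
  | zero => exact continuous_const.min ((s_cont gs 0).min (s_cont gs 1))
  | succ n ih => exact ih.min (s_cont gs (n+2))

theorem mfun_pos (gs : ℕ → X → Z) (hc : ∀ n, Continuous (gs n)) (n : ℕ) (x : X) :
    0 < mfun gs n x := by
  induction n with
  | zero => exact lt_min one_pos (lt_min (s_pos gs 0 (hc 0) x) (s_pos gs 1 (hc 1) x))
  | succ n ih => exact lt_min ih (s_pos gs (n+2) (hc (n+2)) x)

theorem mfun_le_one (gs : ℕ → X → Z) (n : ℕ) (x : X) : mfun gs n x ≤ 1 := by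
  induction n with
  | zero => exact min_le_left _ _
  | succ n ih => exact le_trans (min_le_left _ _) ih

theorem mfun_nonneg (gs : ℕ → X → Z) (n : ℕ) (x : X) : 0 ≤ mfun gs n x := by
  induction n with
  | zero => exact le_min zero_le_one (le_min (s_nonneg gs 0 x) (s_nonneg gs 1 x))
  | succ n ih => exact le_min ih (s_nonneg gs (n+2) x)

theorem mfun_succ_le (gs : ℕ → X → Z) (n : ℕ) (x : X) :
    mfun gs (n+1) x ≤ mfun gs n x := min_le_left _ _

theorem mfun_le_s (gs : ℕ → X → Z) {n k : ℕ} (hk : k ≤ n + 1) (x : X) :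
    mfun gs n x ≤ s gs k x := by
  induction n with
  | zero =>
    interval_cases k
    · exact le_trans (min_le_right _ _) (min_le_left _ _)
    · exact le_trans (min_le_right _ _) (min_le_right _ _)
  | succ n ih =>
    rcases Nat.lt_or_ge k (n+2) with h | h
    · exact le_trans (mfun_succ_le gs n x) (ih (Nat.lt_succ_iff.mp h))
    · have : k = n + 2 := le_antisymm hk h
      subst this
      exact min_le_right _ _

/-- The band radii. -/
noncomputable def a (gs : ℕ → X → Z) (n : ℕ) (x : X) : ℝ := (1/2:ℝ)^n * mfun gs n x

theorem a_cont (gs : ℕ → X → Z) (n : ℕ) : Continuous (a gs n) :=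
  continuous_const.mul (mfun_cont gs n)

theorem a_pos (gs : ℕ → X → Z) (hc : ∀ n, Continuous (gs n)) (n : ℕ) (x : X) :
    0 < a gs n x :=
  mul_pos (by positivity) (mfun_pos gs hc n x)

theorem a_le_pow (gs : ℕ → X → Z) (n : ℕ) (x : X) : a gs n x ≤ (1/2:ℝ)^n := by
  have := mfun_le_one gs n x
  have h0 : (0:ℝ) < (1/2:ℝ)^n := by positivity
  calc a gs n x ≤ (1/2:ℝ)^n * 1 := by
        apply mul_le_mul_of_nonneg_left this h0.le
    _ = (1/2:ℝ)^n := mul_one _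

theorem a_succ_lt (gs : ℕ → X → Z) (hc : ∀ n, Continuous (gs n)) (n : ℕ) (x : X) :
    a gs (n+1) x < a gs n x := by
  have hm : 0 < mfun gs n x := mfun_pos gs hc n x
  have h1 : a gs (n+1) x ≤ (1/2:ℝ)^(n+1) * mfun gs n x :=
    mul_le_mul_of_nonneg_left (mfun_succ_le gs n x) (by positivity)
  have h2 : (1/2:ℝ)^(n+1) * mfun gs n x < (1/2:ℝ)^n * mfun gs n x := by
    apply mul_lt_mul_of_pos_right _ hm
    apply pow_lt_pow_right_of_lt_one₀ (by norm_num) (by norm_num) (Nat.lt_succ_self n)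
  exact lt_of_le_of_lt h1 h2

theorem a_anti (gs : ℕ → X → Z) (hc : ∀ n, Continuous (gs n)) {k n : ℕ} (h : k ≤ n) (x : X) :
    a gs n x ≤ a gs k x := by
  induction n with
  | zero => simp_all
  | succ n ih =>
    rcases Nat.lt_or_ge k (n+1) with h' | h'
    · exact le_trans (a_succ_lt gs hc n x).le (ih (Nat.lt_succ_iff.mp h'))
    · have : k = n + 1 := le_antisymm h h'
      subst this; rfl

theorem a_le_s (gs : ℕ → X → Z) {n k : ℕ} (hk : k ≤ n + 1) (x : X) :
    a gs n x ≤ s gs k x := by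
  have h1 : a gs n x ≤ mfun gs n x := by
    calc a gs n x ≤ 1 * mfun gs n x :=
          mul_le_mul_of_nonneg_right (by apply pow_le_one₀ <;> norm_num) (mfun_nonneg gs n x)
      _ = mfun gs n x := one_mul _
  exact le_trans h1 (mfun_le_s gs hk x)

theorem band_ex (gs : ℕ → X → Z) (x : X) {r : ℝ} (hr : 0 < r) :
    ∃ n, a gs (n+1) x ≤ r := by
  obtain ⟨n, hn⟩ := exists_pow_lt_of_lt_one hr (by norm_num : (1/2:ℝ) < 1)
  refine ⟨n, le_trans (a_le_pow gs (n+1) x) (le_trans ?_ hn.le)⟩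
  apply pow_le_pow_of_le_one (by norm_num) (by norm_num) (Nat.le_succ n)

variable (e : Z → Z → unitInterval → Z)

/-- The formula on band `n`. -/
noncomputable def fml (gs : ℕ → X → Z) (n : ℕ) (x : X) (r : ℝ) : Z :=
  e (gs n x) (gs (n+1) x)
    (projIcc 0 1 zero_le_one ((a gs n x - r) / (a gs n x - a gs (n+1) x)))

open Classical in
/-- The separately continuous extension, as a function of `x` and the distance `r`. -/
noncomputable def Phi (gs : ℕ → X → Z) (g : X → Z) (x : X) (r : ℝ) : Z :=
  if h : 0 < r then fml e gs (Nat.find (band_ex gs x h)) x r else g x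

theorem denom_pos (gs : ℕ → X → Z) (hc : ∀ n, Continuous (gs n)) (n : ℕ) (x : X) :
    0 < a gs n x - a gs (n+1) x := sub_pos.2 (a_succ_lt gs hc n x)

theorem fml_of_le (he0 : ∀ x y, e x y 0 = x) (gs : ℕ → X → Z)
    (hc : ∀ n, Continuous (gs n)) {n : ℕ} {x : X} {r : ℝ}
    (h : a gs n x ≤ r) : fml e gs n x r = gs n x := by
  have hnum : (a gs n x - r) / (a gs n x - a gs (n+1) x) ≤ 0 :=
    div_nonpos_of_nonpos_of_nonneg (sub_nonpos.2 h) (denom_pos gs hc n x).le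
  rw [fml, projIcc_of_le_left _ hnum]
  exact he0 _ _

theorem fml_of_ge (he1 : ∀ x y, e x y 1 = y) (gs : ℕ → X → Z)
    (hc : ∀ n, Continuous (gs n)) {n : ℕ} {x : X} {r : ℝ}
    (h : r ≤ a gs (n+1) x) : fml e gs n x r = gs (n+1) x := by
  have hnum : (1:ℝ) ≤ (a gs n x - r) / (a gs n x - a gs (n+1) x) := by
    rw [le_div_iff₀ (denom_pos gs hc n x)]
    linarith
  rw [fml, projIcc_of_right_le _ hnum]
  exact he1 _ _

open Classical in
theorem Phi_pos (gs : ℕ → X → Z) (g : X → Z) (x : X) {r : ℝ} (hr : 0 < r) :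
    Phi e gs g x r = fml e gs (Nat.find (band_ex gs x hr)) x r := by
  rw [Phi, dif_pos hr]

theorem Phi_zero (gs : ℕ → X → Z) (g : X → Z) (x : X) {r : ℝ} (hr : ¬ 0 < r) :
    Phi e gs g x r = g x := by
  rw [Phi, dif_neg hr]

open Classical in
theorem find_ge (gs : ℕ → X → Z) (hc : ∀ n, Continuous (gs n)) {x : X} {r : ℝ} (hr : 0 < r)
    {N : ℕ} (h : r < a gs N x) : N ≤ Nat.find (band_ex gs x hr) := by
  by_contra hlt
  push_neg at hlt
  have h1 : a gs (Nat.find (band_ex gs x hr) + 1) x ≤ r := Nat.find_spec (band_ex gs x hr)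
  have h2 : a gs N x ≤ a gs (Nat.find (band_ex gs x hr) + 1) x :=
    a_anti gs hc (Nat.succ_le_of_lt hlt) x
  linarith

open Classical in
theorem find_lt (gs : ℕ → X → Z) (hc : ∀ n, Continuous (gs n)) {x : X} {r : ℝ} (hr : 0 < r) :
    r < a gs (Nat.find (band_ex gs x hr)) x ∨ Nat.find (band_ex gs x hr) = 0 := by
  rcases Nat.eq_zero_or_pos (Nat.find (band_ex gs x hr)) with h | h
  · exact Or.inr h
  · left
    obtain ⟨m, hm⟩ := Nat.exists_eq_add_of_lt h
    have := Nat.find_min (band_ex gs x hr) (m := m) (by omega)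
    push_neg at this
    have : r < a gs (m+1) x := this
    rw [hm]
    simpa [Nat.add_comm] using this

open Classical in
theorem Phi_band (he0 : ∀ x y, e x y 0 = x) (he1 : ∀ x y, e x y 1 = y)
    (gs : ℕ → X → Z) (g : X → Z) (hc : ∀ n, Continuous (gs n))
    {n : ℕ} {x : X} {r : ℝ} (hr : 0 < r) (h1 : a gs (n+1) x ≤ r)
    (h2 : n = 0 ∨ r ≤ a gs n x) :
    Phi e gs g x r = fml e gs n x r := by
  rw [Phi_pos e gs g x hr]
  set N := Nat.find (band_ex gs x hr) with hN
  have hNle : N ≤ n := Nat.find_min' _ h1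
  rcases eq_or_lt_of_le hNle with heq | hlt
  · rw [heq]
  · -- N < n, forcing boundary coincidences
    have hn0 : n ≠ 0 := by omega
    have hrle : r ≤ a gs n x := h2.resolve_left hn0
    have hspec : a gs (N+1) x ≤ r := Nat.find_spec (band_ex gs x hr)
    have hchain : a gs n x ≤ a gs (N+1) x := a_anti gs hc (Nat.succ_le_of_lt hlt) x
    have heq1 : r = a gs (N+1) x := le_antisymm (le_trans hrle hchain) hspec
    have heqn : a gs n x = r := by linarith
    have hnN : n = N + 1 := by
      by_contra hne
      have h3 : N + 2 ≤ n := by omega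
      have h4 : a gs n x ≤ a gs (N+2) x := a_anti gs hc h3 x
      have h5 : a gs (N+2) x < a gs (N+1) x := a_succ_lt gs hc (N+1) x
      linarith
    rw [fml_of_ge e he1 gs hc heq1.le, hnN, fml_of_le e he0 gs hc (by rw [← hnN]; exact heqn.le)]

theorem fml_contP (he : Continuous fun p : Z × Z × unitInterval => e p.1 p.2.1 p.2.2)
    (gs : ℕ → X → Z) (hc : ∀ n, Continuous (gs n)) (n : ℕ) :
    Continuous (fun p : X × ℝ => fml e gs n p.1 p.2) := by
  have hnum : Continuous (fun p : X × ℝ => a gs n p.1 - p.2) :=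
    ((a_cont gs n).comp continuous_fst).sub continuous_snd
  have hden : Continuous (fun p : X × ℝ => a gs n p.1 - a gs (n+1) p.1) :=
    ((a_cont gs n).comp continuous_fst).sub ((a_cont gs (n+1)).comp continuous_fst)
  have hdiv : Continuous (fun p : X × ℝ =>
      (a gs n p.1 - p.2) / (a gs n p.1 - a gs (n+1) p.1)) :=
    hnum.div hden (fun p => (denom_pos gs hc n p.1).ne')
  have htup : Continuous fun p : X × ℝ =>
      ((gs n p.1, (gs (n+1) p.1, projIcc 0 1 zero_le_one
        ((a gs n p.1 - p.2) / (a gs n p.1 - a gs (n+1) p.1)))) : Z × Z × unitInterval) :=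
    (((hc n).comp continuous_fst)).prodMk
      ((((hc (n+1)).comp continuous_fst)).prodMk (continuous_projIcc.comp hdiv))
  exact he.comp htup

open Classical in
theorem Phi_contAt (he : Continuous fun p : Z × Z × unitInterval => e p.1 p.2.1 p.2.2)
    (he0 : ∀ x y, e x y 0 = x) (he1 : ∀ x y, e x y 1 = y)
    (gs : ℕ → X → Z) (g : X → Z) (hc : ∀ n, Continuous (gs n))
    {p₀ : X × ℝ} (hr : 0 < p₀.2) :
    ContinuousAt (fun p : X × ℝ => Phi e gs g p.1 p.2) p₀ := by
  obtain ⟨x₀, r₀⟩ := p₀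
  simp only at hr
  set n₀ := Nat.find (band_ex gs x₀ hr) with hn₀def
  have hspec : a gs (n₀+1) x₀ ≤ r₀ := Nat.find_spec (band_ex gs x₀ hr)
  -- upper-bound function for the neighborhood
  set A : X → ℝ := fun x => if n₀ = 0 then r₀ + 1 else a gs n₀ x with hA
  have hAcont : Continuous A := by
    rw [hA]; split_ifs
    · exact continuous_const
    · exact a_cont gs n₀
  have hAmem : r₀ < A x₀ := by
    simp only [hA]; split_ifs with h
    · linarith
    · rcases find_lt gs hc hr with h' | h'
      · exact h'
      · exact absurd h' h
  set V : Set (X × ℝ) := {p | a gs (n₀+2) p.1 < p.2 ∧ p.2 < A p.1} with hV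
  have hVopen : IsOpen V := by
    apply IsOpen.inter
    · exact isOpen_lt ((a_cont gs (n₀+2)).comp continuous_fst) continuous_snd
    · exact isOpen_lt continuous_snd (hAcont.comp continuous_fst)
  have hVmem : (x₀, r₀) ∈ V := by
    refine ⟨?_, hAmem⟩
    have h1 : a gs (n₀+2) x₀ < a gs (n₀+1) x₀ := a_succ_lt gs hc (n₀+1) x₀
    exact lt_of_lt_of_le h1 hspec
  have hVpos : ∀ p ∈ V, (0:ℝ) < p.2 := fun p hp =>
    lt_trans (a_pos gs hc (n₀+2) p.1) hp.1
  -- the two closed pieces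
  set T₁ : Set (X × ℝ) := {p | a gs (n₀+1) p.1 ≤ p.2} ∩ V with hT₁
  set T₂ : Set (X × ℝ) := {p | p.2 ≤ a gs (n₀+1) p.1} ∩ V with hT₂
  have hunion : V ⊆ T₁ ∪ T₂ := by
    intro p hp
    rcases le_total (a gs (n₀+1) p.1) p.2 with h | h
    · exact Or.inl ⟨h, hp⟩
    · exact Or.inr ⟨h, hp⟩
  have hPhi₀ : Phi e gs g x₀ r₀ = fml e gs n₀ x₀ r₀ := Phi_pos e gs g x₀ hr
  -- agreement on T₁ with fml n₀
  have hagree₁ : ∀ p ∈ T₁, Phi e gs g p.1 p.2 = fml e gs n₀ p.1 p.2 := by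
    intro p hp
    refine Phi_band e he0 he1 gs g hc (hVpos p hp.2) hp.1 ?_
    by_cases h : n₀ = 0
    · exact Or.inl h
    · have h2 := hp.2.2
      simp only [hA, if_neg h] at h2
      exact Or.inr h2.le
  have hagree₂ : ∀ p ∈ T₂, Phi e gs g p.1 p.2 = fml e gs (n₀+1) p.1 p.2 := by
    intro p hp
    refine Phi_band e he0 he1 gs g hc (hVpos p hp.2) hp.2.1.le (Or.inr hp.1)
  have hw₁ : ContinuousWithinAt (fun p : X × ℝ => Phi e gs g p.1 p.2) T₁ (x₀, r₀) := by
    refine ((fml_contP e he gs hc n₀).continuousAt.continuousWithinAt).congr hagree₁ hPhi₀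
  have hw₂ : ContinuousWithinAt (fun p : X × ℝ => Phi e gs g p.1 p.2) T₂ (x₀, r₀) := by
    by_cases hb : r₀ = a gs (n₀+1) x₀
    · have hval : Phi e gs g x₀ r₀ = fml e gs (n₀+1) x₀ r₀ := by
        rw [hPhi₀, fml_of_ge e he1 gs hc hb.le, fml_of_le e he0 gs hc hb.ge]
      exact ((fml_contP e he gs hc (n₀+1)).continuousAt.continuousWithinAt).congr hagree₂ hval
    · apply continuousWithinAt_of_notMem_closure
      have hcl : closure T₂ ⊆ {p : X × ℝ | p.2 ≤ a gs (n₀+1) p.1} := by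
        apply closure_minimal (inter_subset_left)
        exact isClosed_le continuous_snd ((a_cont gs (n₀+1)).comp continuous_fst)
      intro hmem
      have : r₀ ≤ a gs (n₀+1) x₀ := hcl hmem
      exact hb (le_antisymm this hspec)
  have : ContinuousWithinAt (fun p : X × ℝ => Phi e gs g p.1 p.2) (T₁ ∪ T₂) (x₀, r₀) :=
    hw₁.union hw₂
  exact (this.mono hunion).continuousAt (hVopen.mem_nhds hVmem)

/-- Tube lemma for the equiconnecting map: near a point `z`, `e` stays near `z`
uniformly in the third coordinate. -/
theorem tube (he : Continuous fun p : Z × Z × unitInterval => e p.1 p.2.1 p.2.2)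
    (heid : ∀ x t, e x x t = x) (z : Z) {ε : ℝ} (hε : 0 < ε) :
    ∃ δ > 0, ∀ (p q : Z) (t : unitInterval),
      dist p z < δ → dist q z < δ → dist (e p q t) z < ε := by
  set U : Set (Z × Z × unitInterval) := {w | dist (e w.1 w.2.1 w.2.2) z < ε} with hU
  have hUopen : IsOpen U :=
    isOpen_lt (he.dist continuous_const) continuous_const
  have hsub : ({z} : Set Z) ×ˢ (({z} : Set Z) ×ˢ (univ : Set unitInterval)) ⊆ U := by
    rintro ⟨p, q, t⟩ ⟨hp, hq, -⟩
    simp only [mem_singleton_iff] at hp hq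
    subst hp; subst hq
    simpa [hU, heid] using hε
  obtain ⟨V, W, hVopen, hWopen, hzV, hzW, hVW⟩ :=
    generalized_tube_lemma isCompact_singleton
      (isCompact_singleton.prod isCompact_univ) hUopen hsub
  obtain ⟨V₂, W₂, hV₂open, hW₂open, hzV₂, hW₂, hVW₂⟩ :=
    generalized_tube_lemma isCompact_singleton isCompact_univ hWopen hzW
  have hzmem : z ∈ V ∩ V₂ := ⟨hzV rfl, hzV₂ rfl⟩
  obtain ⟨δ, hδ, hball⟩ := Metric.mem_nhds_iff.mp ((hVopen.inter hV₂open).mem_nhds hzmem)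
  refine ⟨δ, hδ, fun p q t hp hq => ?_⟩
  have hpV : p ∈ V := (hball (mem_ball.mpr hp)).1
  have hqV₂ : q ∈ V₂ := (hball (mem_ball.mpr hq)).2
  have hqt : (q, t) ∈ W := hVW₂ (mem_prod.mpr ⟨hqV₂, hW₂ (mem_univ t)⟩)
  have hmemVW : ((p, (q, t)) : Z × Z × unitInterval) ∈ V ×ˢ W := mem_prod.mpr ⟨hpV, hqt⟩
  exact hVW hmemVW

open Classical in
/-- Continuity of `y ↦ Phi x (dist x y)` at `y = x`. -/
theorem tendsto_diag_snd (he : Continuous fun p : Z × Z × unitInterval => e p.1 p.2.1 p.2.2)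
    (heid : ∀ x t, e x x t = x)
    (gs : ℕ → X → Z) (g : X → Z) (hc : ∀ n, Continuous (gs n))
    (x : X) (hx : Tendsto (fun n => gs n x) atTop (nhds (g x))) :
    Tendsto (fun y => Phi e gs g x (dist x y)) (nhds x) (nhds (g x)) := by
  rw [Metric.tendsto_nhds]
  intro ε hε
  obtain ⟨ρ, hρ, htube⟩ := tube e he heid (g x) hε
  obtain ⟨N, hN⟩ := Metric.tendsto_atTop.mp hx ρ hρ
  have hpos : 0 < a gs N x := a_pos gs hc N x
  filter_upwards [Metric.ball_mem_nhds x hpos] with y hy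
  rw [mem_ball, dist_comm] at hy
  by_cases hxy : 0 < dist x y
  · rw [Phi_pos e gs g x hxy]
    set n := Nat.find (band_ex gs x hxy) with hn
    have hnN : N ≤ n := find_ge gs hc hxy hy
    rw [fml]
    exact htube _ _ _ (hN n hnN) (hN (n+1) (by omega))
  · rw [Phi_zero e gs g x hxy]
    simpa using hε

open Classical in
/-- Continuity of `x ↦ Phi x (dist x y)` at `x = y`. -/
theorem tendsto_diag_fst (he : Continuous fun p : Z × Z × unitInterval => e p.1 p.2.1 p.2.2)
    (heid : ∀ x t, e x x t = x)
    (gs : ℕ → X → Z) (g : X → Z) (hc : ∀ n, Continuous (gs n))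
    (y : X) (hy : Tendsto (fun n => gs n y) atTop (nhds (g y))) :
    Tendsto (fun x => Phi e gs g x (dist x y)) (nhds y) (nhds (g y)) := by
  rw [Metric.tendsto_nhds]
  intro ε hε
  obtain ⟨ρ, hρ, htube⟩ := tube e he heid (g y) hε
  obtain ⟨N₀, hN₀⟩ := Metric.tendsto_atTop.mp hy (ρ/2) (by linarith)
  obtain ⟨N₁, hN₁⟩ := exists_pow_lt_of_lt_one (show (0:ℝ) < ρ/2 by linarith)
    (by norm_num : (1/2:ℝ) < 1)
  set N := max (max N₀ N₁) 1 with hNdef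
  have hN1 : 1 ≤ N := le_max_right _ _
  have hposN : 0 < a gs N y := a_pos gs hc N y
  -- continuity of `a N` at `y`
  obtain ⟨δ₁, hδ₁, hcontN⟩ := Metric.continuous_iff.mp (a_cont gs N) y (a gs N y / 2)
    (by linarith)
  set δ := min δ₁ (a gs N y / 2) with hδdef
  have hδpos : 0 < δ := lt_min hδ₁ (by linarith)
  filter_upwards [Metric.ball_mem_nhds y hδpos] with x hx
  rw [mem_ball] at hx
  by_cases hxy : 0 < dist x y
  · have haNx : a gs N y / 2 < a gs N x := by
      have h1 : dist x y < δ₁ := lt_of_lt_of_le hx (min_le_left _ _)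
      have h2 := hcontN x h1
      rw [Real.dist_eq, abs_sub_lt_iff] at h2
      linarith [h2.2]
    have hdxa : dist x y < a gs N x :=
      lt_trans (lt_of_lt_of_le hx (min_le_right _ _)) haNx
    rw [Phi_pos e gs g x hxy]
    set n := Nat.find (band_ex gs x hxy) with hn
    have hnN : N ≤ n := find_ge gs hc hxy hdxa
    have hn1 : 1 ≤ n := le_trans hN1 hnN
    -- dist x y < a gs n x
    have hdn : dist x y < a gs n x := by
      rcases find_lt gs hc hxy with h | h
      · exact h
      · omega
    -- estimates for gs n and gs (n+1)
    have hsn : dist x y < s gs n x := lt_of_lt_of_le hdn (a_le_s gs (Nat.le_succ n) x)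
    have hsn1 : dist x y < s gs (n+1) x := lt_of_lt_of_le hdn (a_le_s gs (le_refl (n+1)) x)
    have hhalf : ∀ m, N ≤ m → (1/2:ℝ)^m < ρ/2 := by
      intro m hm
      refine lt_of_le_of_lt ?_ hN₁
      apply pow_le_pow_of_le_one (by norm_num) (by norm_num)
      exact le_trans (le_trans (le_max_right N₀ N₁) (le_max_left _ _)) hm
    have hest : ∀ m, N ≤ m → dist x y < s gs m x → dist (gs m x) (g y) < ρ := by
      intro m hm hsm
      have h1 : dist (gs m x) (gs m y) ≤ (1/2:ℝ)^m := s_spec gs m hsm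
      have h2 : dist (gs m y) (g y) < ρ/2 :=
        hN₀ m (le_trans (le_trans (le_max_left N₀ N₁) (le_max_left _ _)) hm)
      calc dist (gs m x) (g y) ≤ dist (gs m x) (gs m y) + dist (gs m y) (g y) :=
            dist_triangle _ _ _
        _ < (1/2:ℝ)^m + ρ/2 := by linarith
        _ < ρ/2 + ρ/2 := by linarith [hhalf m hm]
        _ = ρ := by ring
    rw [fml]
    exact htube _ _ _ (hest n hnN hsn) (hest (n+1) (by omega) hsn1)
  · have h0 : dist x y = 0 := le_antisymm (not_lt.mp hxy) dist_nonneg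
    have hxeq : x = y := dist_eq_zero.mp h0
    subst hxeq
    rw [Phi_zero e gs g x (by simp)]
    simpa using hε

/-- The forward direction: a Baire-one map into an equiconnected metric space is the
diagonal of a separately continuous map. -/
theorem exists_sep_cont (he : Continuous fun p : Z × Z × unitInterval => e p.1 p.2.1 p.2.2)
    (he0 : ∀ x y, e x y 0 = x) (he1 : ∀ x y, e x y 1 = y) (heid : ∀ x t, e x x t = x)
    (g : X → Z) (gs : ℕ → X → Z) (hc : ∀ n, Continuous (gs n))
    (htd : ∀ x, Tendsto (fun n => gs n x) atTop (nhds (g x))) :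
    ∃ f : X × X → Z, (∀ x, f (x, x) = g x) ∧
      (∀ y, Continuous fun x => f (x, y)) ∧ (∀ x, Continuous fun y => f (x, y)) := by
  refine ⟨fun p => Phi e gs g p.1 (dist p.1 p.2), ?_, ?_, ?_⟩
  · intro x
    show Phi e gs g x (dist x x) = g x
    rw [dist_self]
    exact Phi_zero e gs g x (by norm_num)
  · intro y
    rw [continuous_iff_continuousAt]
    intro x₀
    by_cases hxy : x₀ = y
    · subst hxy
      show Tendsto (fun x => Phi e gs g x (dist x x₀)) (nhds x₀)
        (nhds (Phi e gs g x₀ (dist x₀ x₀)))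
      have h0 : Phi e gs g x₀ (dist x₀ x₀) = g x₀ := by
        rw [dist_self]; exact Phi_zero e gs g x₀ (by norm_num)
      rw [h0]
      exact tendsto_diag_fst e he heid gs g hc x₀ (htd x₀)
    · have hd : 0 < dist x₀ y := dist_pos.mpr hxy
      have hcomp : ContinuousAt (fun p : X × ℝ => Phi e gs g p.1 p.2) (x₀, dist x₀ y) :=
        Phi_contAt e he he0 he1 gs g hc (by simpa using hd)
      have hinner : ContinuousAt (fun x : X => ((x, dist x y) : X × ℝ)) x₀ :=
        (continuous_id.prodMk (continuous_id.dist continuous_const)).continuousAt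
      exact ContinuousAt.comp (f := fun x : X => ((x, dist x y) : X × ℝ)) hcomp hinner
  · intro x
    rw [continuous_iff_continuousAt]
    intro y₀
    by_cases hxy : x = y₀
    · subst hxy
      show Tendsto (fun y => Phi e gs g x (dist x y)) (nhds x)
        (nhds (Phi e gs g x (dist x x)))
      have h0 : Phi e gs g x (dist x x) = g x := by
        rw [dist_self]; exact Phi_zero e gs g x (by norm_num)
      rw [h0]
      have := tendsto_diag_snd e he heid gs g hc x (htd x)
      -- note: at y₀ = x, and the target neighborhood is 𝓝 (g x); but the limit point of
      -- the map is g x while the base point is y₀ = x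
      exact this
    · have hd : 0 < dist x y₀ := dist_pos.mpr hxy
      have hcomp : ContinuousAt (fun p : X × ℝ => Phi e gs g p.1 p.2) (x, dist x y₀) :=
        Phi_contAt e he he0 he1 gs g hc (by simpa using hd)
      have hinner : ContinuousAt (fun y : X => ((x, dist x y) : X × ℝ)) y₀ :=
        (continuous_const.prodMk (continuous_const.dist continuous_id)).continuousAt
      exact ContinuousAt.comp (f := fun y : X => ((x, dist x y) : X × ℝ)) hcomp hinner

end DiagAux


namespace DiagConv

variable {X Z : Type*} [MetricSpace X] [MetricSpace Z]
variable (e : Z → Z → unitInterval → Z)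

/-- Interpolation along a sequence of continuous maps, driven by a nonnegative
continuous parameter. -/
noncomputable def interp (u : ℕ → X → Z) (q : X → ℝ) (x : X) : Z :=
  e (u ⌊q x⌋₊ x) (u (⌊q x⌋₊ + 1) x) (projIcc 0 1 zero_le_one (q x - (⌊q x⌋₊ : ℝ)))

/-- The strip function. -/
noncomputable def strip (u : ℕ → X → Z) (q : X → ℝ) (m : ℕ) (x : X) : Z :=
  e (u m x) (u (m + 1) x) (projIcc 0 1 zero_le_one (q x - (m : ℝ)))

theorem strip_cont (he : Continuous fun p : Z × Z × unitInterval => e p.1 p.2.1 p.2.2)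
    (u : ℕ → X → Z) (hu : ∀ m, Continuous (u m)) (q : X → ℝ) (hq : Continuous q) (m : ℕ) :
    Continuous (strip e u q m) := by
  have htup : Continuous fun x : X =>
      ((u m x, (u (m+1) x, projIcc 0 1 zero_le_one (q x - (m : ℝ)))) : Z × Z × unitInterval) :=
    (hu m).prodMk ((hu (m+1)).prodMk (continuous_projIcc.comp (hq.sub continuous_const)))
  exact he.comp htup

theorem interp_eq_strip (he0 : ∀ x y, e x y 0 = x) (he1 : ∀ x y, e x y 1 = y)
    (u : ℕ → X → Z) (q : X → ℝ) (m : ℕ) (x : X)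
    (h1 : (m : ℝ) ≤ q x) (h2 : q x ≤ (m : ℝ) + 1) :
    interp e u q x = strip e u q m x := by
  rcases lt_or_eq_of_le h2 with h2' | h2'
  · have hfl : ⌊q x⌋₊ = m := by
      rw [Nat.floor_eq_iff (le_trans (Nat.cast_nonneg m) h1)]
      exact ⟨h1, by push_cast; linarith⟩
    rw [interp, strip, hfl]
  · -- q x = m + 1
    have hq1 : q x = ((m + 1 : ℕ) : ℝ) := by push_cast; linarith
    have hfl : ⌊q x⌋₊ = m + 1 := by rw [hq1, Nat.floor_natCast]
    have hz : q x - ((⌊q x⌋₊ : ℕ) : ℝ) ≤ 0 := by rw [hfl, hq1]; simp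
    have ho : (1:ℝ) ≤ q x - (m : ℝ) := by linarith
    rw [interp, strip, projIcc_of_le_left _ hz, projIcc_of_right_le _ ho, hfl]
    exact (he0 _ _).trans (he1 _ _).symm

theorem interp_cont (he : Continuous fun p : Z × Z × unitInterval => e p.1 p.2.1 p.2.2)
    (he0 : ∀ x y, e x y 0 = x) (he1 : ∀ x y, e x y 1 = y)
    (u : ℕ → X → Z) (hu : ∀ m, Continuous (u m)) (q : X → ℝ) (hq : Continuous q)
    (hq0 : ∀ x, 0 ≤ q x) : Continuous (interp e u q) := by
  rw [continuous_iff_continuousAt]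
  intro x₀
  set m₀ := ⌊q x₀⌋₊ with hm₀
  by_cases hint : q x₀ = (m₀ : ℝ)
  · -- at an integer value
    rcases Nat.eq_zero_or_pos m₀ with hz | hpos
    · -- m₀ = 0 : on {q < 1} we have interp = strip 0
      have hV : {x | q x < 1} ∈ nhds x₀ := by
        apply (isOpen_lt hq continuous_const).mem_nhds
        simp only [mem_setOf_eq, hint, hz, Nat.cast_zero]
        norm_num
      refine ContinuousAt.congr ((strip_cont e he u hu q hq 0).continuousAt) ?_
      filter_upwards [hV] with x hx
      exact (interp_eq_strip e he0 he1 u q 0 x (by simpa using hq0 x)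
        (by simpa using hx.le)).symm
    · -- m₀ ≥ 1 : paste two strips
      obtain ⟨k, hk⟩ := Nat.exists_eq_add_of_lt hpos
      have hk' : m₀ = k + 1 := by omega
      set V : Set X := {x | (k : ℝ) < q x ∧ q x < (m₀ : ℝ) + 1} with hV
      have hVopen : IsOpen V :=
        (isOpen_lt continuous_const hq).inter (isOpen_lt hq continuous_const)
      have hVmem : x₀ ∈ V := by
        constructor
        · rw [hint, hk']; push_cast; linarith
        · rw [hint]; linarith
      have hw₁ : ContinuousWithinAt (interp e u q) ({x | q x ≤ (m₀ : ℝ)} ∩ V) x₀ := by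
        refine ((strip_cont e he u hu q hq k).continuousAt.continuousWithinAt).congr ?_ ?_
        · intro x hx
          have h1 : q x ≤ (m₀ : ℝ) := hx.1
          have h2 : (k : ℝ) < q x := hx.2.1
          refine (interp_eq_strip e he0 he1 u q k x h2.le ?_)
          rw [hk'] at h1; push_cast at h1 ⊢; linarith
        · refine (interp_eq_strip e he0 he1 u q k x₀ ?_ ?_)
          · rw [hint, hk']; push_cast; linarith
          · rw [hint, hk']; push_cast; linarith
      have hw₂ : ContinuousWithinAt (interp e u q) ({x | (m₀ : ℝ) ≤ q x} ∩ V) x₀ := by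
        refine ((strip_cont e he u hu q hq m₀).continuousAt.continuousWithinAt).congr ?_ ?_
        · intro x hx
          exact (interp_eq_strip e he0 he1 u q m₀ x hx.1 hx.2.2.le)
        · refine (interp_eq_strip e he0 he1 u q m₀ x₀ (le_of_eq hint.symm) ?_)
          rw [hint]; linarith
      have hunion := hw₁.union hw₂
      refine ContinuousWithinAt.continuousAt (hunion.mono ?_) (hVopen.mem_nhds hVmem)
      intro x hx
      rcases le_total (q x) (m₀ : ℝ) with h | h
      · exact Or.inl ⟨h, hx⟩
      · exact Or.inr ⟨h, hx⟩
  · -- non-integer : single strip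
    have hlt : (m₀ : ℝ) < q x₀ := lt_of_le_of_ne (Nat.floor_le (hq0 x₀)) (Ne.symm hint)
    have hlt2 : q x₀ < (m₀ : ℝ) + 1 := by
      have := Nat.lt_floor_add_one (q x₀)
      push_cast at this ⊢
      linarith
    have hV : {x | (m₀ : ℝ) < q x ∧ q x < (m₀ : ℝ) + 1} ∈ nhds x₀ := by
      apply IsOpen.mem_nhds
      · exact (isOpen_lt continuous_const hq).inter (isOpen_lt hq continuous_const)
      · exact ⟨hlt, hlt2⟩
    refine ContinuousAt.congr ((strip_cont e he u hu q hq m₀).continuousAt) ?_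
    filter_upwards [hV] with x hx
    exact (interp_eq_strip e he0 he1 u q m₀ x hx.1.le hx.2.le).symm

section Scale

open Classical in
/-- The `≺`-least point claiming `x` at scale `r` (i.e. with `dist x c < r/2`). -/
noncomputable def lc (r : ℝ) (hr : 0 < r) (x : X) : X :=
  (IsWellFounded.wf (r := (WellOrderingRel : X → X → Prop))).min
    {c | dist x c < r/2} ⟨x, by simp only [mem_setOf_eq, dist_self]; positivity⟩

theorem lc_claims (r : ℝ) (hr : 0 < r) (x : X) : dist x (lc r hr x) < r/2 := by
  have h := (IsWellFounded.wf (r := (WellOrderingRel : X → X → Prop))).min_mem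
    {c | dist x c < r/2} ⟨x, by simp only [mem_setOf_eq, dist_self]; positivity⟩
  exact h

theorem lc_min (r : ℝ) (hr : 0 < r) (x : X) {c : X} (hc : dist x c < r/2) :
    ¬ WellOrderingRel c (lc r hr x) :=
  (IsWellFounded.wf (r := (WellOrderingRel : X → X → Prop))).not_lt_min
    {c | dist x c < r/2} hc

/-- Core of the piece at level `lam` with center `c`. -/
def Core (r : ℝ) (hr : 0 < r) (lam : ℕ) (c : X) : Set X :=
  {x | lc r hr x = c ∧ dist x c < r/2 - 3*r*(1/2)^lam}

/-- The (open) piece at level `lam` with center `c`. -/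
def Piece (r : ℝ) (hr : 0 < r) (lam : ℕ) (c : X) : Set X :=
  ⋃ y ∈ Core r hr lam c, ball y (r*(1/2)^lam)

/-- The union of all pieces at level `lam`. -/
def Lvl (r : ℝ) (hr : 0 < r) (lam : ℕ) : Set X :=
  ⋃ c, Piece r hr lam c

theorem piece_bound {r : ℝ} {hr : 0 < r} {lam : ℕ} {c x : X} (hx : x ∈ Piece r hr lam c) :
    dist x c < r/2 + r*(1/2)^lam := by
  obtain ⟨y, hy, hxy⟩ := by simpa [Piece] using hx
  have h1 : dist x y < r*(1/2)^lam := by simpa [mem_ball, dist_comm] using hxy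
  have h2 : dist y c < r/2 - 3*r*(1/2)^lam := hy.2
  have hp : (0:ℝ) < r*(1/2)^lam := by positivity
  calc dist x c ≤ dist x y + dist y c := dist_triangle _ _ _
    _ < r*(1/2)^lam + (r/2 - 3*r*(1/2)^lam) := by linarith
    _ ≤ r/2 + r*(1/2)^lam := by linarith

theorem core_sep {r : ℝ} {hr : 0 < r} {lam : ℕ} {c c' y y' : X} (hcc' : c ≠ c')
    (hy : y ∈ Core r hr lam c) (hy' : y' ∈ Core r hr lam c') :
    3*r*(1/2)^lam ≤ dist y y' := by
  -- one of the centers precedes the other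
  rcases trichotomous (r := (WellOrderingRel : X → X → Prop)) c c' with h | h | h
  · -- c ≺ c' : then y' is not claimed by c
    have hclaim : ¬ dist y' c < r/2 := by
      intro hcl
      exact lc_min r hr y' hcl (hy'.1 ▸ h)
    push_neg at hclaim
    have h2 : dist y c < r/2 - 3*r*(1/2)^lam := hy.2
    calc 3*r*(1/2)^lam ≤ dist y' c - dist y c := by linarith
      _ ≤ dist y y' := by
          have h3 := dist_triangle y' y c
          rw [dist_comm y' y] at h3
          linarith
  · exact absurd h hcc'
  · have hclaim : ¬ dist y c' < r/2 := by
      intro hcl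
      exact lc_min r hr y hcl (hy.1 ▸ h)
    push_neg at hclaim
    have h2 : dist y' c' < r/2 - 3*r*(1/2)^lam := hy'.2
    calc 3*r*(1/2)^lam ≤ dist y c' - dist y' c' := by linarith
      _ ≤ dist y y' := by
          have h3 := dist_triangle y y' c'
          linarith

theorem piece_sep {r : ℝ} {hr : 0 < r} {lam : ℕ} {c c' x x' : X} (hcc' : c ≠ c')
    (hx : x ∈ Piece r hr lam c) (hx' : x' ∈ Piece r hr lam c') :
    r*(1/2)^lam ≤ dist x x' := by
  obtain ⟨y, hy, hxy⟩ := by simpa [Piece] using hx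
  obtain ⟨y', hy', hxy'⟩ := by simpa [Piece] using hx'
  have h1 : dist x y < r*(1/2)^lam := by simpa [mem_ball, dist_comm] using hxy
  have h1' : dist x' y' < r*(1/2)^lam := by simpa [mem_ball, dist_comm] using hxy'
  have h2 := core_sep hcc' hy hy'
  calc r*(1/2)^lam = 3*r*(1/2)^lam - r*(1/2)^lam - r*(1/2)^lam := by ring
    _ ≤ dist y y' - dist x y - dist x' y' := by linarith
    _ ≤ dist x x' := by
        have ha := dist_triangle y x y'
        have hb := dist_triangle x x' y'
        rw [dist_comm y x] at ha
        linarith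

theorem cover (r : ℝ) (hr : 0 < r) (x : X) : ∃ lam, x ∈ Piece r hr lam (lc r hr x) := by
  have h := lc_claims r hr x
  obtain ⟨lam, hlam⟩ := exists_pow_lt_of_lt_one
    (show (0:ℝ) < (r/2 - dist x (lc r hr x))/(3*r) from div_pos (by linarith) (by positivity))
    (by norm_num : (1/2:ℝ) < 1)
  refine ⟨lam, ?_⟩
  have hc : x ∈ Core r hr lam (lc r hr x) := by
    refine ⟨rfl, ?_⟩
    have h3r : (0:ℝ) < 3*r := by positivity
    rw [lt_div_iff₀ h3r] at hlam
    nlinarith [hlam]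
  apply mem_biUnion hc
  simp only [mem_ball, dist_self]
  positivity

variable {Z : Type*} [MetricSpace Z]

/-- Window size at level `lam`. -/
noncomputable def Wc (r : ℝ) (lam : ℕ) : ℝ := r*(1/2)^lam/16

theorem Wc_pos {r : ℝ} (hr : 0 < r) (lam : ℕ) : 0 < Wc r lam := by
  unfold Wc; positivity

open Classical in
/-- Distance to the level, defaulting to `r` for empty levels. -/
noncomputable def delf (r : ℝ) (hr : 0 < r) (lam : ℕ) (x : X) : ℝ :=
  if (Lvl r hr lam : Set X).Nonempty then infDist x (Lvl r hr lam) else r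

theorem delf_cont (r : ℝ) (hr : 0 < r) (lam : ℕ) :
    Continuous (fun x : X => delf r hr lam x) := by
  unfold delf
  split_ifs
  · exact continuous_infDist_pt _
  · exact continuous_const

theorem delf_nonneg (r : ℝ) (hr : 0 < r) (lam : ℕ) (x : X) : 0 ≤ delf r hr lam x := by
  unfold delf; split_ifs
  · exact infDist_nonneg
  · exact hr.le

/-- Uniqueness of a nearby piece. -/
theorem piece_uniq {r : ℝ} {hr : 0 < r} {lam : ℕ} {x c c' : X}
    (hne : (Piece r hr lam c).Nonempty) (hne' : (Piece r hr lam c').Nonempty)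
    (hd : infDist x (Piece r hr lam c) < 5 * Wc r lam)
    (hd' : infDist x (Piece r hr lam c') < 5 * Wc r lam) : c = c' := by
  by_contra hcc'
  obtain ⟨u, hu, hdu⟩ := (infDist_lt_iff hne).mp hd
  obtain ⟨u', hu', hdu'⟩ := (infDist_lt_iff hne').mp hd'
  have hsep := piece_sep hcc' hu hu'
  have htr : dist u u' ≤ dist u x + dist x u' := dist_triangle _ _ _
  rw [dist_comm u x] at htr
  have hWc : Wc r lam = r*(1/2)^lam/16 := rfl
  have hrl : (0:ℝ) < r*(1/2)^lam := by positivity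
  rw [hWc] at hd hd'
  linarith

variable (e : Z → Z → unitInterval → Z)

open Classical in
/-- The glued local value function at level `lam`. -/
noncomputable def val (F : X → X → Z) (c₀ : X) (r : ℝ) (hr : 0 < r) (lam : ℕ) (x : X) : Z :=
  if h : ∃ c, (Piece r hr lam c).Nonempty ∧ infDist x (Piece r hr lam c) < 4 * Wc r lam
  then e (F x c₀) (F x h.choose)
    (projIcc 0 1 zero_le_one (2 - infDist x (Piece r hr lam h.choose) / (2 * Wc r lam)))
  else F x c₀

open Classical in
theorem val_cont (he : Continuous fun p : Z × Z × unitInterval => e p.1 p.2.1 p.2.2)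
    (he0 : ∀ x y, e x y 0 = x)
    (F : X → X → Z) (hF : ∀ c, Continuous fun x => F x c) (c₀ : X)
    (r : ℝ) (hr : 0 < r) (lam : ℕ) : Continuous (val e F c₀ r hr lam) := by
  rw [continuous_iff_continuousAt]
  intro x₀
  have hWpos := Wc_pos hr lam
  by_cases hc : ∃ c, (Piece r hr lam c).Nonempty ∧ infDist x₀ (Piece r hr lam c) < 5 * Wc r lam
  · obtain ⟨c, hcne, hcd⟩ := hc
    have hgc : Continuous fun x => e (F x c₀) (F x c)
        (projIcc 0 1 zero_le_one (2 - infDist x (Piece r hr lam c) / (2 * Wc r lam))) := by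
      have htup : Continuous fun x : X => ((F x c₀, (F x c, projIcc 0 1 zero_le_one
          (2 - infDist x (Piece r hr lam c) / (2 * Wc r lam)))) : Z × Z × unitInterval) :=
        (hF c₀).prodMk ((hF c).prodMk (continuous_projIcc.comp
          (continuous_const.sub ((continuous_infDist_pt _).div_const _))))
      exact he.comp htup
    refine ContinuousAt.congr hgc.continuousAt ?_
    filter_upwards [Metric.ball_mem_nhds x₀ hWpos] with x hx
    rw [mem_ball] at hx
    by_cases h : ∃ c', (Piece r hr lam c').Nonempty ∧
        infDist x (Piece r hr lam c') < 4 * Wc r lam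
    · have hspec := h.choose_spec
      have hch : h.choose = c := by
        refine piece_uniq hspec.1 hcne ?_ hcd
        calc infDist x₀ (Piece r hr lam h.choose)
            ≤ infDist x (Piece r hr lam h.choose) + dist x₀ x :=
              infDist_le_infDist_add_dist
          _ < 4 * Wc r lam + Wc r lam := by rw [dist_comm]; exact add_lt_add hspec.2 hx
          _ = 5 * Wc r lam := by ring
      rw [val, dif_pos h, hch]
    · rw [val, dif_neg h]
      have hfar : 4 * Wc r lam ≤ infDist x (Piece r hr lam c) := by
        by_contra hlt
        push_neg at hlt
        exact h ⟨c, hcne, hlt⟩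
      have harg : 2 - infDist x (Piece r hr lam c) / (2 * Wc r lam) ≤ 0 := by
        rw [sub_nonpos, le_div_iff₀ (by positivity)]
        linarith
      rw [projIcc_of_le_left _ harg]
      exact he0 _ _
  · -- no nearby piece : val = anchor near x₀
    refine ContinuousAt.congr (hF c₀).continuousAt ?_
    filter_upwards [Metric.ball_mem_nhds x₀ hWpos] with x hx
    rw [mem_ball] at hx
    rw [val]
    rw [dif_neg ?_]
    intro h
    obtain ⟨c', hne', hd'⟩ := h
    refine hc ⟨c', hne', ?_⟩
    calc infDist x₀ (Piece r hr lam c')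
        ≤ infDist x (Piece r hr lam c') + dist x₀ x := infDist_le_infDist_add_dist
      _ < 4 * Wc r lam + Wc r lam := by rw [dist_comm]; exact add_lt_add hd' hx
      _ = 5 * Wc r lam := by ring

open Classical in
theorem val_sound (he1 : ∀ x y, e x y 1 = y)
    (F : X → X → Z) (c₀ : X) (r : ℝ) (hr : 0 < r) (lam : ℕ) (x : X)
    (hδ : delf r hr lam x < 2 * Wc r lam) :
    ∃ c, dist x c ≤ 2*r ∧ val e F c₀ r hr lam x = F x c := by
  have hWpos := Wc_pos hr lam
  have hW2r : 2 * Wc r lam < r := by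
    have h1 : (1/2:ℝ)^lam ≤ 1 := by
      apply pow_le_one₀ <;> norm_num
    unfold Wc
    nlinarith
  have hLne : (Lvl r hr lam : Set X).Nonempty := by
    by_contra hemp
    rw [delf, if_neg hemp] at hδ
    linarith
  rw [delf, if_pos hLne] at hδ
  obtain ⟨u, hu, hdu⟩ := (infDist_lt_iff hLne).mp hδ
  obtain ⟨c₁, hc₁⟩ := mem_iUnion.mp hu
  have hne₁ : (Piece r hr lam c₁).Nonempty := ⟨u, hc₁⟩
  have hd₁ : infDist x (Piece r hr lam c₁) < 2 * Wc r lam :=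
    lt_of_le_of_lt (infDist_le_dist_of_mem hc₁) hdu
  have hex : ∃ c, (Piece r hr lam c).Nonempty ∧
      infDist x (Piece r hr lam c) < 4 * Wc r lam :=
    ⟨c₁, hne₁, lt_trans hd₁ (by linarith)⟩
  have hspec := hex.choose_spec
  have hch : hex.choose = c₁ :=
    piece_uniq hspec.1 hne₁ (lt_trans hspec.2 (by linarith)) (lt_trans hd₁ (by linarith))
  refine ⟨c₁, ?_, ?_⟩
  · have hb := piece_bound hc₁
    have h1 : (1/2:ℝ)^lam ≤ 1 := by
      apply pow_le_one₀ <;> norm_num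
    calc dist x c₁ ≤ dist x u + dist u c₁ := dist_triangle _ _ _
      _ ≤ 2 * Wc r lam + (r/2 + r*(1/2)^lam) := by linarith
      _ ≤ 2*r := by unfold Wc; nlinarith
  · rw [val, dif_pos hex, hch]
    have harg : (1:ℝ) ≤ 2 - infDist x (Piece r hr lam c₁) / (2 * Wc r lam) := by
      have hnn : 0 ≤ infDist x (Piece r hr lam c₁) := infDist_nonneg
      have : infDist x (Piece r hr lam c₁) / (2 * Wc r lam) ≤ 1 := by
        rw [div_le_one (by positivity)]
        linarith
      linarith
    rw [projIcc_of_right_le _ harg]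
    exact he1 _ _

/-- Normalized level distance. -/
noncomputable def tau (r : ℝ) (hr : 0 < r) (lam : ℕ) (x : X) : ℝ :=
  delf r hr lam x / Wc r lam

/-- Soft indicator of a hit at level `lam`, stage `n`. -/
noncomputable def hitS (r : ℝ) (hr : 0 < r) (n lam : ℕ) (x : X) : ℝ :=
  max 0 (min 1 ((n:ℝ)*(1 - tau r hr lam x) + 3))

/-- First-hit weight. -/
noncomputable def Wt (r : ℝ) (hr : 0 < r) (n lam : ℕ) (x : X) : ℝ :=
  hitS r hr n lam x * ∏ k ∈ Finset.range lam, (1 - hitS r hr n k x)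

/-- The soft first-hit level. -/
noncomputable def qf (r : ℝ) (hr : 0 < r) (n : ℕ) (x : X) : ℝ :=
  ∑ lam ∈ Finset.range (n+1), (lam : ℝ) * Wt r hr n lam x

/-- Certificate factor: a definite hit. -/
noncomputable def fullf (r : ℝ) (hr : 0 < r) (n lam : ℕ) (x : X) : ℝ :=
  max 0 (min 1 ((n:ℝ)*(1 - tau r hr lam x) + 1))

/-- Certificate factor: a definite miss. -/
noncomputable def clearf (r : ℝ) (hr : 0 < r) (n lam : ℕ) (x : X) : ℝ :=
  max 0 (min 1 ((n:ℝ)*(tau r hr lam x - 1) - 3))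

/-- The scale certificate. -/
noncomputable def gam (r : ℝ) (hr : 0 < r) (n : ℕ) (x : X) : ℝ :=
  min 1 (∑ lam ∈ Finset.range (n+1),
    fullf r hr n lam x * ∏ k ∈ Finset.range lam, clearf r hr n k x)

/-- The scale approximation map. -/
noncomputable def zeta (e : Z → Z → unitInterval → Z) (F : X → X → Z) (c₀ : X)
    (r : ℝ) (hr : 0 < r) (n : ℕ) (x : X) : Z :=
  interp e (fun lam y => val e F c₀ r hr lam y) (qf r hr n) x

section Facts

variable {r : ℝ} (hr : 0 < r)

theorem tau_cont (n lam : ℕ) : Continuous (fun x : X => tau r hr lam x) :=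
  (delf_cont r hr lam).div_const _

theorem hitS_mem (n lam : ℕ) (x : X) : hitS r hr n lam x ∈ Icc (0:ℝ) 1 :=
  ⟨le_max_left _ _, max_le (by norm_num) (min_le_left _ _)⟩

theorem hitS_cont (n lam : ℕ) : Continuous (fun x : X => hitS r hr n lam x) :=
  continuous_const.max (continuous_const.min
    ((continuous_const.mul (continuous_const.sub (tau_cont hr n lam))).add continuous_const))

theorem Wt_nonneg (n lam : ℕ) (x : X) : 0 ≤ Wt r hr n lam x := by
  apply mul_nonneg (hitS_mem hr n lam x).1
  apply Finset.prod_nonneg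
  intro k _
  linarith [(hitS_mem hr n k x).2]

theorem Wt_cont (n lam : ℕ) : Continuous (fun x : X => Wt r hr n lam x) :=
  (hitS_cont hr n lam).mul (continuous_finset_prod _ (fun k _ =>
    continuous_const.sub (hitS_cont hr n k)))

theorem qf_cont (n : ℕ) : Continuous (fun x : X => qf r hr n x) :=
  continuous_finset_sum _ (fun lam _ => continuous_const.mul (Wt_cont hr n lam))

theorem qf_nonneg (n : ℕ) (x : X) : 0 ≤ qf r hr n x :=
  Finset.sum_nonneg (fun lam _ => mul_nonneg (Nat.cast_nonneg lam) (Wt_nonneg hr n lam x))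

theorem fullf_cont (n lam : ℕ) : Continuous (fun x : X => fullf r hr n lam x) :=
  continuous_const.max (continuous_const.min
    ((continuous_const.mul (continuous_const.sub (tau_cont hr n lam))).add continuous_const))

theorem clearf_cont (n lam : ℕ) : Continuous (fun x : X => clearf r hr n lam x) :=
  continuous_const.max (continuous_const.min
    ((continuous_const.mul ((tau_cont hr n lam).sub continuous_const)).sub continuous_const))

theorem gam_cont (n : ℕ) : Continuous (fun x : X => gam r hr n x) :=
  continuous_const.min (continuous_finset_sum _ (fun lam _ =>
    (fullf_cont hr n lam).mul (continuous_finset_prod _ (fun k _ => clearf_cont hr n k))))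

theorem gam_mem (n : ℕ) (x : X) : gam r hr n x ∈ Icc (0:ℝ) 1 := by
  constructor
  · apply le_min (by norm_num)
    apply Finset.sum_nonneg
    intro lam _
    apply mul_nonneg (le_max_left _ _)
    exact Finset.prod_nonneg (fun k _ => le_max_left _ _)
  · exact min_le_left _ _

theorem zeta_cont (he : Continuous fun p : Z × Z × unitInterval => e p.1 p.2.1 p.2.2)
    (he0 : ∀ x y, e x y 0 = x) (he1 : ∀ x y, e x y 1 = y)
    (F : X → X → Z) (hF : ∀ c, Continuous fun x => F x c) (c₀ : X) (n : ℕ) :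
    Continuous (fun x : X => zeta e F c₀ r hr n x) :=
  interp_cont e he he0 he1 _ (fun lam => val_cont e he he0 F hF c₀ r hr lam)
    _ (qf_cont hr n) (qf_nonneg hr n)

/-- Soundness of the certificate. -/
theorem zeta_sound (he0 : ∀ x y, e x y 0 = x) (he1 : ∀ x y, e x y 1 = y)
    (F : X → X → Z) (c₀ : X) {n : ℕ} (hn : 1 ≤ n) {x : X}
    (hγ : 0 < gam r hr n x) :
    ∃ c, dist x c ≤ 2*r ∧ zeta e F c₀ r hr n x = F x c := by
  -- extract a positive term
  have hsum : 0 < ∑ lam ∈ Finset.range (n+1),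
      fullf r hr n lam x * ∏ k ∈ Finset.range lam, clearf r hr n k x :=
    lt_of_lt_of_le hγ (min_le_right _ _)
  have hterm : ∃ lam ∈ Finset.range (n+1),
      0 < fullf r hr n lam x * ∏ k ∈ Finset.range lam, clearf r hr n k x := by
    by_contra hno
    push_neg at hno
    have : ∑ lam ∈ Finset.range (n+1),
        fullf r hr n lam x * ∏ k ∈ Finset.range lam, clearf r hr n k x ≤ 0 :=
      Finset.sum_nonpos hno
    linarith
  obtain ⟨lam, hlam_mem, hpos⟩ := hterm
  have hfull : 0 < fullf r hr n lam x := by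
    by_contra hle
    push_neg at hle
    have h1 : fullf r hr n lam x = 0 := le_antisymm hle (le_max_left _ _)
    rw [h1, zero_mul] at hpos
    exact lt_irrefl _ hpos
  have hclear : ∀ k < lam, 0 < clearf r hr n k x := by
    intro k hk
    by_contra hle
    push_neg at hle
    have h1 : clearf r hr n k x = 0 := le_antisymm hle (le_max_left _ _)
    have : (∏ k ∈ Finset.range lam, clearf r hr n k x) = 0 :=
      Finset.prod_eq_zero (Finset.mem_range.mpr hk) h1
    rw [this, mul_zero] at hpos
    exact lt_irrefl _ hpos
  -- translate the certificate into exact hit/miss information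
  have hn1 : (1:ℝ) ≤ (n:ℝ) := by exact_mod_cast hn
  have h1 : 0 < (n:ℝ)*(1 - tau r hr lam x) + 1 := by
    by_contra hle
    push_neg at hle
    have h0 : fullf r hr n lam x = 0 := by
      unfold fullf
      rw [max_eq_left (min_le_of_right_le hle)]
    rw [h0] at hfull
    exact lt_irrefl _ hfull
  have htau2 : tau r hr lam x < 2 := by nlinarith
  have hhit : hitS r hr n lam x = 1 := by
    have harg : (1:ℝ) ≤ (n:ℝ)*(1 - tau r hr lam x) + 3 := by linarith
    unfold hitS
    rw [min_eq_left harg, max_eq_right zero_le_one]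
  have hmiss : ∀ k < lam, hitS r hr n k x = 0 := by
    intro k hk
    have hc := hclear k hk
    have harg : 0 < (n:ℝ)*(tau r hr k x - 1) - 3 := by
      by_contra hle
      push_neg at hle
      have h0 : clearf r hr n k x = 0 := by
        unfold clearf
        rw [max_eq_left (min_le_of_right_le hle)]
      rw [h0] at hc
      exact lt_irrefl _ hc
    have hre : (n:ℝ)*(1 - tau r hr k x) + 3 = -((n:ℝ)*(tau r hr k x - 1) - 3) := by ring
    have harg2 : (n:ℝ)*(1 - tau r hr k x) + 3 ≤ 0 := by rw [hre]; linarith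
    unfold hitS
    rw [max_eq_left (min_le_of_right_le harg2)]
  have hWt : Wt r hr n lam x = 1 := by
    unfold Wt
    rw [hhit, one_mul]
    apply Finset.prod_eq_one
    intro k hk
    rw [hmiss k (Finset.mem_range.mp hk)]
    ring
  have hWt' : ∀ b ∈ Finset.range (n+1), b ≠ lam → (b:ℝ) * Wt r hr n b x = 0 := by
    intro b _ hbne
    rcases Nat.lt_or_ge b lam with hblt | hbge
    · rw [Wt, hmiss b hblt, zero_mul, mul_zero]
    · have hblt : lam < b := by omega
      have hzero : (∏ k ∈ Finset.range b, (1 - hitS r hr n k x)) = 0 := by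
        apply Finset.prod_eq_zero (Finset.mem_range.mpr hblt)
        rw [hhit]; ring
      rw [Wt, hzero, mul_zero, mul_zero]
  have hq : qf r hr n x = lam := by
    unfold qf
    rw [Finset.sum_eq_single lam hWt' (fun h => absurd hlam_mem h), hWt, mul_one]
  have hζ : zeta e F c₀ r hr n x = val e F c₀ r hr lam x := by
    unfold zeta
    rw [interp_eq_strip e he0 he1 _ _ lam x (le_of_eq hq.symm) (by rw [hq]; linarith)]
    unfold strip
    have hz : qf r hr n x - (lam:ℝ) ≤ 0 := by rw [hq]; simp
    rw [projIcc_of_le_left _ hz]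
    exact he0 _ _
  have hδ : delf r hr lam x < 2 * Wc r lam := by
    have h2 : delf r hr lam x / Wc r lam < 2 := htau2
    rw [div_lt_iff₀ (Wc_pos hr lam)] at h2
    linarith
  obtain ⟨c, hc1, hc2⟩ := val_sound e he1 F c₀ r hr lam x hδ
  exact ⟨c, hc1, by rw [hζ, hc2]⟩

/-- Eventually, the certificate is exactly `1` at every point. -/
theorem gam_eventually_one (x : X) : ∀ᶠ n : ℕ in atTop, gam r hr n x = 1 := by
  have hex : ∃ lam, delf r hr lam x ≤ Wc r lam := by
    obtain ⟨lam, hlam⟩ := cover r hr x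
    refine ⟨lam, ?_⟩
    have hmem : x ∈ (Lvl r hr lam : Set X) := mem_iUnion.mpr ⟨_, hlam⟩
    have h0 : delf r hr lam x = 0 := by
      rw [delf, if_pos ⟨x, hmem⟩]
      exact infDist_zero_of_mem hmem
    rw [h0]
    exact (Wc_pos hr lam).le
  classical
  set lam₀ := Nat.find hex with hlam₀
  have hfind : delf r hr lam₀ x ≤ Wc r lam₀ := Nat.find_spec hex
  have hmin : ∀ k < lam₀, Wc r k < delf r hr k x := fun k hk =>
    not_le.mp (Nat.find_min hex hk)
  have hfull : ∀ n : ℕ, fullf r hr n lam₀ x = 1 := by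
    intro n
    have hτ : tau r hr lam₀ x ≤ 1 := by
      rw [tau, div_le_one (Wc_pos hr lam₀)]
      exact hfind
    have hnn : (0:ℝ) ≤ (n:ℝ)*(1 - tau r hr lam₀ x) :=
      mul_nonneg (Nat.cast_nonneg n) (by linarith)
    have harg : (1:ℝ) ≤ (n:ℝ)*(1 - tau r hr lam₀ x) + 1 := by linarith
    unfold fullf
    rw [min_eq_left harg, max_eq_right zero_le_one]
  have hclear : ∀ k, k < lam₀ → ∀ᶠ n : ℕ in atTop, clearf r hr n k x = 1 := by
    intro k hk
    have hτ : 1 < tau r hr k x := by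
      rw [tau]
      exact (one_lt_div (Wc_pos hr k)).mpr (hmin k hk)
    obtain ⟨N, hN⟩ := exists_nat_gt (4 / (tau r hr k x - 1))
    rw [eventually_atTop]
    refine ⟨N, fun n hn => ?_⟩
    have h4 : 4 / (tau r hr k x - 1) < (n:ℝ) :=
      lt_of_lt_of_le hN (by exact_mod_cast hn)
    have h5 : (4:ℝ) < (n:ℝ) * (tau r hr k x - 1) := by
      rw [div_lt_iff₀ (by linarith)] at h4
      linarith
    have harg : (1:ℝ) ≤ (n:ℝ)*(tau r hr k x - 1) - 3 := by linarith
    unfold clearf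
    rw [min_eq_left harg, max_eq_right zero_le_one]
  have hall : ∀ᶠ n : ℕ in atTop, ∀ k ∈ Finset.range lam₀, clearf r hr n k x = 1 := by
    rw [Filter.eventually_all_finset]
    intro k hk
    exact hclear k (Finset.mem_range.mp hk)
  filter_upwards [hall, Filter.eventually_ge_atTop lam₀] with n hn hn'
  have hterm : fullf r hr n lam₀ x * ∏ k ∈ Finset.range lam₀, clearf r hr n k x = 1 := by
    rw [hfull n, one_mul]
    exact Finset.prod_eq_one hn
  have hone : (1:ℝ) ≤ ∑ lam ∈ Finset.range (n+1),
      fullf r hr n lam x * ∏ k ∈ Finset.range lam, clearf r hr n k x := by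
    rw [← hterm]
    apply Finset.single_le_sum
      (f := fun lam => fullf r hr n lam x * ∏ k ∈ Finset.range lam, clearf r hr n k x)
    · intro i _
      exact mul_nonneg (le_max_left _ _) (Finset.prod_nonneg (fun k _ => le_max_left _ _))
    · exact Finset.mem_range.mpr (by omega)
  unfold gam
  rw [min_eq_left hone]

end Facts

end Scale

section Final

variable (e : Z → Z → unitInterval → Z)

/-- Tube lemma (same as in `DiagAux`). -/
theorem tube' (he : Continuous fun p : Z × Z × unitInterval => e p.1 p.2.1 p.2.2)
    (heid : ∀ x t, e x x t = x) (z : Z) {ε : ℝ} (hε : 0 < ε) :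
    ∃ δ > 0, ∀ (p q : Z) (t : unitInterval),
      dist p z < δ → dist q z < δ → dist (e p q t) z < ε := by
  set U : Set (Z × Z × unitInterval) := {w | dist (e w.1 w.2.1 w.2.2) z < ε} with hU
  have hUopen : IsOpen U :=
    isOpen_lt (he.dist continuous_const) continuous_const
  have hsub : ({z} : Set Z) ×ˢ (({z} : Set Z) ×ˢ (univ : Set unitInterval)) ⊆ U := by
    rintro ⟨p, q, t⟩ ⟨hp, hq, -⟩
    simp only [mem_singleton_iff] at hp hq
    subst hp; subst hq
    simpa [hU, heid] using hε
  obtain ⟨V, W, hVopen, hWopen, hzV, hzW, hVW⟩ :=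
    generalized_tube_lemma isCompact_singleton
      (isCompact_singleton.prod isCompact_univ) hUopen hsub
  obtain ⟨V₂, W₂, hV₂open, hW₂open, hzV₂, hW₂, hVW₂⟩ :=
    generalized_tube_lemma isCompact_singleton isCompact_univ hWopen hzW
  have hzmem : z ∈ V ∩ V₂ := ⟨hzV rfl, hzV₂ rfl⟩
  obtain ⟨δ, hδ, hball⟩ := Metric.mem_nhds_iff.mp ((hVopen.inter hV₂open).mem_nhds hzmem)
  refine ⟨δ, hδ, fun p q t hp hq => ?_⟩
  have hpV : p ∈ V := (hball (mem_ball.mpr hp)).1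
  have hqV₂ : q ∈ V₂ := (hball (mem_ball.mpr hq)).2
  have hqt : (q, t) ∈ W := hVW₂ (mem_prod.mpr ⟨hqV₂, hW₂ (mem_univ t)⟩)
  have hmemVW : ((p, (q, t)) : Z × Z × unitInterval) ∈ V ×ˢ W := mem_prod.mpr ⟨hpV, hqt⟩
  exact hVW hmemVW

/-- The converse direction: the diagonal of a separately continuous map is of the
first Baire class. -/
theorem exists_baire_seq (he : Continuous fun p : Z × Z × unitInterval => e p.1 p.2.1 p.2.2)
    (he0 : ∀ x y, e x y 0 = x) (he1 : ∀ x y, e x y 1 = y) (heid : ∀ x t, e x x t = x)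
    (g : X → Z) (f : X × X → Z) (hdiag : ∀ x, f (x, x) = g x)
    (hcf : ∀ y, Continuous fun x => f (x, y)) (hcs : ∀ x, Continuous fun y => f (x, y)) :
    ∃ gs : ℕ → X → Z, (∀ n, Continuous (gs n)) ∧
      ∀ x, Tendsto (fun n => gs n x) atTop (nhds (g x)) := by
  rcases isEmpty_or_nonempty X with hX | hX
  · refine ⟨fun n x => g x, fun n => ?_, fun x => (hX.false x).elim⟩
    have : ∀ s : Set X, IsOpen s := by
      intro s
      rw [Set.eq_empty_of_isEmpty s]
      exact isOpen_empty
    exact ⟨fun s _ => this _⟩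
  · obtain ⟨c₀⟩ := hX
    set F : X → X → Z := fun x c => f (x, c) with hFdef
    have hF : ∀ c, Continuous fun x => F x c := fun c => hcf c
    have hrs : ∀ s : ℕ, (0:ℝ) < (1/2)^s := fun s => by positivity
    set Gm : ℕ → ℕ → X → ℝ := fun s n x => gam ((1/2)^s) (hrs s) n x with hGm
    set Zt : ℕ → ℕ → X → Z := fun s n x => zeta e F c₀ ((1/2)^s) (hrs s) n x with hZt
    set hfun : ℕ → X → ℝ := fun n x =>
      ∑ m ∈ Finset.range (n+1), ∏ k ∈ Finset.range (m+1), Gm k n x with hhfun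
    have hGm01 : ∀ s n x, Gm s n x ∈ Icc (0:ℝ) 1 := fun s n x => gam_mem (hrs s) n x
    have hPnonneg : ∀ n x m, 0 ≤ ∏ k ∈ Finset.range (m+1), Gm k n x := fun n x m =>
      Finset.prod_nonneg (fun k _ => (hGm01 k n x).1)
    have hPle1 : ∀ n x m, (∏ k ∈ Finset.range (m+1), Gm k n x) ≤ 1 := fun n x m =>
      Finset.prod_le_one (fun k _ => (hGm01 k n x).1) (fun k _ => (hGm01 k n x).2)
    have hhnonneg : ∀ n x, 0 ≤ hfun n x := fun n x =>
      Finset.sum_nonneg (fun m _ => hPnonneg n x m)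
    have hhcont : ∀ n, Continuous (hfun n) := fun n =>
      continuous_finset_sum _ (fun m _ => continuous_finset_prod _ (fun k _ => gam_cont (hrs k) n))
    refine ⟨fun n x => interp e (fun m y => Zt (m - 1) n y) (hfun n) x, fun n => ?_, fun x => ?_⟩
    · exact interp_cont e he he0 he1 _
        (fun m => zeta_cont (e := e) (hr := hrs (m-1)) (he := he) (he0 := he0) (he1 := he1)
          (F := F) (hF := hF) (c₀ := c₀) (n := n)) _ (hhcont n) (hhnonneg n)
    · -- pointwise convergence
      rw [Metric.tendsto_nhds]
      intro ε hε
      obtain ⟨ρ, hρ, htube⟩ := tube' e he heid (g x) hε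
      have hminpos : 0 < min ρ ε := lt_min hρ hε
      obtain ⟨ρ₀, hρ₀, hcont⟩ := Metric.continuous_iff.mp (hcs x) x _ hminpos
      obtain ⟨M, hM⟩ := exists_pow_lt_of_lt_one (show (0:ℝ) < ρ₀/4 by linarith)
        (by norm_num : (1/2:ℝ) < 1)
      -- soundness of a certified scale
      have hsound : ∀ (k n : ℕ), 1 ≤ n → 0 < Gm k n x → M ≤ k →
          dist (Zt k n x) (g x) < min ρ ε := by
        intro k n hn hpos hMk
        obtain ⟨c, hc1, hc2⟩ := zeta_sound (e := e) (hr := hrs k) (he0 := he0) (he1 := he1)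
          (F := F) (c₀ := c₀) (hn := hn) (hγ := hpos)
        have hdist : dist c x < ρ₀ := by
          have h1 : (2:ℝ)*(1/2)^k ≤ 2*(1/2)^M := by
            have := pow_le_pow_of_le_one (by norm_num : (0:ℝ) ≤ 1/2)
              (by norm_num : (1/2:ℝ) ≤ 1) hMk
            linarith
          rw [dist_comm]
          calc dist x c ≤ 2*(1/2)^k := hc1
            _ ≤ 2*(1/2)^M := h1
            _ < ρ₀ := by linarith
        have hc3 := hcont c hdist
        rw [hdiag x] at hc3
        show dist (zeta e F c₀ ((1/2)^k) (hrs k) n x) (g x) < min ρ ε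
        rw [hc2]
        exact hc3
      -- eventually the parameter is large
      have hbig : ∀ᶠ n : ℕ in atTop, (M + 4 : ℝ) ≤ hfun n x := by
        have hev : ∀ᶠ n : ℕ in atTop, ∀ k ∈ Finset.range (M+4), Gm k n x = 1 := by
          rw [Filter.eventually_all_finset]
          intro k _
          exact gam_eventually_one (hrs k) x
        filter_upwards [hev, Filter.eventually_ge_atTop (M+4)] with n hn hn'
        have hPone : ∀ m ∈ Finset.range (M+4), (∏ k ∈ Finset.range (m+1), Gm k n x) = 1 := by
          intro m hm
          apply Finset.prod_eq_one
          intro k hk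
          exact hn k (Finset.mem_range.mpr (by
            have := Finset.mem_range.mp hm
            have := Finset.mem_range.mp hk
            omega))
        calc (M + 4 : ℝ) = ∑ m ∈ Finset.range (M+4), 1 := by simp
          _ = ∑ m ∈ Finset.range (M+4), ∏ k ∈ Finset.range (m+1), Gm k n x := by
              apply Finset.sum_congr rfl
              intro m hm
              rw [hPone m hm]
          _ ≤ hfun n x := by
              apply Finset.sum_le_sum_of_subset_of_nonneg
              · intro m hm
                rw [Finset.mem_range] at hm ⊢
                omega
              · intro m _ _
                exact hPnonneg n x m
      filter_upwards [hbig, Filter.eventually_ge_atTop 1] with n hn hn1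
      -- analysis at stage n
      set m := ⌊hfun n x⌋₊ with hm
      have hmge : M + 4 ≤ m := by
        rw [hm]
        exact Nat.le_floor (by exact_mod_cast hn)
      have hfl : (m:ℝ) ≤ hfun n x := Nat.floor_le (hhnonneg n x)
      -- positivity of certificates below a threshold
      have hcert : ∀ j : ℕ, (j:ℝ) < hfun n x → ∀ k ≤ j, 0 < Gm k n x := by
        intro j hj k hk
        by_contra hle
        push_neg at hle
        have hGz : Gm k n x = 0 := le_antisymm hle (hGm01 k n x).1
        have hPz : ∀ i, k ≤ i → (∏ l ∈ Finset.range (i+1), Gm l n x) = 0 := by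
          intro i hi
          exact Finset.prod_eq_zero (Finset.mem_range.mpr (by omega)) hGz
        have hhle : hfun n x ≤ (j:ℝ) := by
          rw [hhfun]
          calc ∑ i ∈ Finset.range (n+1), ∏ l ∈ Finset.range (i+1), Gm l n x
              ≤ ∑ i ∈ Finset.range (n+1), (if i < k then 1 else 0 : ℝ) := by
                apply Finset.sum_le_sum
                intro i _
                by_cases hik : i < k
                · rw [if_pos hik]; exact hPle1 n x i
                · rw [if_neg hik]
                  rw [hPz i (by omega)]
            _ ≤ (k : ℝ) := by
                rw [Finset.sum_boole]
                have hsub : (Finset.range (n+1)).filter (fun i => i < k) ⊆ Finset.range k := by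
                  intro i hi
                  rw [Finset.mem_range]
                  exact (Finset.mem_filter.mp hi).2
                have hcard := Finset.card_le_card hsub
                rw [Finset.card_range] at hcard
                exact_mod_cast hcard
            _ ≤ (j : ℝ) := by exact_mod_cast hk
        linarith
      -- case analysis on the fractional part
      rcases eq_or_lt_of_le hfl with heq | hlt
      · have hint : interp e (fun m' y => Zt (m' - 1) n y) (hfun n) x = Zt (m - 1) n x := by
          rw [interp, ← hm]
          have h0 : hfun n x - (m:ℝ) ≤ 0 := by linarith
          rw [projIcc_of_le_left _ h0]
          exact he0 _ _
        rw [hint]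
        have hlt' : ((m - 1 : ℕ):ℝ) < hfun n x := by
          have h1 : m - 1 < m := by omega
          have h2 : ((m-1 : ℕ):ℝ) < (m:ℝ) := by exact_mod_cast h1
          linarith
        have hcm : 0 < Gm (m-1) n x := hcert (m-1) hlt' (m-1) (le_refl _)
        have hfin := hsound (m-1) n hn1 hcm (by omega)
        calc dist (Zt (m-1) n x) (g x) < min ρ ε := hfin
          _ ≤ ε := min_le_right _ _
      · have h1 := hsound (m-1) n hn1 (hcert m hlt (m-1) (by omega)) (by omega)
        have h2 := hsound m n hn1 (hcert m hlt m (le_refl m)) (by omega)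
        have hint : interp e (fun m' y => Zt (m' - 1) n y) (hfun n) x =
            e (Zt (m-1) n x) (Zt m n x)
              (projIcc 0 1 zero_le_one (hfun n x - (m:ℝ))) := by
          rw [interp, ← hm]
          simp only [Nat.add_sub_cancel]
        rw [hint]
        exact htube _ _ _ (lt_of_lt_of_le h1 (min_le_left _ _))
          (lt_of_lt_of_le h2 (min_le_left _ _))

end Final

end DiagConv


/-- Theorem 3.3 (case (4)): for a metrizable space `X` and a metrizable equiconnected
space `(Z, e)`, a mapping `g : X → Z` is of the first Baire class if and only if it is
the diagonal of a separately continuous mapping `f : X² → Z`. -/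
theorem stmt_3 {X Z : Type*} [TopologicalSpace X] [TopologicalSpace.MetrizableSpace X]
    [TopologicalSpace Z] [TopologicalSpace.MetrizableSpace Z]
    (e : Z → Z → unitInterval → Z)
    (he : Continuous fun p : Z × Z × unitInterval => e p.1 p.2.1 p.2.2)
    (he0 : ∀ x y, e x y 0 = x) (he1 : ∀ x y, e x y 1 = y)
    (heid : ∀ x t, e x x t = x)
    (g : X → Z) :
    (∃ gs : ℕ → X → Z, (∀ n, Continuous (gs n)) ∧
        ∀ x, Tendsto (fun n => gs n x) atTop (nhds (g x))) ↔
    (∃ f : X × X → Z, (∀ x, f (x, x) = g x) ∧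
        (∀ y, Continuous fun x => f (x, y)) ∧
        (∀ x, Continuous fun y => f (x, y))) := by
  letI : MetricSpace X := TopologicalSpace.metrizableSpaceMetric X
  letI : MetricSpace Z := TopologicalSpace.metrizableSpaceMetric Z
  constructor
  · rintro ⟨gs, hc, htd⟩
    exact DiagAux.exists_sep_cont e he he0 he1 heid g gs hc htd
  · rintro ⟨f, hdiag, hcf, hcs⟩
    exact DiagConv.exists_baire_seq e he he0 he1 heid g f hdiag hcf hcs
end

section
/- Let X be a topological space, Y and Z metric spaces, g : X → Y a continuous mapping and f : X × Y → Z a mapping such that for every fixed y ∈ Y the map x ↦ f(x,y) is continuous, and such that for every x ∈ X the map y ↦ f(x,y) is pointwise Lipschitz at the point g(x) (i.e. sup_{y ≠ g(x)} d_Z(f(x,y), f(x,g(x)))/d_Y(y, g(x)) < ∞). Then the mapping h : X → Z, h(x) = f(x, g(x)), is σ-continuous. -/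
open Set Filter Topology

/-- Theorem 4.3: if `f : X × Y → Z` is continuous in the first variable and, for every
`x`, the map `y ↦ f(x, y)` is pointwise Lipschitz at the point `g(x)`, then the mapping
`h(x) = f(x, g(x))` is σ-continuous. -/
theorem stmt_5 {X Y Z : Type*} [TopologicalSpace X] [MetricSpace Y] [MetricSpace Z]
    (g : X → Y) (hg : Continuous g)
    (f : X → Y → Z)
    (hf : ∀ y, Continuous fun x => f x y)
    (hlip : ∀ x, ∃ C : ℝ, ∀ y, dist (f x y) (f x (g x)) ≤ C * dist y (g x)) :
    ∃ A : ℕ → Set X, (∀ n, IsClosed (A n)) ∧ (⋃ n, A n) = univ ∧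
      ∀ n, ContinuousOn (fun x => f x (g x)) (A n) := by
  refine ⟨fun n => {x | ∀ y y', dist (f x y) (f x y') ≤
      n * (dist y (g x) + dist y' (g x))}, ?_, ?_, ?_⟩
  · intro n
    show IsClosed {x | ∀ y y', dist (f x y) (f x y') ≤ n * (dist y (g x) + dist y' (g x))}
    have : {x | ∀ y y', dist (f x y) (f x y') ≤ n * (dist y (g x) + dist y' (g x))}
        = ⋂ (y : Y) (y' : Y),
          {x | dist (f x y) (f x y') ≤ n * (dist y (g x) + dist y' (g x))} := by
      ext x; simp [Set.mem_iInter]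
    rw [this]
    refine isClosed_iInter fun y => isClosed_iInter fun y' => isClosed_le ?_ ?_
    · exact Continuous.dist (hf y) (hf y')
    · exact continuous_const.mul (((continuous_const.dist hg)).add
        (continuous_const.dist hg))
  · ext x
    simp only [mem_iUnion, mem_univ, iff_true, mem_setOf_eq]
    obtain ⟨C, hC⟩ := hlip x
    refine ⟨⌈C⌉₊, fun y y' => ?_⟩
    calc dist (f x y) (f x y') ≤ dist (f x y) (f x (g x)) + dist (f x (g x)) (f x y') := dist_triangle _ _ _
    _ ≤ C * dist y (g x) + C * dist y' (g x) := by
        have := hC y'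
        rw [dist_comm] at this
        exact add_le_add (hC y) this
    _ = C * (dist y (g x) + dist y' (g x)) := by ring
    _ ≤ ⌈C⌉₊ * (dist y (g x) + dist y' (g x)) := by
        apply mul_le_mul_of_nonneg_right (Nat.le_ceil C)
        positivity
  · intro n x₀ hx₀
    have key : Tendsto (fun x => dist (f x (g x)) (f x₀ (g x₀))) (𝓝[{x | ∀ y y', dist (f x y) (f x y') ≤ n * (dist y (g x) + dist y' (g x))}] x₀) (𝓝 0) := by
      have t1 : Tendsto (fun x => (n : ℝ) * (dist (g x) (g x) + dist (g x₀) (g x)))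
          (𝓝 x₀) (𝓝 0) := by
        have : Tendsto (fun x => (n : ℝ) * (dist (g x) (g x) + dist (g x₀) (g x)))
            (𝓝 x₀) (𝓝 ((n : ℝ) * (dist (g x₀) (g x₀) + dist (g x₀) (g x₀)))) :=
          tendsto_const_nhds.mul ((hg.dist hg).tendsto x₀ |>.add
            ((continuous_const.dist hg).tendsto x₀))
        simpa using this
      have t2 : Tendsto (fun x => dist (f x (g x₀)) (f x₀ (g x₀))) (𝓝 x₀) (𝓝 0) := by
        have := (hf (g x₀)).tendsto x₀
        rwa [tendsto_iff_dist_tendsto_zero] at this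
      have t3 := (t1.add t2).mono_left (nhdsWithin_le_nhds (s := {x | ∀ y y', dist (f x y) (f x y') ≤ n * (dist y (g x) + dist y' (g x))}))
      rw [add_zero] at t3
      refine squeeze_zero' (Eventually.of_forall fun x => dist_nonneg) ?_ t3
      filter_upwards [self_mem_nhdsWithin] with x hx
      calc dist (f x (g x)) (f x₀ (g x₀))
          ≤ dist (f x (g x)) (f x (g x₀)) + dist (f x (g x₀)) (f x₀ (g x₀)) :=
            dist_triangle _ _ _
        _ ≤ (n : ℝ) * (dist (g x) (g x) + dist (g x₀) (g x))
              + dist (f x (g x₀)) (f x₀ (g x₀)) :=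
            add_le_add (hx (g x) (g x₀)) le_rfl
    exact tendsto_iff_dist_tendsto_zero.mpr key
end

section
/- Let X and Z be metric spaces and let f : X² → Z be a mapping such that for every fixed y ∈ X the map x ↦ f(x,y) is continuous, and such that for every x₀ ∈ X the map y ↦ f(x₀,y) is pointwise Lipschitz at the point x₀. Then the diagonal mapping g : X → Z, g(x) = f(x,x), is σ-continuous. -/
open Set Filter Topology

/-- Corollary 5.1: if `f : X² → Z` is continuous in the first variable and, for every
`x₀`, the map `y ↦ f(x₀, y)` is pointwise Lipschitz at `x₀`, then the diagonal mapping
`g(x) = f(x, x)` is σ-continuous. -/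
theorem stmt_6 {X Z : Type*} [MetricSpace X] [MetricSpace Z]
    (f : X → X → Z)
    (hf : ∀ y, Continuous fun x => f x y)
    (hlip : ∀ x₀, ∃ C : ℝ, ∀ y, dist (f x₀ y) (f x₀ x₀) ≤ C * dist y x₀) :
    ∃ A : ℕ → Set X, (∀ n, IsClosed (A n)) ∧ (⋃ n, A n) = univ ∧
      ∀ n, ContinuousOn (fun x => f x x) (A n) := by
  refine ⟨fun n => {x | ∀ y, dist (f x y) (f x x) ≤ n * dist y x}, ?_, ?_, ?_⟩
  · intro n
    apply IsSeqClosed.isClosed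
    intro u x hu hux
    have hdiag : Tendsto (fun k => f (u k) (u k)) atTop (𝓝 (f x x)) := by
      rw [tendsto_iff_dist_tendsto_zero]
      have hb : ∀ k, dist (f (u k) (u k)) (f x x)
          ≤ (n : ℝ) * dist x (u k) + dist (f (u k) x) (f x x) := by
        intro k
        calc dist (f (u k) (u k)) (f x x)
            ≤ dist (f (u k) (u k)) (f (u k) x) + dist (f (u k) x) (f x x) :=
              dist_triangle _ _ _
          _ ≤ (n : ℝ) * dist x (u k) + dist (f (u k) x) (f x x) := by
              have := hu k x
              rw [dist_comm]
              linarith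
      have h1 : Tendsto (fun k => (n : ℝ) * dist x (u k)) atTop (𝓝 0) := by
        have : Tendsto (fun k => dist x (u k)) atTop (𝓝 (dist x x)) :=
          Tendsto.dist tendsto_const_nhds hux
        simpa using (tendsto_const_nhds (x := (n : ℝ))).mul this
      have h2 : Tendsto (fun k => dist (f (u k) x) (f x x)) atTop (𝓝 0) := by
        have : Tendsto (fun k => f (u k) x) atTop (𝓝 (f x x)) :=
          ((hf x).tendsto x).comp hux
        rw [tendsto_iff_dist_tendsto_zero] at this
        exact this
      have hsum : Tendsto (fun k => (n : ℝ) * dist x (u k)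
          + dist (f (u k) x) (f x x)) atTop (𝓝 0) := by
        simpa using h1.add h2
      exact squeeze_zero (fun k => dist_nonneg) hb hsum
    intro y
    have h1 : Tendsto (fun k => dist (f (u k) y) (f (u k) (u k))) atTop
        (𝓝 (dist (f x y) (f x x))) :=
      Tendsto.dist (((hf y).tendsto x).comp hux) hdiag
    have h2 : Tendsto (fun k => (n : ℝ) * dist y (u k)) atTop (𝓝 ((n : ℝ) * dist y x)) :=
      tendsto_const_nhds.mul (Tendsto.dist tendsto_const_nhds hux)
    exact le_of_tendsto_of_tendsto' h1 h2 (fun k => hu k y)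
  · rw [eq_univ_iff_forall]
    intro x
    obtain ⟨C, hC⟩ := hlip x
    refine mem_iUnion.2 ⟨⌈C⌉₊, fun y => ?_⟩
    exact (hC y).trans (mul_le_mul_of_nonneg_right (Nat.le_ceil C) dist_nonneg)
  · intro n x hx
    rw [ContinuousWithinAt, tendsto_iff_dist_tendsto_zero]
    have hb : ∀ x' ∈ {x | ∀ y, dist (f x y) (f x x) ≤ n * dist y x},
        dist (f x' x') (f x x) ≤ (n : ℝ) * dist x x' + dist (f x' x) (f x x) := by
      intro x' hx'
      calc dist (f x' x') (f x x)
          ≤ dist (f x' x') (f x' x) + dist (f x' x) (f x x) := dist_triangle _ _ _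
        _ ≤ (n : ℝ) * dist x x' + dist (f x' x) (f x x) := by
            have := hx' x
            rw [dist_comm]
            linarith
    have h1 : Tendsto (fun x' => (n : ℝ) * dist x x' + dist (f x' x) (f x x))
        (𝓝[{x | ∀ y, dist (f x y) (f x x) ≤ n * dist y x}] x) (𝓝 0) := by
      have ha : Tendsto (fun x' : X => (n : ℝ) * dist x x') (𝓝 x) (𝓝 0) := by
        have : Tendsto (fun x' : X => dist x x') (𝓝 x) (𝓝 (dist x x)) :=
          Tendsto.dist tendsto_const_nhds tendsto_id
        simpa using (tendsto_const_nhds (x := (n : ℝ))).mul this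
      have hb2 : Tendsto (fun x' : X => dist (f x' x) (f x x)) (𝓝 x) (𝓝 0) := by
        have : Tendsto (fun x' => f x' x) (𝓝 x) (𝓝 (f x x)) := (hf x).tendsto x
        rw [tendsto_iff_dist_tendsto_zero] at this
        exact this
      have := ha.add hb2
      simpa using this.mono_left nhdsWithin_le_nhds
    exact squeeze_zero' (eventually_nhdsWithin_of_forall (fun x' _ => dist_nonneg))
      (eventually_nhdsWithin_of_forall hb) h1
end

section
/- Let X be a metric space and G an open subset of X² such that the diagonal Δ = {(x,x) : x ∈ X} is contained in G. Then there exists a continuous function g : X → (0,+∞) such that {(x,y) ∈ X² : d_X(x,y) < g(x)} ⊆ G. -/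
open Set Filter Topology

/-- Lemma 4.6: if `G ⊆ X²` is open and contains the diagonal, then there is a
continuous positive function `g : X → (0, +∞)` such that
`{(x, y) : d(x, y) < g(x)} ⊆ G`. -/
theorem stmt_7 {X : Type*} [MetricSpace X]
    (G : Set (X × X)) (hG : IsOpen G) (hΔ : ∀ x : X, (x, x) ∈ G) :
    ∃ g : X → ℝ, Continuous g ∧ (∀ x, 0 < g x) ∧
      {p : X × X | dist p.1 p.2 < g p.1} ⊆ G := by
  set S : X → Set ℝ := fun x => {r : ℝ | r ≤ 1 ∧ Metric.ball x r ×ˢ Metric.ball x r ⊆ G}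
    with hS
  have hne : ∀ x, (S x).Nonempty := by
    intro x
    refine ⟨0, by norm_num, ?_⟩
    simp [Metric.ball_eq_empty.2 le_rfl]
  have hbdd : ∀ x, BddAbove (S x) := fun x => ⟨1, fun r hr => hr.1⟩
  set s : X → ℝ := fun x => sSup (S x) with hs
  have hnonneg : ∀ x, 0 ≤ s x := fun x =>
    le_csSup (hbdd x) (by refine ⟨by norm_num, ?_⟩; simp [Metric.ball_eq_empty.2 le_rfl])
  have hpos : ∀ x, 0 < s x := by
    intro x
    obtain ⟨ε, hε, hball⟩ : ∃ ε > 0, Metric.ball x ε ×ˢ Metric.ball x ε ⊆ G := by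
      rcases isOpen_prod_iff.1 hG x x (hΔ x) with ⟨u, v, hu, hv, hxu, hxv, huv⟩
      rcases Metric.mem_nhds_iff.1 (inter_mem (hu.mem_nhds hxu) (hv.mem_nhds hxv)) with
        ⟨ε, hε, hsub⟩
      exact ⟨ε, hε, fun p hp => huv ⟨(hsub hp.1).1, (hsub hp.2).2⟩⟩
    have : min ε 1 ∈ S x := by
      refine ⟨min_le_right _ _, fun p hp => hball ⟨?_, ?_⟩⟩
      · exact Metric.ball_subset_ball (min_le_left _ _) hp.1
      · exact Metric.ball_subset_ball (min_le_left _ _) hp.2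
    exact lt_of_lt_of_le (lt_min hε one_pos) (le_csSup (hbdd x) this)
  have hlip : ∀ x y : X, s x - s y ≤ dist x y := by
    intro x y
    rw [sub_le_iff_le_add]
    refine csSup_le (hne x) ?_
    intro r hr
    rcases le_or_gt r (dist x y) with h | h
    · linarith [hnonneg y]
    · have : r - dist x y ∈ S y := by
        refine ⟨by linarith [hr.1, dist_nonneg (x := x) (y := y)], ?_⟩
        intro p hp
        refine hr.2 ⟨?_, ?_⟩
        · have := hp.1
          simp only [Metric.mem_ball] at this ⊢
          calc dist p.1 x ≤ dist p.1 y + dist y x := dist_triangle _ _ _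
            _ < (r - dist x y) + dist y x := by linarith
            _ = r := by rw [dist_comm y x]; ring
        · have := hp.2
          simp only [Metric.mem_ball] at this ⊢
          calc dist p.2 x ≤ dist p.2 y + dist y x := dist_triangle _ _ _
            _ < (r - dist x y) + dist y x := by linarith
            _ = r := by rw [dist_comm y x]; ring
      have := le_csSup (hbdd y) this
      linarith
  refine ⟨fun x => s x / 2, ?_, fun x => by linarith [hpos x], ?_⟩
  · have : LipschitzWith 1 s := by
      refine LipschitzWith.of_dist_le_mul fun x y => ?_
      rw [Real.dist_eq, NNReal.coe_one, one_mul, abs_sub_le_iff]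
      exact ⟨hlip x y, by rw [dist_comm]; exact hlip y x⟩
    exact (this.continuous).div_const 2
  · rintro ⟨x, y⟩ hp
    simp only [mem_setOf_eq] at hp
    have h2 : dist x y < s x := by linarith [hpos x]
    obtain ⟨r, hr, hlt⟩ := exists_lt_of_lt_csSup (hne x) h2
    exact hr.2 ⟨Metric.mem_ball_self (lt_of_le_of_lt dist_nonneg hlt),
      Metric.mem_ball.2 (by rwa [dist_comm])⟩
end

section
/- Let X be a metric space and (H_n)_{n≥1} a sequence of open subsets of X² such that the diagonal Δ = {(x,x) : x ∈ X} is contained in H_n for every n ≥ 1. Then there exist sequences (G_n)_{n≥1} of open subsets of X², (F_n)_{n≥1} of closed subsets of X², a sequence (φ_n : X² → [0,1])_{n≥1} of separately Lipschitz functions, and a sequence (δ_n : X → (0,+∞))_{n≥1} of positive functions such that: (1) Δ ⊆ G_{n+1} ⊆ F_n ⊆ G_n ⊆ H_n for every n ≥ 1; (2) X² \ G_n ⊆ φ_n^{-1}(0) and F_n ⊆ φ_n^{-1}(1) for every n ≥ 1; (3) d_X(u,v) ≥ δ_n(x) for every x ∈ X, n ≥ 1 and u,v ∈ X with (x,u)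 ∈ G_{n+1} and (x,v) ∈ X² \ F_n. -/
open Set Filter Topology NNReal
open Metric


section Aux
variable {X : Type*} [MetricSpace X]

open Classical in
noncomputable def auxRad (S : Set (X × X)) (x : X) : ℝ :=
  if Sᶜ = ∅ then 1 else min 1 (Metric.infDist (x, x) Sᶜ)

lemma auxRad_le_one (S : Set (X × X)) (x : X) : auxRad S x ≤ 1 := by
  classical
  unfold auxRad; split_ifs <;> simp

lemma auxRad_pos {S : Set (X × X)} (hS : IsOpen S) (hd : ∀ x : X, (x, x) ∈ S) (x : X) :
    0 < auxRad S x := by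
  classical
  unfold auxRad; split_ifs with h
  · norm_num
  · have hne : Sᶜ.Nonempty := nonempty_iff_ne_empty.2 h
    have hx : (x, x) ∉ Sᶜ := by simp [hd x]
    have := (hS.isClosed_compl.notMem_iff_infDist_pos hne).1 hx
    exact lt_min one_pos this

lemma auxRad_lip (S : Set (X × X)) : LipschitzWith 1 (auxRad S) := by
  classical
  unfold auxRad; split_ifs with h
  · exact (LipschitzWith.const 1).weaken zero_le_one
  · have h1 : LipschitzWith 1 (fun x : X => ((x, x) : X × X)) := by
      apply LipschitzWith.of_dist_le_mul
      intro x y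
      rw [Prod.dist_eq]
      simp
    simpa using ((lipschitz_infDist_pt Sᶜ).comp h1).const_min 1

lemma auxRad_spec {S : Set (X × X)} {x y : X} (h : dist x y < auxRad S x) : (x, y) ∈ S := by
  by_contra hxy
  unfold auxRad at h
  split_ifs at h with hc
  · rw [eq_empty_iff_forall_notMem] at hc
    exact hc (x, y) hxy
  · have h1 : infDist (x, x) Sᶜ ≤ dist ((x, x) : X × X) (x, y) := infDist_le_dist_of_mem hxy
    have h2 : dist ((x, x) : X × X) (x, y) = dist x y := by
      rw [Prod.dist_eq]; simp [dist_self, max_eq_right dist_nonneg]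
    have := min_le_right 1 (infDist (x, x) Sᶜ)
    linarith

noncomputable def auxTau (H : ℕ → Set (X × X)) : ℕ → X → ℝ
  | 0 => auxRad (H 0)
  | n + 1 => fun x => min (auxTau H n x) (auxRad (H (n + 1)) x)

lemma auxTau_lip (H : ℕ → Set (X × X)) : ∀ n, LipschitzWith 1 (auxTau H n)
  | 0 => auxRad_lip _
  | n + 1 => by simpa [auxTau] using (auxTau_lip H n).min (auxRad_lip (H (n + 1)))

lemma auxTau_pos {H : ℕ → Set (X × X)} (hHopen : ∀ n, IsOpen (H n))
    (hΔ : ∀ n, ∀ x : X, (x, x) ∈ H n) : ∀ n x, 0 < auxTau H n x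
  | 0, x => auxRad_pos (hHopen 0) (hΔ 0) x
  | n + 1, x => lt_min (auxTau_pos hHopen hΔ n x) (auxRad_pos (hHopen _) (hΔ _) x)

lemma auxTau_le_one (H : ℕ → Set (X × X)) : ∀ n x, auxTau H n x ≤ 1
  | 0, x => auxRad_le_one _ x
  | n + 1, x => le_trans (min_le_left _ _) (auxTau_le_one H n x)

lemma auxTau_le_rad (H : ℕ → Set (X × X)) : ∀ n x, auxTau H n x ≤ auxRad (H n) x
  | 0, x => le_refl _
  | n + 1, x => min_le_right _ _

lemma auxTau_succ_le (H : ℕ → Set (X × X)) (n : ℕ) (x : X) :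
    auxTau H (n + 1) x ≤ auxTau H n x := min_le_left _ _

noncomputable def auxG (H : ℕ → Set (X × X)) (n : ℕ) (x : X) : ℝ :=
  (16 : ℝ)⁻¹ ^ n / 8 * auxTau H n x

lemma aux_coef_pos (n : ℕ) : 0 < (16 : ℝ)⁻¹ ^ n / 8 := by positivity

lemma aux_coef_le (n : ℕ) : (16 : ℝ)⁻¹ ^ n / 8 ≤ 1 / 8 := by
  have : (16 : ℝ)⁻¹ ^ n ≤ 1 := pow_le_one₀ (by norm_num) (by norm_num)
  linarith

lemma auxG_pos {H : ℕ → Set (X × X)} (hHopen : ∀ n, IsOpen (H n))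
    (hΔ : ∀ n, ∀ x : X, (x, x) ∈ H n) (n : ℕ) (x : X) : 0 < auxG H n x :=
  mul_pos (aux_coef_pos n) (auxTau_pos hHopen hΔ n x)

lemma auxG_le_rad {H : ℕ → Set (X × X)} (hHopen : ∀ n, IsOpen (H n))
    (hΔ : ∀ n, ∀ x : X, (x, x) ∈ H n) (n : ℕ) (x : X) : auxG H n x ≤ auxRad (H n) x := by
  have h1 := auxTau_le_rad H n x
  have h2 := auxTau_pos hHopen hΔ n x
  have h3 := aux_coef_le n
  have h4 := aux_coef_pos n
  have h5 : auxG H n x ≤ (1/8) * auxTau H n x :=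
    mul_le_mul_of_nonneg_right h3 (le_of_lt h2)
  have h6 : auxTau H n x ≤ auxRad (H n) x := h1
  nlinarith

lemma auxG_dist (H : ℕ → Set (X × X)) (n : ℕ) (x y : X) :
    |auxG H n x - auxG H n y| ≤ dist x y / 8 := by
  have h1 : dist (auxTau H n x) (auxTau H n y) ≤ 1 * dist x y :=
    (auxTau_lip H n).dist_le_mul x y
  rw [Real.dist_eq, one_mul] at h1
  have h2 : auxG H n x - auxG H n y
      = (16 : ℝ)⁻¹ ^ n / 8 * (auxTau H n x - auxTau H n y) := by
    unfold auxG; ring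
  rw [h2, abs_mul, abs_of_pos (aux_coef_pos n)]
  have h3 := aux_coef_le n
  have h4 := aux_coef_pos n
  nlinarith [abs_nonneg (auxTau H n x - auxTau H n y)]

lemma auxG_succ_le {H : ℕ → Set (X × X)} (hHopen : ∀ n, IsOpen (H n))
    (hΔ : ∀ n, ∀ x : X, (x, x) ∈ H n) (n : ℕ) (x : X) :
    auxG H (n + 1) x ≤ auxG H n x / 16 := by
  unfold auxG
  have h1 := auxTau_succ_le H n x
  have h2 := auxTau_pos hHopen hΔ (n + 1) x
  have h4 := aux_coef_pos n
  rw [pow_succ]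
  nlinarith

lemma auxG_cont (H : ℕ → Set (X × X)) (n : ℕ) : Continuous (auxG H n) :=
  continuous_const.mul (auxTau_lip H n).continuous

noncomputable def clamp01 (s : ℝ) : ℝ := min 1 (max 0 s)

lemma clamp01_mem (s : ℝ) : clamp01 s ∈ Icc (0 : ℝ) 1 :=
  ⟨le_min zero_le_one (le_max_left 0 s), min_le_left _ _⟩

lemma clamp01_of_nonpos {s : ℝ} (h : s ≤ 0) : clamp01 s = 0 := by
  unfold clamp01
  rw [max_eq_left h, min_eq_right zero_le_one]

lemma clamp01_of_one_le {s : ℝ} (h : 1 ≤ s) : clamp01 s = 1 := by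
  unfold clamp01
  rw [max_eq_right (le_trans zero_le_one h), min_eq_left h]

lemma clamp01_le {s : ℝ} (h : 0 ≤ s) : clamp01 s ≤ s :=
  le_trans (min_le_right _ _) (by rw [max_eq_right h])

lemma clamp01_abs_le (s t : ℝ) : |clamp01 s - clamp01 t| ≤ |s - t| := by
  unfold clamp01
  calc |min 1 (max 0 s) - min 1 (max 0 t)| ≤ max |(1:ℝ) - 1| |max 0 s - max 0 t| :=
        abs_min_sub_min_le_max 1 (max 0 s) 1 (max 0 t)
    _ ≤ |max 0 s - max 0 t| := by simp
    _ = |max s 0 - max t 0| := by rw [max_comm 0 s, max_comm 0 t]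
    _ ≤ |s - t| := abs_max_sub_max_le_abs s t 0

end Aux

section Phi
variable {X : Type*} [MetricSpace X]

noncomputable def auxPhi (H : ℕ → Set (X × X)) (n : ℕ) (p : X × X) : ℝ :=
  clamp01 (2 * (auxG H n p.1 - dist p.1 p.2) / auxG H n p.2)

lemma auxPhi_zero {H : ℕ → Set (X × X)} (hHopen : ∀ n, IsOpen (H n))
    (hΔ : ∀ n, ∀ x : X, (x, x) ∈ H n) {n : ℕ} {x y : X}
    (h : auxG H n x ≤ dist x y) : auxPhi H n (x, y) = 0 := by
  have hDy := auxG_pos hHopen hΔ n y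
  apply clamp01_of_nonpos
  apply div_nonpos_of_nonpos_of_nonneg _ hDy.le
  nlinarith

lemma auxPhi_one {H : ℕ → Set (X × X)} (hHopen : ∀ n, IsOpen (H n))
    (hΔ : ∀ n, ∀ x : X, (x, x) ∈ H n) {n : ℕ} {x y : X}
    (h : dist x y ≤ auxG H n x / 8) : auxPhi H n (x, y) = 1 := by
  have hDy := auxG_pos hHopen hΔ n y
  have hDx := auxG_pos hHopen hΔ n x
  have hd := auxG_dist H n x y
  rw [abs_le] at hd
  have hd0 : (0:ℝ) ≤ dist x y := dist_nonneg
  apply clamp01_of_one_le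
  rw [le_div_iff₀ hDy]
  nlinarith

lemma auxPhi_lip_left {H : ℕ → Set (X × X)} (hHopen : ∀ n, IsOpen (H n))
    (hΔ : ∀ n, ∀ x : X, (x, x) ∈ H n) (n : ℕ) (y : X) :
    ∃ K : ℝ≥0, LipschitzWith K fun x => auxPhi H n (x, y) := by
  have hD := auxG_pos hHopen hΔ n y
  refine ⟨Real.toNNReal (3 / auxG H n y), LipschitzWith.of_dist_le_mul fun x x' => ?_⟩
  rw [Real.dist_eq, Real.coe_toNNReal _ (by positivity)]
  have hnum : |2 * (auxG H n x - dist x y) - 2 * (auxG H n x' - dist x' y)|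
      ≤ 3 * dist x x' := by
    have h1 := auxG_dist H n x x'
    have h2 : |dist x' y - dist x y| ≤ dist x' x := abs_dist_sub_le x' x y
    rw [dist_comm x' x] at h2
    calc |2 * (auxG H n x - dist x y) - 2 * (auxG H n x' - dist x' y)|
        = |2 * (auxG H n x - auxG H n x') + 2 * (dist x' y - dist x y)| := by ring_nf
      _ ≤ |2 * (auxG H n x - auxG H n x')| + |2 * (dist x' y - dist x y)| := abs_add_le _ _
      _ = 2 * |auxG H n x - auxG H n x'| + 2 * |dist x' y - dist x y| := by
          rw [abs_mul, abs_mul]; norm_num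
      _ ≤ 3 * dist x x' := by
          have h3 : (0:ℝ) ≤ dist x x' := dist_nonneg
          linarith
  calc |auxPhi H n (x, y) - auxPhi H n (x', y)|
      ≤ |2 * (auxG H n x - dist x y) / auxG H n y
          - 2 * (auxG H n x' - dist x' y) / auxG H n y| := clamp01_abs_le _ _
    _ = |2 * (auxG H n x - dist x y) - 2 * (auxG H n x' - dist x' y)| / auxG H n y := by
        rw [div_sub_div_same, abs_div, abs_of_pos hD]
    _ ≤ 3 * dist x x' / auxG H n y := by gcongr
    _ = 3 / auxG H n y * dist x x' := by ring

set_option maxHeartbeats 1600000 in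
lemma auxPhi_lip_right {H : ℕ → Set (X × X)} (hHopen : ∀ n, IsOpen (H n))
    (hΔ : ∀ n, ∀ x : X, (x, x) ∈ H n) (n : ℕ) (x : X) :
    ∃ K : ℝ≥0, LipschitzWith K fun y => auxPhi H n (x, y) := by
  have hc : 0 < auxG H n x := auxG_pos hHopen hΔ n x
  refine ⟨Real.toNNReal (3 / auxG H n x), LipschitzWith.of_dist_le_mul fun y y' => ?_⟩
  rw [Real.dist_eq, Real.coe_toNNReal _ (by positivity)]
  show |clamp01 (2 * (auxG H n x - dist x y) / auxG H n y)
      - clamp01 (2 * (auxG H n x - dist x y') / auxG H n y')| ≤ 3 / auxG H n x * dist y y'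
  set c := auxG H n x with hcdef
  set t := dist y y' with htdef
  have ht : 0 ≤ t := dist_nonneg
  set A := 2 * (c - dist x y) with hAdef
  set B := 2 * (c - dist x y') with hBdef
  set Da := auxG H n y with hDadef
  set Db := auxG H n y' with hDbdef
  have hDa : 0 < Da := auxG_pos hHopen hΔ n y
  have hDb : 0 < Db := auxG_pos hHopen hΔ n y'
  have hAB : |A - B| ≤ 2 * t := by
    have h2 : |dist x y' - dist x y| ≤ dist y' y := by
      rw [dist_comm x y', dist_comm x y]; exact abs_dist_sub_le y' y x
    rw [dist_comm y' y] at h2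
    have e : A - B = 2 * (dist x y' - dist x y) := by rw [hAdef, hBdef]; ring
    rw [e, abs_mul]
    norm_num
    nlinarith
  have hABl := abs_le.1 hAB
  have hDab : |Da - Db| ≤ t / 8 := auxG_dist H n y y'
  have hDabl := abs_le.1 hDab
  have hAle : A ≤ 2 * c := by
    have : (0:ℝ) ≤ dist x y := dist_nonneg
    rw [hAdef]; nlinarith
  have hBle : B ≤ 2 * c := by
    have : (0:ℝ) ≤ dist x y' := dist_nonneg
    rw [hBdef]; nlinarith
  have hlowa : 0 < A → 7 * c / 8 ≤ Da := by
    intro hA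
    have hd : dist x y < c := by rw [hAdef] at hA; nlinarith
    have h8 := abs_le.1 (auxG_dist H n x y)
    nlinarith [h8.2]
  have hlowb : 0 < B → 7 * c / 8 ≤ Db := by
    intro hB
    have hd : dist x y' < c := by rw [hBdef] at hB; nlinarith
    have h8 := abs_le.1 (auxG_dist H n x y')
    nlinarith [h8.2]
  have hgoal_nonneg : (0:ℝ) ≤ 3 / c * t := by positivity
  rcases le_or_gt A 0 with hA | hA <;> rcases le_or_gt B 0 with hB | hB
  · rw [clamp01_of_nonpos (div_nonpos_of_nonpos_of_nonneg hA hDa.le),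
      clamp01_of_nonpos (div_nonpos_of_nonpos_of_nonneg hB hDb.le)]
    simpa using hgoal_nonneg
  · -- A ≤ 0 < B
    rw [clamp01_of_nonpos (div_nonpos_of_nonpos_of_nonneg hA hDa.le), zero_sub, abs_neg,
      abs_of_nonneg (clamp01_mem _).1]
    have h1 : clamp01 (B / Db) ≤ B / Db :=
      clamp01_le (div_nonneg hB.le hDb.le)
    have h2 : B ≤ 2 * t := by nlinarith
    have h3 : B / Db ≤ 3 / c * t := by
      rw [div_le_iff₀ hDb, div_mul_eq_mul_div, div_mul_eq_mul_div, le_div_iff₀ hc]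
      nlinarith [hlowb hB, mul_nonneg ht hc.le]
    linarith
  · -- B ≤ 0 < A
    rw [clamp01_of_nonpos (div_nonpos_of_nonpos_of_nonneg hB hDb.le), sub_zero,
      abs_of_nonneg (clamp01_mem _).1]
    have h1 : clamp01 (A / Da) ≤ A / Da :=
      clamp01_le (div_nonneg hA.le hDa.le)
    have h2 : A ≤ 2 * t := by nlinarith
    have h3 : A / Da ≤ 3 / c * t := by
      rw [div_le_iff₀ hDa, div_mul_eq_mul_div, div_mul_eq_mul_div, le_div_iff₀ hc]
      nlinarith [hlowa hA, mul_nonneg ht hc.le]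
    linarith
  · -- both positive
    have hla := hlowa hA
    have hlb := hlowb hB
    have step1 : |clamp01 (A / Da) - clamp01 (B / Db)| ≤ |A / Da - B / Db| :=
      clamp01_abs_le _ _
    have hnum : |A * Db - Da * B| ≤ 2 * t * Db + c * t / 4 := by
      have e : A * Db - Da * B = (A - B) * Db + B * (Db - Da) := by ring
      rw [e]
      calc |(A - B) * Db + B * (Db - Da)| ≤ |(A - B) * Db| + |B * (Db - Da)| := abs_add_le _ _
        _ = |A - B| * Db + B * |Db - Da| := by
            rw [abs_mul, abs_mul, abs_of_pos hDb, abs_of_pos hB]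
        _ ≤ 2 * t * Db + (2 * c) * (t / 8) := by
            rw [abs_sub_comm Db Da]
            gcongr
        _ = 2 * t * Db + c * t / 4 := by ring
    have step2 : |A / Da - B / Db| ≤ 3 / c * t := by
      rw [div_sub_div A B (ne_of_gt hDa) (ne_of_gt hDb), abs_div,
        abs_of_pos (mul_pos hDa hDb), div_le_iff₀ (mul_pos hDa hDb),
        div_mul_eq_mul_div, div_mul_eq_mul_div, le_div_iff₀ hc]
      have key : (2 * t * Db + c * t / 4) * c ≤ 3 * t * (Da * Db) := by
        nlinarith [mul_nonneg ht hc.le, mul_nonneg ht hDb.le,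
          mul_le_mul_of_nonneg_right hla (mul_nonneg ht hDb.le),
          mul_le_mul_of_nonneg_left hlb (mul_nonneg ht hc.le)]
      nlinarith [abs_nonneg (A * Db - Da * B), hnum, key, hc]
    linarith

end Phi


/-- Lemma 4.7: for a metric space `X` and a sequence of open sets `H n ⊆ X²` containing
the diagonal, there exist open sets `G n`, closed sets `F n`, separately Lipschitz
functions `φ n : X² → [0,1]` and positive functions `δ n : X → (0, +∞)` satisfying
conditions (1)–(3). -/
theorem stmt_8 {X : Type*} [MetricSpace X]
    (H : ℕ → Set (X × X)) (hHopen : ∀ n, IsOpen (H n))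
    (hΔ : ∀ n, ∀ x : X, (x, x) ∈ H n) :
    ∃ (G F : ℕ → Set (X × X)) (φ : ℕ → X × X → ℝ) (δ : ℕ → X → ℝ),
      (∀ n, IsOpen (G n)) ∧ (∀ n, IsClosed (F n)) ∧
      (∀ n p, φ n p ∈ Icc (0 : ℝ) 1) ∧
      (∀ n y, ∃ K : ℝ≥0, LipschitzWith K fun x => φ n (x, y)) ∧
      (∀ n x, ∃ K : ℝ≥0, LipschitzWith K fun y => φ n (x, y)) ∧
      (∀ n x, 0 < δ n x) ∧
      -- condition (1)
      (∀ n, (∀ x : X, (x, x) ∈ G (n + 1)) ∧ G (n + 1) ⊆ F n ∧ F n ⊆ G n ∧ G n ⊆ H n) ∧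
      -- condition (2)
      (∀ n, (G n)ᶜ ⊆ {p | φ n p = 0} ∧ F n ⊆ {p | φ n p = 1}) ∧
      -- condition (3)
      (∀ n (x u v : X), (x, u) ∈ G (n + 1) → (x, v) ∉ F n → δ n x ≤ dist u v) := by
  refine ⟨fun n => {p : X × X | dist p.1 p.2 < auxG H n p.1},
    fun n => {p : X × X | dist p.1 p.2 ≤ auxG H n p.1 / 8},
    fun n p => auxPhi H n p,
    fun n x => auxG H n x / 8 - auxG H (n + 1) x,
    ?_, ?_, ?_, ?_, ?_, ?_, ?_, ?_, ?_⟩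
  · intro n
    exact isOpen_lt (continuous_fst.dist continuous_snd)
      ((auxG_cont H n).comp continuous_fst)
  · intro n
    exact isClosed_le (continuous_fst.dist continuous_snd)
      (((auxG_cont H n).comp continuous_fst).div_const 8)
  · intro n p
    exact clamp01_mem _
  · intro n y
    exact auxPhi_lip_left hHopen hΔ n y
  · intro n x
    exact auxPhi_lip_right hHopen hΔ n x
  · intro n x
    have h1 := auxG_succ_le hHopen hΔ n x
    have h2 := auxG_pos hHopen hΔ n x
    nlinarith
  · intro n
    refine ⟨?_, ?_, ?_, ?_⟩
    · intro x
      simp only [mem_setOf_eq, dist_self]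
      exact auxG_pos hHopen hΔ (n + 1) x
    · intro p hp
      simp only [mem_setOf_eq] at hp ⊢
      have h1 := auxG_succ_le hHopen hΔ n p.1
      have h2 := auxG_pos hHopen hΔ n p.1
      nlinarith
    · intro p hp
      simp only [mem_setOf_eq] at hp ⊢
      have h2 := auxG_pos hHopen hΔ n p.1
      nlinarith
    · intro p hp
      simp only [mem_setOf_eq] at hp
      have h1 : dist p.1 p.2 < auxRad (H n) p.1 :=
        lt_of_lt_of_le hp (auxG_le_rad hHopen hΔ n p.1)
      have := auxRad_spec h1
      simpa using this
  · intro n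
    constructor
    · intro p hp
      simp only [mem_compl_iff, mem_setOf_eq, not_lt] at hp
      show auxPhi H n p = 0
      have := auxPhi_zero hHopen hΔ (n := n) (x := p.1) (y := p.2) hp
      simpa using this
    · intro p hp
      simp only [mem_setOf_eq] at hp
      show auxPhi H n p = 1
      have := auxPhi_one hHopen hΔ (n := n) (x := p.1) (y := p.2) hp
      simpa using this
  · intro n x u v hu hv
    simp only [mem_setOf_eq] at hu hv
    push_neg at hv
    have h1 := auxG_succ_le hHopen hΔ n x
    have h2 : dist x v ≤ dist x u + dist u v := dist_triangle x u v
    linarith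
end
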